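/- arXiv:1005.4167 — 14 statements merged into one kernel-verified Lean document; each statement's English description precedes it below -/
import Mathlib

section
/- If M is a right R-module such that the direct sum M ⊕ M is a C3 module, then M is a C2 module. -/
/-- A module `M` is a C2 module if every submodule isomorphic to a direct summand of `M`
is itself a direct summand of `M`. -/
def IsC2Module (R : Type*) [Semiring R] (M : Type*) [AddCommGroup M] [Module R M] : Prop :=
  ∀ N K : Submodule R M, (∃ K', IsCompl K K') → Nonempty (N ≃ₗ[R] K) → ∃ N', IsCompl N N'

/-- A module `M` is a C3 module if whenever `N` and `K` are direct summands of `M` with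
`N ∩ K = 0`, then `N + K` is a direct summand of `M`. -/
def IsC3Module (R : Type*) [Semiring R] (M : Type*) [AddCommGroup M] [Module R M] : Prop :=
  ∀ N K : Submodule R M, (∃ N', IsCompl N N') → (∃ K', IsCompl K K') → N ⊓ K = ⊥ →
    ∃ L, IsCompl (N ⊔ K) L

/-- If `M ⊕ M` is a C3 module, then `M` is a C2 module (for right `R`-modules). -/
theorem c3_of_double_implies_c2 (R : Type*) [Ring R] (M : Type*) [AddCommGroup M]
    [Module Rᵐᵒᵖ M] (h : IsC3Module Rᵐᵒᵖ (M × M)) : IsC2Module Rᵐᵒᵖ M := by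
  rintro N K ⟨K', hK'⟩ ⟨f⟩
  -- the graph of f as a submodule of M × M
  set φ : N →ₗ[Rᵐᵒᵖ] M × M :=
    LinearMap.prod N.subtype (K.subtype ∘ₗ f.toLinearMap) with hφ
  set B : Submodule Rᵐᵒᵖ (M × M) := LinearMap.range φ with hBdef
  have hB : IsCompl B ((⊤ : Submodule Rᵐᵒᵖ M).prod K') := by
    constructor
    · rw [disjoint_iff, eq_bot_iff]
      rintro ⟨x, y⟩ ⟨⟨n, hn⟩, hx2⟩
      have h1 : (n : M) = x := congrArg Prod.fst hn
      have h2 : (f n : M) = y := congrArg Prod.snd hn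
      have hyK : y ∈ K := h2 ▸ (f n).2
      have hyK' : y ∈ K' := hx2.2
      have hy0 : y = 0 := by
        have := hK'.disjoint.le_bot ⟨hyK, hyK'⟩
        simpa using this
      have hfn : (f n : M) = 0 := by rw [h2, hy0]
      have : f n = 0 := Subtype.ext hfn
      have hn0 : n = 0 := by
        have := f.injective (by simpa using this)
        simpa using this
      have hx0 : x = 0 := by rw [← h1, hn0]; simp
      simp [hx0, hy0, Submodule.mem_bot, Prod.ext_iff]
    · rw [codisjoint_iff, eq_top_iff]
      rintro ⟨a, b⟩ -
      have hb : b ∈ K ⊔ K' := by rw [hK'.sup_eq_top]; trivial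
      obtain ⟨k, hk, k', hk', hkk'⟩ := Submodule.mem_sup.mp hb
      set n : N := f.symm ⟨k, hk⟩ with hn
      refine Submodule.mem_sup.mpr ⟨((n : M), k), ⟨n, ?_⟩, (a - n, k'), ⟨trivial, hk'⟩, ?_⟩
      · show ((n : M), (f n : M)) = ((n : M), k)
        rw [hn, f.apply_symm_apply]
      · refine Prod.ext ?_ ?_
        · show (n : M) + (a - n) = a
          abel
        · exact hkk'
  have hA : IsCompl ((⊥ : Submodule Rᵐᵒᵖ M).prod (⊤ : Submodule Rᵐᵒᵖ M)) ((⊤ : Submodule Rᵐᵒᵖ M).prod (⊥ : Submodule Rᵐᵒᵖ M)) := by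
    constructor
    · rw [disjoint_iff, eq_bot_iff]
      rintro ⟨x, y⟩ ⟨⟨hx, -⟩, ⟨-, hy⟩⟩
      simp only [Submodule.mem_bot] at hx hy ⊢
      exact Prod.ext hx hy
    · rw [codisjoint_iff, eq_top_iff]
      rintro ⟨a, b⟩ -
      exact Submodule.mem_sup.mpr ⟨(0, b), ⟨by simp, trivial⟩, (a, 0), ⟨trivial, by simp⟩, by simp⟩
  have hdisj : B ⊓ (⊥ : Submodule Rᵐᵒᵖ M).prod (⊤ : Submodule Rᵐᵒᵖ M) = ⊥ := by
    rw [eq_bot_iff]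
    rintro ⟨x, y⟩ ⟨⟨n, hn⟩, hx2⟩
    have h1 : (n : M) = x := congrArg Prod.fst hn
    have h2 : (f n : M) = y := congrArg Prod.snd hn
    have hx0 : x = 0 := by
      have := hx2.1; simpa using this
    have hn0 : n = 0 := Subtype.ext (h1.trans hx0)
    have hy0 : y = 0 := by rw [← h2, hn0]; simp
    simp [hx0, hy0, Prod.ext_iff]
  obtain ⟨L, hL⟩ := h B ((⊥ : Submodule Rᵐᵒᵖ M).prod (⊤ : Submodule Rᵐᵒᵖ M)) ⟨_, hB⟩ ⟨_, hA⟩ hdisj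
  have hsup : B ⊔ (⊥ : Submodule Rᵐᵒᵖ M).prod (⊤ : Submodule Rᵐᵒᵖ M) = N.prod ⊤ := by
    apply le_antisymm
    · apply sup_le
      · rintro ⟨x, y⟩ ⟨n, hn⟩
        have h1 : (n : M) = x := congrArg Prod.fst hn
        exact ⟨h1 ▸ n.2, trivial⟩
      · rintro ⟨x, y⟩ ⟨hx, -⟩
        have hx0 : x = 0 := by simpa using hx
        exact ⟨hx0 ▸ N.zero_mem, trivial⟩
    · rintro ⟨x, y⟩ ⟨hx, -⟩
      refine Submodule.mem_sup.mpr ⟨(x, (f ⟨x, hx⟩ : M)), ⟨⟨x, hx⟩, rfl⟩,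
        (0, y - f ⟨x, hx⟩), ⟨by simp, trivial⟩, ?_⟩
      simp [Prod.ext_iff]
  rw [hsup] at hL
  refine ⟨L.map (LinearMap.fst Rᵐᵒᵖ M M), ?_, ?_⟩
  · rw [disjoint_iff, eq_bot_iff]
    rintro x ⟨hxN, ⟨a, b⟩, habL, hab⟩
    have hmem : ((a, b) : M × M) ∈ N.prod (⊤ : Submodule Rᵐᵒᵖ M) := by
      refine ⟨?_, trivial⟩
      have hax : a = x := by simpa using hab
      exact hax ▸ hxN
    have : ((a, b) : M × M) = 0 := hL.disjoint.le_bot ⟨hmem, habL⟩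
    have ha0 : a = 0 := congrArg Prod.fst this
    simp [← hab, ha0]
  · rw [codisjoint_iff, eq_top_iff]
    intro m _
    have : ((m, 0) : M × M) ∈ N.prod (⊤ : Submodule Rᵐᵒᵖ M) ⊔ L := by
      rw [hL.sup_eq_top]; trivial
    obtain ⟨p, hp, l, hl, hpl⟩ := Submodule.mem_sup.mp this
    refine Submodule.mem_sup.mpr ⟨p.1, hp.1, l.1, ⟨l, hl, rfl⟩, ?_⟩
    exact congrArg Prod.fst hpl
end

section
/- Any direct summand of a C3 module is a C3 module. -/
/-- Any direct summand of a C3 module is a C3 module. -/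
theorem c3_of_direct_summand (R : Type*) [Ring R] (M : Type*) [AddCommGroup M]
    [Module Rᵐᵒᵖ M] (h : IsC3Module Rᵐᵒᵖ M) (N N' : Submodule Rᵐᵒᵖ M) (hN : IsCompl N N') :
    IsC3Module Rᵐᵒᵖ N := by
  rintro A B ⟨A', hA⟩ ⟨B', hB⟩ hAB
  set f := N.subtype with hfdef
  have hf : Function.Injective f := N.injective_subtype
  have hle : ∀ T : Submodule Rᵐᵒᵖ N, T.map f ≤ N := by
    rintro T x ⟨y, -, rfl⟩
    exact y.2
  -- a summand of N maps to a summand of M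
  have key : ∀ (S S' : Submodule Rᵐᵒᵖ N), IsCompl S S' →
      IsCompl (S.map f) (S'.map f ⊔ N') := by
    intro S S' hS
    constructor
    · rw [disjoint_iff, eq_bot_iff]
      rintro x ⟨hx1, hx2⟩
      obtain ⟨y, hy, z, hz, hyz⟩ := Submodule.mem_sup.mp hx2
      have hzN : z ∈ N := by
        have hxN : x ∈ N := hle S hx1
        have hyN : y ∈ N := hle S' hy
        have : z = x - y := by rw [← hyz]; abel
        rw [this]; exact N.sub_mem hxN hyN
      have hz0 : z = 0 := by
        have := hN.disjoint.le_bot ⟨hzN, hz⟩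
        simpa using this
      subst hz0
      rw [add_zero] at hyz
      subst hyz
      obtain ⟨a, ha, hax⟩ := hx1
      obtain ⟨b, hb, hbx⟩ := hy
      have hab : a = b := hf (by rw [hax, hbx])
      have : a ∈ S ⊓ S' := ⟨ha, hab ▸ hb⟩
      have ha0 : a = 0 := by
        have := hS.disjoint.le_bot this
        simpa using this
      simp [← hax, ha0]
    · rw [codisjoint_iff, ← sup_assoc, ← Submodule.map_sup, hS.sup_eq_top,
        Submodule.map_top, Submodule.range_subtype, hN.sup_eq_top]
  have hABM : (A.map f) ⊓ (B.map f) = ⊥ := by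
    rw [eq_bot_iff]
    rintro x ⟨hx1, hx2⟩
    obtain ⟨a, ha, hax⟩ := hx1
    obtain ⟨b, hb, hbx⟩ := hx2
    have hab : a = b := hf (by rw [hax, hbx])
    have : a ∈ A ⊓ B := ⟨ha, hab ▸ hb⟩
    rw [hAB] at this
    simp only [Submodule.mem_bot] at this
    simp [← hax, this]
  obtain ⟨L, hL⟩ := h (A.map f) (B.map f) ⟨A'.map f ⊔ N', key A A' hA⟩
    ⟨B'.map f ⊔ N', key B B' hB⟩ hABM
  refine ⟨L.comap f, ?_, ?_⟩
  · rw [disjoint_iff, eq_bot_iff]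
    rintro x ⟨hx1, hx2⟩
    have h1 : f x ∈ A.map f ⊔ B.map f := by
      rw [← Submodule.map_sup]
      exact Submodule.mem_map_of_mem hx1
    have h2 : f x ∈ L := hx2
    have : f x = 0 := by
      have := hL.disjoint.le_bot ⟨h1, h2⟩
      simpa using this
    simpa using hf (by simpa using this : f x = f 0)
  · rw [codisjoint_iff, eq_top_iff]
    intro n _
    have : (n : M) ∈ (A.map f ⊔ B.map f) ⊔ L := by
      rw [hL.sup_eq_top]; trivial
    obtain ⟨s, hs, l, hl, hsl⟩ := Submodule.mem_sup.mp this
    have hsN : s ∈ N := by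
      rcases Submodule.mem_sup.mp hs with ⟨u, hu, v, hv, huv⟩
      rw [← huv]; exact N.add_mem (hle A hu) (hle B hv)
    have hlN : l ∈ N := by
      have : l = (n : M) - s := by rw [← hsl]; abel
      rw [this]; exact N.sub_mem n.2 hsN
    have hn : n = (⟨s, hsN⟩ : N) + ⟨l, hlN⟩ := by
      apply hf
      simpa [hfdef] using hsl.symm
    rw [hn]
    apply Submodule.add_mem
    · apply Submodule.mem_sup_left
      have : (⟨s, hsN⟩ : N) ∈ Submodule.comap f (A.map f ⊔ B.map f) := hs
      rwa [← Submodule.map_sup, Submodule.comap_map_eq_of_injective hf] at this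
    · exact Submodule.mem_sup_right hl
end

section
/- A ring R is right finitely Σ-C2 if and only if the right annihilator r(I) is nonzero for every finitely generated proper left ideal I of R. -/
section Aux

open Matrix MulOpposite

variable {R : Type*} [Ring R]


open Matrix MulOpposite

variable {R : Type*} [Ring R]

private lemma oneSplit (H : ∀ I : Submodule R R, I.FG → I ≠ ⊤ → ∃ r : R, r ≠ 0 ∧ ∀ x ∈ I, x * r = 0)
    {m : ℕ} (v : Fin m → R) (hv : ∀ r : R, (∀ i, v i * r = 0) → r = 0) :
    ∃ e : Fin m → R, e ⬝ᵥ v = 1 := by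
  by_cases htop : Submodule.span R (Set.range v) = ⊤
  · have h1 : (1 : R) ∈ Submodule.span R (Set.range v) := htop ▸ Submodule.mem_top
    obtain ⟨c, hc⟩ := (Submodule.mem_span_range_iff_exists_fun R).mp h1
    exact ⟨c, by simpa [dotProduct, smul_eq_mul] using hc⟩
  · obtain ⟨r, hr0, hr⟩ := H _ (Submodule.fg_span (Set.finite_range v)) htop
    exact absurd (hv r fun i => hr _ (Submodule.subset_span (Set.mem_range_self i))) hr0

private lemma matSplit (H : ∀ I : Submodule R R, I.FG → I ≠ ⊤ → ∃ r : R, r ≠ 0 ∧ ∀ x ∈ I, x * r = 0) :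
    ∀ (n : ℕ) {m : ℕ} (a : Matrix (Fin m) (Fin n) R),
      (∀ x : Fin n → R, a.mulVec x = 0 → x = 0) →
      ∃ b : Matrix (Fin n) (Fin m) R, b * a = 1
  | 0, m, a, _ => ⟨0, Subsingleton.elim _ _⟩
  | (n+1), m, a, ha => by
    set a₀ : Matrix (Fin m) (Fin n) R := a.submatrix id Fin.castSucc with ha₀def
    set v : Fin m → R := fun i => a i (Fin.last n) with hvdef
    have hsnoc : ∀ (x : Fin n → R) (r : R) (i : Fin m),
        a.mulVec (Fin.snoc x r) i = a₀.mulVec x i + v i * r := by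
      intro x r i
      simp only [Matrix.mulVec, dotProduct]
      rw [Fin.sum_univ_castSucc]
      simp [a₀, v]
    have key : ∀ (x : Fin n → R) (r : R), (∀ i, a₀.mulVec x i + v i * r = 0) → x = 0 ∧ r = 0 := by
      intro x r h
      have h0 : Fin.snoc x r = (0 : Fin (n+1) → R) := by
        apply ha
        funext i
        rw [hsnoc]
        exact h i
      constructor
      · funext j
        have := congrFun h0 j.castSucc
        simpa using this
      · have := congrFun h0 (Fin.last n)
        simpa using this
    have ha₀inj : ∀ x : Fin n → R, a₀.mulVec x = 0 → x = 0 := by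
      intro x hx
      exact (key x 0 (fun i => by rw [congrFun hx i]; simp)).1
    obtain ⟨b₀, hb₀⟩ := matSplit H n a₀ ha₀inj
    set c : Fin n → R := b₀.mulVec v with hcdef
    set w : Fin m → R := v - a₀.mulVec c with hwdef
    have hwinj : ∀ r : R, (∀ i, w i * r = 0) → r = 0 := by
      intro r h
      refine (key (fun k => -(c k * r)) r ?_).2
      intro i
      have hvi : v i * r = a₀.mulVec c i * r := by
        have := h i
        rw [hwdef] at this
        have : (v i - a₀.mulVec c i) * r = 0 := this
        rwa [sub_mul, sub_eq_zero] at this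
      have hmv : a₀.mulVec (fun k => -(c k * r)) i = -(a₀.mulVec c i * r) := by
        simp only [Matrix.mulVec, dotProduct, mul_neg, Finset.sum_neg_distrib,
          Finset.sum_mul, mul_assoc]
      rw [hmv, hvi]
      exact neg_add_cancel _
    obtain ⟨e, he⟩ := oneSplit H w hwinj
    set p : Fin m → R := e ᵥ* (1 - a₀ * b₀) with hpdef
    have hpa : p ᵥ* a₀ = 0 := by
      rw [hpdef, Matrix.vecMul_vecMul, Matrix.sub_mul, Matrix.one_mul, Matrix.mul_assoc,
        hb₀, Matrix.mul_one, sub_self, Matrix.vecMul_zero]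
    have hpv : p ⬝ᵥ v = 1 := by
      rw [hpdef, ← dotProduct_mulVec, Matrix.sub_mulVec, Matrix.one_mulVec,
        ← Matrix.mulVec_mulVec, ← hcdef, ← hwdef]
      exact he
    refine ⟨Matrix.of (Fin.snoc (fun k i => b₀ k i - c k * p i) p), ?_⟩
    ext j j'
    rw [Matrix.mul_apply, Matrix.one_apply]
    induction j using Fin.lastCases with
    | last =>
      induction j' using Fin.lastCases with
      | last =>
        simp only [Matrix.of_apply, Fin.snoc_last, if_pos rfl]
        exact hpv
      | cast j' =>
        have : (Fin.last n = j'.castSucc) = False := by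
          simp [Fin.ext_iff, (Fin.castSucc_lt_last j').ne']
        simp only [Matrix.of_apply, Fin.snoc_last, this, if_false]
        exact congrFun hpa j'
    | cast j =>
      induction j' using Fin.lastCases with
      | last =>
        have : (j.castSucc = Fin.last n) = False := by
          simp [Fin.ext_iff, (Fin.castSucc_lt_last j).ne]
        simp only [Matrix.of_apply, Fin.snoc_castSucc, this, if_false]
        have : ∑ i, (b₀ j i - c j * p i) * v i = b₀.mulVec v j - c j * (p ⬝ᵥ v) := by
          simp only [sub_mul, Finset.sum_sub_distrib, Matrix.mulVec, dotProduct,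
            mul_assoc, Finset.mul_sum]
        rw [this, hpv, ← hcdef, mul_one, sub_self]
      | cast j' =>
        simp only [Matrix.of_apply, Fin.snoc_castSucc]
        simp only [Fin.castSucc_inj]
        have : ∑ i, (b₀ j i - c j * p i) * a i j'.castSucc
            = (b₀ * a₀) j j' - c j * (p ᵥ* a₀) j' := by
          simp only [sub_mul, Finset.sum_sub_distrib, Matrix.mul_apply, Matrix.vecMul,
            dotProduct, Matrix.submatrix_apply, id_eq, mul_assoc, Finset.mul_sum, a₀]
        rw [this, hpa, hb₀, Matrix.one_apply, Pi.zero_apply, mul_zero, sub_zero]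

private lemma splitLinear (H : ∀ I : Submodule R R, I.FG → I ≠ ⊤ → ∃ r : R, r ≠ 0 ∧ ∀ x ∈ I, x * r = 0)
    {n m : ℕ} (f : (Fin n → R) →ₗ[Rᵐᵒᵖ] (Fin m → R)) (hf : Function.Injective f) :
    ∃ g : (Fin m → R) →ₗ[Rᵐᵒᵖ] (Fin n → R), g.comp f = LinearMap.id := by
  set a : Matrix (Fin m) (Fin n) R := Matrix.of fun i j => f (Pi.single j 1) i with hadef
  have hfx : ∀ x, f x = a.mulVec x := by
    intro x
    have hx : x = ∑ j, (op (x j)) • (Pi.single j 1 : Fin n → R) := by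
      funext k
      rw [Finset.sum_apply]
      have : ∀ j : Fin n, ((op (x j)) • (Pi.single j 1 : Fin n → R)) k
          = (if k = j then 1 else 0) * x j := by
        intro j
        simp [MulOpposite.smul_eq_mul_unop, Pi.single_apply]
      simp only [this, ite_mul, one_mul, zero_mul]
      rw [Finset.sum_ite_eq]
      simp
    conv_lhs => rw [hx]
    rw [map_sum]
    funext i
    rw [Finset.sum_apply]
    simp only [Matrix.mulVec, dotProduct]
    congr 1
    funext j
    rw [_root_.map_smul]
    simp [MulOpposite.smul_eq_mul_unop, a]
  have hainj : ∀ x : Fin n → R, a.mulVec x = 0 → x = 0 := by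
    intro x hx
    apply hf
    rw [hfx, hx, map_zero]
  obtain ⟨b, hb⟩ := matSplit H n a hainj
  refine ⟨{ toFun := fun y => b.mulVec y,
            map_add' := fun y z => Matrix.mulVec_add b y z,
            map_smul' := fun c y => Matrix.mulVec_smul b c y }, ?_⟩
  apply LinearMap.ext
  intro x
  show b.mulVec (f x) = x
  rw [hfx, Matrix.mulVec_mulVec, hb, Matrix.one_mulVec]

private lemma splitProd (H : ∀ I : Submodule R R, I.FG → I ≠ ⊤ → ∃ r : R, r ≠ 0 ∧ ∀ x ∈ I, x * r = 0)
    {n : ℕ} (F : (Fin n → R) →ₗ[Rᵐᵒᵖ] (Fin n → R) × (Fin n → R)) (hF : Function.Injective F) :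
    ∃ T : ((Fin n → R) × (Fin n → R)) →ₗ[Rᵐᵒᵖ] (Fin n → R), T.comp F = LinearMap.id := by
  let E : ((Fin n → R) × (Fin n → R)) ≃ₗ[Rᵐᵒᵖ] (Fin (n + n) → R) :=
    (LinearEquiv.sumArrowLequivProdArrow (Fin n) (Fin n) Rᵐᵒᵖ R).symm.trans
      (LinearEquiv.funCongrLeft Rᵐᵒᵖ R finSumFinEquiv).symm
  obtain ⟨G, hG⟩ := splitLinear H (E.toLinearMap.comp F) (E.injective.comp hF)
  refine ⟨G.comp E.toLinearMap, ?_⟩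
  rw [LinearMap.comp_assoc]
  exact hG

private lemma fwdAux (hC2 : ∀ n : ℕ, ∀ N K : Submodule Rᵐᵒᵖ (Fin n → R), (∃ K', IsCompl K K') →
      Nonempty (N ≃ₗ[Rᵐᵒᵖ] K) → ∃ N', IsCompl N N')
    (I : Submodule R R) (hFG : I.FG) (hne : I ≠ ⊤) :
    ∃ r : R, r ≠ 0 ∧ ∀ x ∈ I, x * r = 0 := by
  by_contra hno
  push_neg at hno
  obtain ⟨n, s, hspan⟩ := Submodule.fg_iff_exists_fin_generating_family.mp hFG
  set a : Fin (n+1) → R := Fin.snoc s 0 with hadef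
  have haI : ∀ i, a i ∈ I := by
    intro i
    induction i using Fin.lastCases with
    | last => simp only [hadef, Fin.snoc_last]; exact I.zero_mem
    | cast j =>
      simp only [hadef, Fin.snoc_castSucc]
      exact hspan ▸ Submodule.subset_span ⟨j, rfl⟩
  have hann : ∀ r : R, (∀ i, a i * r = 0) → r = 0 := by
    intro r h
    by_contra hr0
    obtain ⟨x, hxI, hx⟩ := hno r hr0
    apply hx
    have hle : Submodule.span R (Set.range s) ≤
        LinearMap.ker (LinearMap.toSpanSingleton R R r) := by
      rw [Submodule.span_le]
      rintro _ ⟨j, rfl⟩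
      have := h j.castSucc
      simp only [hadef, Fin.snoc_castSucc] at this
      simpa [LinearMap.mem_ker, LinearMap.toSpanSingleton_apply, smul_eq_mul] using this
    have := hle (hspan ▸ hxI)
    simpa [LinearMap.mem_ker, LinearMap.toSpanSingleton_apply, smul_eq_mul] using this
  set ψ : R →ₗ[Rᵐᵒᵖ] (Fin (n+1) → R) :=
    { toFun := fun r => fun i => a i * r
      map_add' := fun r t => by funext i; simp [mul_add]
      map_smul' := fun c r => by
        funext i
        simp [MulOpposite.smul_eq_mul_unop, mul_assoc] } with hψdef
  have hψinj : Function.Injective ψ := by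
    intro r t h
    have h' : ∀ i, a i * (r - t) = 0 := by
      intro i
      have := congrFun h i
      simp only [hψdef, LinearMap.coe_mk, AddHom.coe_mk] at this
      rw [mul_sub, this, sub_self]
    have := hann _ h'
    exact sub_eq_zero.mp this
  set ι : R →ₗ[Rᵐᵒᵖ] (Fin (n+1) → R) :=
    LinearMap.single Rᵐᵒᵖ (fun _ : Fin (n+1) => R) 0 with hιdef
  have hιinj : Function.Injective ι := by
    intro r t h
    have := congrFun h 0
    simpa [hιdef] using this
  have hKc : IsCompl (LinearMap.range ι)
      (LinearMap.ker (LinearMap.proj (R := Rᵐᵒᵖ) (φ := fun _ : Fin (n+1) => R) 0)) := by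
    constructor
    · rw [Submodule.disjoint_def]
      rintro _ ⟨r, rfl⟩ hx
      rw [LinearMap.mem_ker] at hx
      have : r = 0 := by simpa [hιdef] using hx
      rw [this, map_zero]
    · rw [codisjoint_iff, eq_top_iff]
      rintro x -
      refine Submodule.mem_sup.mpr ⟨Pi.single 0 (x 0), ⟨x 0, by simp [hιdef]⟩,
        x - Pi.single 0 (x 0), ?_, by abel⟩
      simp [LinearMap.mem_ker]
  obtain ⟨N', hN'⟩ := hC2 (n+1) (LinearMap.range ψ) (LinearMap.range ι)
    ⟨_, hKc⟩ ⟨(LinearEquiv.ofInjective ψ hψinj).symm.trans (LinearEquiv.ofInjective ι hιinj)⟩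
  set Ψ : (Fin (n+1) → R) →ₗ[Rᵐᵒᵖ] R :=
    (LinearEquiv.ofInjective ψ hψinj).symm.toLinearMap.comp
      ((LinearMap.range ψ).projectionOnto N' hN') with hΨdef
  have hΨψ : ∀ r, Ψ (ψ r) = r := by
    intro r
    have h1 : ψ r = ↑((LinearEquiv.ofInjective ψ hψinj) r) :=
      (LinearEquiv.ofInjective_apply ψ r).symm
    rw [hΨdef]
    simp only [LinearMap.coe_comp, Function.comp_apply, LinearEquiv.coe_coe]
    rw [h1, Submodule.projectionOnto_apply_left, LinearEquiv.symm_apply_apply]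
  have hψ1 : ψ 1 = ∑ i, (op (a i)) • (Pi.single i 1 : Fin (n+1) → R) := by
    funext k
    rw [Finset.sum_apply]
    have hterm : ∀ i : Fin (n+1), ((op (a i)) • (Pi.single i 1 : Fin (n+1) → R)) k
        = (if k = i then 1 else 0) * a i := by
      intro i
      simp [MulOpposite.smul_eq_mul_unop, Pi.single_apply]
    simp only [hterm, ite_mul, one_mul, zero_mul]
    rw [Finset.sum_ite_eq]
    simp [hψdef]
  have h1mem : (1 : R) ∈ I := by
    have : (1 : R) = ∑ i, Ψ (Pi.single i 1) * a i := by
      conv_lhs => rw [← hΨψ 1]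
      rw [hψ1, map_sum]
      congr 1
      funext i
      rw [_root_.map_smul]
      simp [MulOpposite.smul_eq_mul_unop]
    rw [this]
    exact Submodule.sum_mem _ fun i _ => by
      simpa [smul_eq_mul] using I.smul_mem (Ψ (Pi.single i 1)) (haI i)
  exact hne (Submodule.eq_top_iff'.mpr fun x => by simpa using I.smul_mem x h1mem)

private lemma bwdAux (H : ∀ I : Submodule R R, I.FG → I ≠ ⊤ → ∃ r : R, r ≠ 0 ∧ ∀ x ∈ I, x * r = 0)
    (n : ℕ) (N K : Submodule Rᵐᵒᵖ (Fin n → R)) (hK : ∃ K', IsCompl K K')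
    (hNK : Nonempty (N ≃ₗ[Rᵐᵒᵖ] K)) : ∃ N', IsCompl N N' := by
  obtain ⟨K', hKc⟩ := hK
  obtain ⟨iso⟩ := hNK
  set π := K.projectionOnto K' hKc with hπdef
  set h : ↥K →ₗ[Rᵐᵒᵖ] (Fin n → R) := N.subtype.comp iso.symm.toLinearMap with hhdef
  have hhinj : Function.Injective h := by
    intro x y hxy
    exact iso.symm.injective (Subtype.ext (by simpa [hhdef] using hxy))
  have hhmem : ∀ k : ↥K, h k ∈ N := fun k => (iso.symm k).2
  set F : (Fin n → R) →ₗ[Rᵐᵒᵖ] (Fin n → R) × (Fin n → R) :=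
    LinearMap.prod (h.comp π) (LinearMap.id - K.subtype.comp π) with hFdef
  have hFinj : Function.Injective F := by
    intro x y hxy
    have h1 : h (π x) = h (π y) := congrArg Prod.fst hxy
    have h2 : x - ↑(π x) = y - ↑(π y) := congrArg Prod.snd hxy
    have h3 : π x = π y := hhinj h1
    have := h2
    rw [h3] at this
    exact sub_left_inj.mp this
  obtain ⟨T, hT⟩ := splitProd H F hFinj
  set t : (Fin n → R) →ₗ[Rᵐᵒᵖ] ↥K := π.comp (T.comp (LinearMap.inl Rᵐᵒᵖ _ _)) with htdef
  have hth : ∀ k : ↥K, t (h k) = k := by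
    intro k
    have hFk : F (↑k : Fin n → R) = (h k, 0) := by
      rw [hFdef]
      simp [hπdef, Submodule.projectionOnto_apply_left]
    have hTk : T (h k, 0) = (↑k : Fin n → R) := by
      rw [← hFk]
      exact DFunLike.congr_fun hT (↑k : Fin n → R)
    rw [htdef]
    simp only [LinearMap.coe_comp, Function.comp_apply, LinearMap.inl_apply]
    rw [hTk, hπdef, Submodule.projectionOnto_apply_left]
  set e : (Fin n → R) →ₗ[Rᵐᵒᵖ] (Fin n → R) := h.comp t with hedef
  have heN : ∀ x, e x ∈ N := fun x => hhmem (t x)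
  have heid : ∀ x ∈ N, e x = x := by
    intro x hx
    have hk : h (iso ⟨x, hx⟩) = x := by
      rw [hhdef]
      simp
    have ht2 : t x = iso ⟨x, hx⟩ := by
      conv_lhs => rw [← hk]
      exact hth _
    rw [hedef]
    simp only [LinearMap.coe_comp, Function.comp_apply]
    rw [ht2, hk]
  refine ⟨LinearMap.ker e, ?_, ?_⟩
  · rw [Submodule.disjoint_def]
    intro x hxN hxK
    rw [LinearMap.mem_ker] at hxK
    rw [← heid x hxN, hxK]
  · rw [codisjoint_iff, eq_top_iff]
    rintro x -
    refine Submodule.mem_sup.mpr ⟨e x, heN x, x - e x, ?_, by abel⟩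
    rw [LinearMap.mem_ker, map_sub, heid (e x) (heN x), sub_self]

end Aux

/-- A ring `R` is right finitely Σ-C2 iff the right annihilator of every finitely
generated proper left ideal of `R` is nonzero. -/
theorem finitelySigmaC2_iff_rightAnn (R : Type*) [Ring R] :
    (∀ n : ℕ, IsC2Module Rᵐᵒᵖ (Fin n → R)) ↔
      ∀ I : Submodule R R, I.FG → I ≠ ⊤ → ∃ r : R, r ≠ 0 ∧ ∀ x ∈ I, x * r = 0 := by
  constructor
  · intro hC2 I hFG hne
    exact fwdAux (fun n => hC2 n) I hFG hne
  · intro H n N K hK hNK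
    exact bwdAux H n N K hK hNK
end

section
/- Every right Kasch ring is left finitely Σ-C2. -/
open MulOpposite

section Aux

variable {R : Type*} [Ring R]

/-- Embedding `(Fin n → R) → (Fin (n+1) → R)` with last coordinate `0`,
as a right-module (`Rᵐᵒᵖ`-linear) map. -/
def snocZeroMap (R : Type*) [Ring R] (n : ℕ) : (Fin n → R) →ₗ[Rᵐᵒᵖ] (Fin (n+1) → R) where
  toFun x i := if h : (i : ℕ) < n then x ⟨i, h⟩ else 0
  map_add' x y := by funext i; by_cases h : (i : ℕ) < n <;> simp [h]
  map_smul' c x := by funext i; by_cases h : (i : ℕ) < n <;> simp [h]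

@[simp] lemma snocZeroMap_apply (n : ℕ) (x : Fin n → R) (i : Fin (n+1)) :
    snocZeroMap R n x i = if h : (i : ℕ) < n then x ⟨i, h⟩ else 0 := rfl

/-- In a right Kasch ring, every proper right submodule of `R^n` is annihilated
by a nonzero row vector. -/
theorem ann_exists (R : Type*) [Ring R]
    (kasch : ∀ I : Submodule Rᵐᵒᵖ R, I ≠ ⊤ → ∃ r : R, r ≠ 0 ∧ ∀ x ∈ I, r * x = 0) :
    ∀ n : ℕ, ∀ V : Submodule Rᵐᵒᵖ (Fin n → R), V ≠ ⊤ →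
      ∃ w : Fin n → R, w ≠ 0 ∧ ∀ c ∈ V, ∑ i, w i * c i = 0 := by
  intro n
  induction n with
  | zero =>
    intro V hV
    exfalso
    apply hV
    ext x
    have hx : x = 0 := funext fun i => i.elim0
    simp only [Submodule.mem_top, iff_true]
    rw [hx]
    exact V.zero_mem
  | succ n ih =>
    intro V hV
    classical
    by_cases htop :
        V.map (LinearMap.proj (R := Rᵐᵒᵖ) (φ := fun _ : Fin (n+1) => R) (Fin.last n)) = ⊤
    · -- there is v ∈ V with last coordinate 1
      have h1 : (1 : R) ∈
          V.map (LinearMap.proj (R := Rᵐᵒᵖ) (φ := fun _ : Fin (n+1) => R) (Fin.last n)) := by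
        rw [htop]; trivial
      obtain ⟨v, hvV, hv1⟩ := h1
      have hv1 : v (Fin.last n) = 1 := hv1
      have hL : True := trivial
      have key : ∀ u : Fin (n+1) → R,
          snocZeroMap R n (fun j : Fin n => u j.castSucc - v j.castSucc * u (Fin.last n))
            = u - op (u (Fin.last n)) • v := by
        intro u
        funext i
        by_cases h : (i : ℕ) < n
        · have hi : (Fin.castSucc ⟨(i : ℕ), h⟩) = i := by ext; simp
          simp [snocZeroMap_apply, h, hi, op_smul_eq_mul]
        · have hi : i = Fin.last n := by
            have h2 := i.isLt
            ext
            simp only [Fin.val_last]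
            omega
          simp [snocZeroMap_apply, h, hi, hv1, op_smul_eq_mul]
      have hV0 : V.comap (snocZeroMap R n) ≠ ⊤ := by
        intro h0
        apply hV
        rw [Submodule.eq_top_iff']
        intro u
        have hmem : (fun j : Fin n => u j.castSucc - v j.castSucc * u (Fin.last n))
            ∈ V.comap (snocZeroMap R n) := by rw [h0]; trivial
        have hu' : u - op (u (Fin.last n)) • v ∈ V := by
          rw [← key u]; exact hmem
        have := V.add_mem hu' (V.smul_mem (op (u (Fin.last n))) hvV)
        simpa using this
      obtain ⟨w', hw'0, hw'⟩ := ih _ hV0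
      refine ⟨fun i => if h : (i : ℕ) < n then w' ⟨i, h⟩
        else -(∑ j, w' j * v j.castSucc), ?_, ?_⟩
      · intro hw
        apply hw'0
        funext j
        have := congrFun hw j.castSucc
        have hj : ((j.castSucc : Fin (n+1)) : ℕ) < n := j.isLt
        simpa [hj] using this
      · intro c hc
        -- the truncated vector lies in V.comap (snocZeroMap R n)
        have hmem : (fun j : Fin n => c j.castSucc - v j.castSucc * c (Fin.last n))
            ∈ V.comap (snocZeroMap R n) := by
          rw [Submodule.mem_comap, key c]
          exact V.sub_mem hc (V.smul_mem (op (c (Fin.last n))) hvV)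
        have hx := hw' _ hmem
        -- hx : ∑ j, w' j * (c j.castSucc - v j.castSucc * c (Fin.last n)) = 0
        have h1 : ∑ j, w' j * c j.castSucc
            = (∑ j, w' j * v j.castSucc) * c (Fin.last n) := by
          have : ∑ j, (w' j * c j.castSucc - w' j * (v j.castSucc * c (Fin.last n))) = 0 := by
            simpa [mul_sub] using hx
          rw [Finset.sum_sub_distrib] at this
          have h2 : ∑ j, w' j * (v j.castSucc * c (Fin.last n))
              = (∑ j, w' j * v j.castSucc) * c (Fin.last n) := by
            rw [Finset.sum_mul]
            exact Finset.sum_congr rfl fun j _ => (mul_assoc _ _ _).symm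
          rw [h2] at this
          exact sub_eq_zero.mp this
        rw [Fin.sum_univ_castSucc]
        have hlast : ¬ ((Fin.last n : Fin (n+1)) : ℕ) < n := by simp
        simp only [hlast, dif_neg, not_false_iff]
        have hcs : ∀ j : Fin n, (if h : ((j.castSucc : Fin (n+1)) : ℕ) < n
            then w' ⟨((j.castSucc : Fin (n+1)) : ℕ), h⟩ else -(∑ j, w' j * v j.castSucc)) = w' j := by
          intro j
          have hj : ((j.castSucc : Fin (n+1)) : ℕ) < n := j.isLt
          simp [hj]
        calc (∑ j : Fin n, (if h : ((j.castSucc : Fin (n+1)) : ℕ) < n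
              then w' ⟨((j.castSucc : Fin (n+1)) : ℕ), h⟩ else -(∑ j, w' j * v j.castSucc)) * c j.castSucc)
              + (-(∑ j, w' j * v j.castSucc)) * c (Fin.last n)
            = (∑ j, w' j * c j.castSucc) + (-(∑ j, w' j * v j.castSucc)) * c (Fin.last n) := by
              congr 1
              exact Finset.sum_congr rfl fun j _ => by rw [hcs j]
          _ = 0 := by rw [h1, neg_mul, add_neg_cancel]
    · obtain ⟨r, hr0, hr⟩ := kasch _ htop
      refine ⟨Pi.single (Fin.last n) r, ?_, ?_⟩
      · intro h
        apply hr0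
        have := congrFun h (Fin.last n)
        simpa using this
      · intro c hc
        have hrc : r * c (Fin.last n) = 0 := hr _ (Submodule.mem_map_of_mem hc)
        have hterm : ∀ i : Fin (n+1), (Pi.single (Fin.last n) r : Fin (n+1) → R) i * c i
            = if i = Fin.last n then r * c i else 0 := by
          intro i
          by_cases hi : i = Fin.last n
          · subst hi; simp
          · simp [hi, Pi.single_eq_of_ne hi]
        rw [Finset.sum_congr rfl fun i _ => hterm i]
        simpa using hrc

end Aux

section Maps

variable {R : Type*} [Ring R] {n : ℕ}

/-- The left-linear endomorphism of `R^n` given by right multiplication with the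
matrix whose rows are `c k`. -/
def rowMap (c : Fin n → Fin n → R) : (Fin n → R) →ₗ[R] (Fin n → R) where
  toFun u k := ∑ j, u j * c k j
  map_add' u v := by
    funext k
    simp [add_mul, Finset.sum_add_distrib]
  map_smul' r u := by
    funext k
    simp [Finset.mul_sum, mul_assoc]

@[simp] lemma rowMap_apply (c : Fin n → Fin n → R) (u : Fin n → R) (k : Fin n) :
    rowMap c u k = ∑ j, u j * c k j := rfl

/-- An `Rᵐᵒᵖ`-linear map from pairs, used to encode a right ideal of the matrix ring. -/
def pairMap (u1 u2 : Fin n → Fin n → R) :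
    ((Fin n → R) × (Fin n → R)) →ₗ[Rᵐᵒᵖ] (Fin n → R) where
  toFun ab i := (∑ j, u1 i j * ab.1 j) + ∑ j, u2 i j * ab.2 j
  map_add' ab cd := by
    funext i
    simp only [Prod.fst_add, Prod.snd_add, Pi.add_apply, mul_add, Finset.sum_add_distrib]
    abel
  map_smul' c ab := by
    induction c using MulOpposite.rec' with
    | h r =>
      funext i
      simp [op_smul_eq_mul, Finset.sum_mul, add_mul, mul_assoc]

@[simp] lemma pairMap_apply (u1 u2 : Fin n → Fin n → R) (ab : (Fin n → R) × (Fin n → R))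
    (i : Fin n) :
    pairMap u1 u2 ab i = (∑ j, u1 i j * ab.1 j) + ∑ j, u2 i j * ab.2 j := rfl

lemma linearMap_apply_eq_sum (q : (Fin n → R) →ₗ[R] (Fin n → R)) (w : Fin n → R) (k : Fin n) :
    q w k = ∑ i, w i * q (Pi.single i 1) k := by
  conv_lhs => rw [← Finset.univ_sum_single w, map_sum]
  rw [Finset.sum_apply]
  refine Finset.sum_congr rfl fun i _ => ?_
  have h1 : (Pi.single i (w i) : Fin n → R) = w i • (Pi.single i (1 : R) : Fin n → R) := by
    funext j
    by_cases hj : j = i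
    · subst hj; simp
    · simp [Pi.single_eq_of_ne hj, hj]
  rw [h1, map_smul]
  simp

end Maps

/-- Every right Kasch ring (the left annihilator of every proper right ideal is nonzero)
is left finitely Σ-C2. -/
theorem leftFinitelySigmaC2_of_rightKasch (R : Type*) [Ring R]
    (kasch : ∀ I : Submodule Rᵐᵒᵖ R, I ≠ ⊤ → ∃ r : R, r ≠ 0 ∧ ∀ x ∈ I, r * x = 0) :
    ∀ n : ℕ, IsC2Module R (Fin n → R) := by
  classical
  intro n N K hKsum hiso
  obtain ⟨K', hK⟩ := hKsum
  obtain ⟨φ⟩ := hiso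
  let e0 : (Fin n → R) →ₗ[R] K := K.linearProjOfIsCompl K' hK
  let e : (Fin n → R) →ₗ[R] (Fin n → R) := K.subtype ∘ₗ e0
  let g : (Fin n → R) →ₗ[R] (Fin n → R) := N.subtype ∘ₗ φ.symm.toLinearMap ∘ₗ e0
  have e_apply : ∀ v, e v = (e0 v : Fin n → R) := fun _ => rfl
  have g_apply : ∀ v, g v = (φ.symm (e0 v) : Fin n → R) := fun _ => rfl
  have hee : ∀ v, e0 (e v) = e0 v := fun v =>
    Submodule.linearProjOfIsCompl_apply_left hK (e0 v)
  have heidem : ∀ v, e (e v) = e v := fun v => by rw [e_apply (e v), hee, ← e_apply]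
  have hge : ∀ v, g (e v) = g v := fun v => by rw [g_apply (e v), hee, ← g_apply]
  have hker : ∀ w, e w = w → g w = 0 → w = 0 := by
    intro w h1 h2
    have h3 : (φ.symm (e0 w) : Fin n → R) = 0 := by rw [← g_apply w]; exact h2
    have h4 : φ.symm (e0 w) = 0 := by
      apply Subtype.ext
      simpa using h3
    have h5 : e0 w = 0 := by
      have := congrArg φ h4
      rwa [LinearEquiv.apply_symm_apply, map_zero] at this
    have h6 : e w = 0 := by rw [e_apply, h5]; simp
    rw [← h1, h6]
  let p1 : (Fin n → R) →ₗ[R] (Fin n → R) := LinearMap.id - e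
  have p1_apply : ∀ v k, p1 v k = v k - e v k := fun _ _ => rfl
  let T := pairMap (fun i j => p1 (Pi.single i 1) j) (fun i j => g (Pi.single i 1) j)
  have hT : LinearMap.range T = ⊤ := by
    by_contra hT
    obtain ⟨w, hw0, hw⟩ := ann_exists R kasch n _ hT
    have hTi1 : ∀ k i, T (Pi.single k 1, 0) i = p1 (Pi.single i 1) k := by
      intro k i
      rw [pairMap_apply]
      simp only [Pi.zero_apply, mul_zero, Finset.sum_const_zero, add_zero]
      have hterm : ∀ j, p1 (Pi.single i 1) j * (Pi.single k 1 : Fin n → R) j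
          = if j = k then p1 (Pi.single i 1) k else 0 := by
        intro j
        by_cases hj : j = k
        · subst hj; simp
        · simp [Pi.single_eq_of_ne hj, hj]
      rw [Finset.sum_congr rfl fun j _ => hterm j, Finset.sum_ite_eq']
      simp
    have hTi2 : ∀ k i, T (0, Pi.single k 1) i = g (Pi.single i 1) k := by
      intro k i
      rw [pairMap_apply]
      simp only [Pi.zero_apply, mul_zero, Finset.sum_const_zero, zero_add]
      have hterm : ∀ j, g (Pi.single i 1) j * (Pi.single k 1 : Fin n → R) j
          = if j = k then g (Pi.single i 1) k else 0 := by
        intro j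
        by_cases hj : j = k
        · subst hj; simp
        · simp [Pi.single_eq_of_ne hj, hj]
      rw [Finset.sum_congr rfl fun j _ => hterm j, Finset.sum_ite_eq']
      simp
    have hp1 : ∀ k, p1 w k = 0 := by
      intro k
      calc p1 w k = ∑ i, w i * p1 (Pi.single i 1) k := linearMap_apply_eq_sum p1 w k
        _ = ∑ i, w i * T (Pi.single k 1, 0) i :=
            Finset.sum_congr rfl fun i _ => by rw [hTi1 k i]
        _ = 0 := hw _ (LinearMap.mem_range_self T _)
    have hg1 : ∀ k, g w k = 0 := by
      intro k
      calc g w k = ∑ i, w i * g (Pi.single i 1) k := linearMap_apply_eq_sum g w k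
        _ = ∑ i, w i * T (0, Pi.single k 1) i :=
            Finset.sum_congr rfl fun i _ => by rw [hTi2 k i]
        _ = 0 := hw _ (LinearMap.mem_range_self T _)
    apply hw0
    apply hker
    · funext k
      have h6 := hp1 k
      rw [p1_apply] at h6
      exact (sub_eq_zero.mp h6).symm
    · funext k
      exact hg1 k
  have hsurj := LinearMap.range_eq_top.mp hT
  choose ab hab using fun k : Fin n => hsurj (Pi.single k 1)
  let β := rowMap (fun k => (ab k).1)
  let γ := rowMap (fun k => (ab k).2)
  have step : ∀ (v c : Fin n → R) (u : Fin n → Fin n → R),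
      (∑ j, (∑ i, v i * u i j) * c j) = ∑ i, v i * ∑ j, u i j * c j := by
    intro v c u
    calc ∑ j, (∑ i, v i * u i j) * c j
        = ∑ j, ∑ i, v i * u i j * c j :=
          Finset.sum_congr rfl fun j _ => Finset.sum_mul _ _ _
      _ = ∑ i, ∑ j, v i * u i j * c j := Finset.sum_comm
      _ = ∑ i, v i * ∑ j, u i j * c j := by
          refine Finset.sum_congr rfl fun i _ => ?_
          rw [Finset.mul_sum]
          exact Finset.sum_congr rfl fun j _ => mul_assoc _ _ _
  have hid : ∀ (v : Fin n → R) (k : Fin n), β (p1 v) k + γ (g v) k = v k := by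
    intro v k
    calc β (p1 v) k + γ (g v) k
        = (∑ j, p1 v j * (ab k).1 j) + ∑ j, g v j * (ab k).2 j := rfl
      _ = (∑ j, (∑ i, v i * p1 (Pi.single i 1) j) * (ab k).1 j)
          + ∑ j, (∑ i, v i * g (Pi.single i 1) j) * (ab k).2 j := by
            congr 1 <;>
              exact Finset.sum_congr rfl fun j _ => by rw [linearMap_apply_eq_sum]
      _ = (∑ i, v i * ∑ j, p1 (Pi.single i 1) j * (ab k).1 j)
          + ∑ i, v i * ∑ j, g (Pi.single i 1) j * (ab k).2 j := by rw [step, step]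
      _ = ∑ i, v i * T (ab k) i := by
            rw [← Finset.sum_add_distrib]
            exact Finset.sum_congr rfl fun i _ => by rw [pairMap_apply, mul_add]
      _ = ∑ i, v i * (Pi.single k 1 : Fin n → R) i := by rw [hab k]
      _ = v k := by
            have hterm : ∀ i, v i * (Pi.single k 1 : Fin n → R) i
                = if i = k then v k else 0 := by
              intro i
              by_cases hi : i = k
              · subst hi; simp
              · simp [Pi.single_eq_of_ne hi, hi]
            rw [Finset.sum_congr rfl fun i _ => hterm i, Finset.sum_ite_eq']
            simp
  have hγg : ∀ v, γ (g v) = e v := by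
    intro v
    funext k
    have h6 := hid (e v) k
    have h7 : p1 (e v) = 0 := by
      funext m
      rw [p1_apply, heidem, sub_self]
      rfl
    rw [h7, map_zero] at h6
    rw [hge] at h6
    simpa using h6
  let f : (Fin n → R) →ₗ[R] (Fin n → R) := g ∘ₗ γ
  have hf2 : ∀ v, f (f v) = f v := by
    intro v
    calc f (f v) = g (γ (g (γ v))) := rfl
      _ = g (e (γ v)) := by rw [hγg]
      _ = g (γ v) := hge _
      _ = f v := rfl
  have hrange : LinearMap.range f = N := by
    apply le_antisymm
    · rintro x ⟨y, rfl⟩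
      show g (γ y) ∈ N
      rw [g_apply]
      exact (φ.symm (e0 (γ y))).2
    · intro x hx
      have hy : g ((φ ⟨x, hx⟩ : K) : Fin n → R) = x := by
        rw [g_apply, show e0 ((φ ⟨x, hx⟩ : K) : Fin n → R) = φ ⟨x, hx⟩ from
            Submodule.linearProjOfIsCompl_apply_left hK (φ ⟨x, hx⟩),
          LinearEquiv.symm_apply_apply]
      refine ⟨g ((φ ⟨x, hx⟩ : K) : Fin n → R), ?_⟩
      show g (γ (g _)) = x
      rw [hγg, hge, hy]
  refine ⟨LinearMap.ker f, ?_⟩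
  rw [← hrange]
  constructor
  · rw [Submodule.disjoint_def]
    rintro x ⟨y, rfl⟩ hxk
    have h8 := LinearMap.mem_ker.mp hxk
    rw [hf2] at h8
    exact h8
  · rw [codisjoint_iff, Submodule.eq_top_iff']
    intro x
    rw [Submodule.mem_sup]
    refine ⟨f x, LinearMap.mem_range_self f x, x - f x, ?_, by abel⟩
    rw [LinearMap.mem_ker, map_sub, hf2, sub_self]
end

section
/- Every von Neumann regular ring is right finitely Σ-C2. -/
open MulOpposite Submodule

section Aux

variable {R : Type*} [Ring R]

/-- Every f.g. right ideal of a von Neumann regular ring is generated by an idempotent. -/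
lemma idem_gen (reg : ∀ a : R, ∃ x : R, a = a * x * a) :
    ∀ N : Submodule Rᵐᵒᵖ R, N.FG → ∃ e : R, e * e = e ∧ N = Submodule.span Rᵐᵒᵖ {e} := by
  intro N hN
  refine Submodule.fg_induction (motive := fun N _ => ∃ e : R, e * e = e ∧ N = Submodule.span Rᵐᵒᵖ {e})
    ?_ ?_ N hN
  · intro a
    obtain ⟨x, hx⟩ := reg a
    refine ⟨a * x, ?_, le_antisymm ?_ ?_⟩
    · calc a * x * (a * x) = (a * x * a) * x := by noncomm_ring
        _ = a * x := by rw [← hx]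
    · rw [Submodule.span_le, Set.singleton_subset_iff, SetLike.mem_coe]
      refine Submodule.mem_span_singleton.2 ⟨op a, ?_⟩
      show a * x * a = a
      exact hx.symm
    · rw [Submodule.span_le, Set.singleton_subset_iff, SetLike.mem_coe]
      exact Submodule.mem_span_singleton.2 ⟨op x, rfl⟩
  · rintro N₁ N₂ _ _ ⟨e, he, rfl⟩ ⟨f, hf, rfl⟩
    obtain ⟨x, hx⟩ := reg (f - e * f)
    set f₁ := f - e * f with hf₁
    have hef₁ : e * f₁ = 0 := by
      rw [hf₁, mul_sub, ← mul_assoc, he, sub_self]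
    set h := f₁ * x with hh
    -- hx : f₁ = h * f₁
    have hhf₁ : h * f₁ = f₁ := hx.symm
    have hhh : h * h = h := by
      calc h * h = (h * f₁) * x := by rw [hh]; noncomm_ring
        _ = f₁ * x := by rw [hhf₁]
        _ = h := hh.symm
    have heh : e * h = 0 := by rw [hh, ← mul_assoc, hef₁, zero_mul]
    have hge : (e + h - h * e) * e = e := by
      calc (e + h - h * e) * e = e * e + h * e - h * (e * e) := by noncomm_ring
        _ = e := by rw [he]; abel
    have hgf₁ : (e + h - h * e) * f₁ = f₁ := by
      calc (e + h - h * e) * f₁ = e * f₁ + h * f₁ - h * (e * f₁) := by noncomm_ring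
        _ = f₁ := by rw [hef₁, hhf₁, mul_zero]; abel
    refine ⟨e + h - h * e, ?_, le_antisymm ?_ ?_⟩
    · calc (e + h - h * e) * (e + h - h * e)
          = (e + h - h * e) * e + (e + h - h * e) * h - ((e + h - h * e) * h) * e := by
            noncomm_ring
        _ = e + h - h * e := by
            have : (e + h - h * e) * h = h := by
              calc (e + h - h * e) * h = e * h + h * h - h * (e * h) := by noncomm_ring
                _ = h := by rw [heh, hhh, mul_zero]; abel
            rw [this, hge]
    · rw [sup_le_iff]
      have hespan : e ∈ Submodule.span Rᵐᵒᵖ ({e + h - h * e} : Set R) := by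
        refine Submodule.mem_span_singleton.2 ⟨op e, ?_⟩
        show (e + h - h * e) * e = e
        exact hge
      have hf₁span : f₁ ∈ Submodule.span Rᵐᵒᵖ ({e + h - h * e} : Set R) := by
        refine Submodule.mem_span_singleton.2 ⟨op f₁, ?_⟩
        exact hgf₁
      constructor <;> rw [Submodule.span_le, Set.singleton_subset_iff, SetLike.mem_coe]
      · exact hespan
      · have : f = e * f + f₁ := by rw [hf₁]; abel
        rw [this]
        refine add_mem ?_ hf₁span
        have := Submodule.smul_mem (Submodule.span Rᵐᵒᵖ ({e + h - h * e} : Set R)) (op f) hespan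
        exact this
    · rw [Submodule.span_le, Set.singleton_subset_iff, SetLike.mem_coe]
      have hmul : ∀ y c : R, y ∈ Submodule.span Rᵐᵒᵖ {e} ⊔ Submodule.span Rᵐᵒᵖ {f} →
          y * c ∈ Submodule.span Rᵐᵒᵖ {e} ⊔ Submodule.span Rᵐᵒᵖ {f} := fun y c hy =>
        Submodule.smul_mem _ (op c) hy
      have hesup : e ∈ Submodule.span Rᵐᵒᵖ {e} ⊔ Submodule.span Rᵐᵒᵖ {f} :=
        Submodule.mem_sup_left (Submodule.mem_span_singleton_self e)
      have hfsup : f ∈ Submodule.span Rᵐᵒᵖ {e} ⊔ Submodule.span Rᵐᵒᵖ {f} :=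
        Submodule.mem_sup_right (Submodule.mem_span_singleton_self f)
      have hf₁sup : f₁ ∈ Submodule.span Rᵐᵒᵖ {e} ⊔ Submodule.span Rᵐᵒᵖ {f} := by
        rw [hf₁]
        exact sub_mem hfsup (hmul e f hesup)
      have hhsup : h ∈ Submodule.span Rᵐᵒᵖ {e} ⊔ Submodule.span Rᵐᵒᵖ {f} := by
        rw [hh]; exact hmul f₁ x hf₁sup
      exact sub_mem (add_mem hesup hhsup) (hmul h e hhsup)

end Aux

/-- Every f.g. submodule is the image of a projection-like endomorphism. -/
def FGProj (R : Type*) [Semiring R] (M : Type*) [AddCommGroup M] [Module R M] : Prop :=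
  ∀ N : Submodule R M, N.FG → ∃ q : M →ₗ[R] M, (∀ x, q x ∈ N) ∧ ∀ x ∈ N, q x = x

section FGProjLemmas

variable {R : Type*} [Ring R]

lemma fgproj_isCompl {M : Type*} [AddCommGroup M] [Module R M] {N : Submodule R M}
    (q : M →ₗ[R] M) (hq1 : ∀ x, q x ∈ N) (hq2 : ∀ x ∈ N, q x = x) :
    ∃ N', IsCompl N N' := by
  refine ⟨LinearMap.ker q, ⟨?_, ?_⟩⟩
  · rw [disjoint_iff]
    ext x
    simp only [Submodule.mem_inf, Submodule.mem_bot, LinearMap.mem_ker]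
    constructor
    · rintro ⟨hxN, hxk⟩
      rw [← hq2 x hxN, hxk]
    · rintro rfl; simp
  · rw [codisjoint_iff, eq_top_iff]
    intro x _
    have : x = q x + (x - q x) := by abel
    rw [this]
    refine Submodule.add_mem_sup (hq1 x) ?_
    simp only [LinearMap.mem_ker, map_sub]
    rw [hq2 (q x) (hq1 x), sub_self]

lemma fgproj_of_equiv {M M' : Type*} [AddCommGroup M] [Module R M] [AddCommGroup M']
    [Module R M'] (e : M ≃ₗ[R] M') (h : FGProj R M) : FGProj R M' := by
  intro N hN
  obtain ⟨q, hq1, hq2⟩ := h (N.map (e.symm : M' →ₗ[R] M))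
    (hN.map (e.symm : M' →ₗ[R] M))
  refine ⟨(e : M →ₗ[R] M') ∘ₗ q ∘ₗ (e.symm : M' →ₗ[R] M), fun x => ?_, fun x hx => ?_⟩
  · have := hq1 (e.symm x)
    obtain ⟨y, hy, hyx⟩ := this
    simp only [LinearMap.coe_comp, Function.comp_apply, LinearEquiv.coe_coe]
    rw [← hyx]
    simpa using hy
  · simp only [LinearMap.coe_comp, Function.comp_apply, LinearEquiv.coe_coe]
    rw [hq2 (e.symm x) ⟨x, hx, rfl⟩, e.apply_symm_apply]

lemma fgproj_R (reg : ∀ a : R, ∃ x : R, a = a * x * a) : FGProj Rᵐᵒᵖ R := by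
  intro N hN
  obtain ⟨e, he, rfl⟩ := idem_gen reg N hN
  refine ⟨{ toFun := fun r => e * r, map_add' := fun a b => mul_add e a b,
            map_smul' := fun c r => ?_ }, fun x => ?_, fun x hx => ?_⟩
  · show e * (r * c.unop) = (e * r) * c.unop
    rw [mul_assoc]
  · exact Submodule.mem_span_singleton.2 ⟨op x, rfl⟩
  · obtain ⟨c, rfl⟩ := Submodule.mem_span_singleton.1 hx
    show e * (e * c.unop) = e * c.unop
    rw [← mul_assoc, he]

end FGProjLemmas

section ProdStep

variable {R : Type*} [Ring R]

lemma fgproj_prod (reg : ∀ a : R, ∃ x : R, a = a * x * a)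
    {M : Type*} [AddCommGroup M] [Module Rᵐᵒᵖ M] (hM : FGProj Rᵐᵒᵖ M) :
    FGProj Rᵐᵒᵖ (M × R) := by
  intro N hN
  set π : M × R →ₗ[Rᵐᵒᵖ] R := LinearMap.snd Rᵐᵒᵖ M R with hπ
  obtain ⟨e, he, hspan⟩ := idem_gen reg (N.map π) (hN.map π)
  have heJ : e ∈ N.map π := by rw [hspan]; exact Submodule.mem_span_singleton_self e
  obtain ⟨y, hyN, hye⟩ := heJ
  -- the section s
  set s : R →ₗ[Rᵐᵒᵖ] M × R :=
    { toFun := fun r => op (e * r) • y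
      map_add' := fun a b => by
        show op (e * (a + b)) • y = op (e * a) • y + op (e * b) • y
        rw [mul_add, op_add, add_smul]
      map_smul' := fun c r => by
        show op (e * (r * c.unop)) • y = c • (op (e * r) • y)
        rw [← mul_smul, ← mul_assoc, op_mul, op_unop] } with hs
  have hsN : ∀ r, s r ∈ N := fun r => N.smul_mem _ hyN
  have hsπ : ∀ r, π (s r) = e * r := by
    intro r
    show (op (e * r) • y).2 = e * r
    have hy2 : y.2 = e := hye
    have : (op (e * r) • y).2 = op (e * r) • y.2 := rfl
    rw [this, hy2]
    show e * (e * r) = e * r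
    rw [← mul_assoc, he]
  have hx2 : ∀ x ∈ N, e * (π x) = π x := by
    intro x hx
    have : π x ∈ N.map π := Submodule.mem_map_of_mem hx
    rw [hspan] at this
    obtain ⟨c, hc⟩ := Submodule.mem_span_singleton.1 this
    rw [← hc]
    show e * (e * c.unop) = e * c.unop
    rw [← mul_assoc, he]
  set ρ : M × R →ₗ[Rᵐᵒᵖ] M × R := LinearMap.id - s ∘ₗ π with hρ
  have hρN : ∀ x ∈ N, ρ x ∈ N := fun x hx => N.sub_mem hx (hsN (π x))
  have hρ2 : ∀ x ∈ N, (ρ x).2 = 0 := by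
    intro x hx
    show (x - s (π x)).2 = 0
    rw [Prod.snd_sub]
    have : (s (π x)).2 = π (s (π x)) := rfl
    rw [this, hsπ, hx2 x hx]
    exact sub_self _
  set N₁ : Submodule Rᵐᵒᵖ M := (N.map ρ).map (LinearMap.fst Rᵐᵒᵖ M R) with hN₁
  obtain ⟨q₁, hq₁1, hq₁2⟩ := hM N₁ ((hN.map ρ).map _)
  have hN₁N : ∀ m ∈ N₁, ((m, 0) : M × R) ∈ N := by
    rintro m ⟨z, ⟨x, hx, rfl⟩, rfl⟩
    have h2 : (ρ x).2 = 0 := hρ2 x hx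
    show ((ρ x).1, (0 : R)) ∈ N
    rw [(Prod.ext rfl h2.symm : ((ρ x).1, (0 : R)) = ρ x)]
    exact hρN x hx
  set ι : M →ₗ[Rᵐᵒᵖ] M × R := LinearMap.inl Rᵐᵒᵖ M R with hι
  refine ⟨s ∘ₗ π + ι ∘ₗ q₁ ∘ₗ (LinearMap.fst Rᵐᵒᵖ M R) ∘ₗ ρ, fun x => ?_, fun x hx => ?_⟩
  · simp only [LinearMap.add_apply, LinearMap.coe_comp, Function.comp_apply]
    refine N.add_mem (hsN _) (hN₁N _ ?_)
    exact hq₁1 _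
  · simp only [LinearMap.add_apply, LinearMap.coe_comp, Function.comp_apply]
    have hm : (ρ x).1 ∈ N₁ :=
      Submodule.mem_map_of_mem (Submodule.mem_map_of_mem hx)
    have hfst : (LinearMap.fst Rᵐᵒᵖ M R) (ρ x) = (ρ x).1 := rfl
    rw [hfst, hq₁2 _ hm]
    have h2 : (ρ x).2 = 0 := hρ2 x hx
    have hιρ : ι (ρ x).1 = ρ x := Prod.ext rfl h2.symm
    rw [hιρ]
    show s (π x) + (x - s (π x)) = x
    abel

end ProdStep

section Main

variable {R : Type*} [Ring R]

/-- The linear equivalence `(Fin n → R) × R ≃ (Fin (n+1) → R)` by `Fin.cons`. -/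
def consEquiv (n : ℕ) : ((Fin n → R) × R) ≃ₗ[Rᵐᵒᵖ] (Fin (n + 1) → R) where
  toFun p := Fin.cons p.2 p.1
  invFun x := (fun i => x i.succ, x 0)
  map_add' p q := by
    funext i
    refine Fin.cases ?_ (fun j => ?_) i <;> simp
  map_smul' c p := by
    funext i
    refine Fin.cases ?_ (fun j => ?_) i <;> simp
  left_inv p := by simp
  right_inv x := by
    funext i
    refine Fin.cases ?_ (fun j => ?_) i <;> simp

lemma fgproj_pi (reg : ∀ a : R, ∃ x : R, a = a * x * a) :
    ∀ n : ℕ, FGProj Rᵐᵒᵖ (Fin n → R) := by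
  intro n
  induction n with
  | zero =>
    intro N hN
    exact ⟨0, fun x => by simpa using N.zero_mem, fun x hx => Subsingleton.elim _ _⟩
  | succ n ih =>
    exact fgproj_of_equiv (consEquiv n) (fgproj_prod reg ih)

end Main

/-- Every von Neumann regular ring is right finitely Σ-C2. -/
theorem rightFinitelySigmaC2_of_vonNeumannRegular (R : Type*) [Ring R]
    (reg : ∀ a : R, ∃ x : R, a = a * x * a) :
    ∀ n : ℕ, IsC2Module Rᵐᵒᵖ (Fin n → R) := by
  intro n N K hKsum hiso
  obtain ⟨K', hK⟩ := hKsum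
  obtain ⟨φ⟩ := hiso
  set projK : (Fin n → R) →ₗ[Rᵐᵒᵖ] K := Submodule.linearProjOfIsCompl K K' hK with hprojK
  set g : (Fin n → R) →ₗ[Rᵐᵒᵖ] (Fin n → R) :=
    N.subtype ∘ₗ (φ.symm : K →ₗ[Rᵐᵒᵖ] N) ∘ₗ projK with hg
  haveI : Module.Finite Rᵐᵒᵖ R := by
    refine ⟨⟨{1}, ?_⟩⟩
    rw [eq_top_iff]
    intro x _
    have : x ∈ Submodule.span Rᵐᵒᵖ ({1} : Set R) :=
      Submodule.mem_span_singleton.2 ⟨op x, by simp⟩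
    simpa using this
  have htop : (⊤ : Submodule Rᵐᵒᵖ (Fin n → R)).FG := Module.finite_def.mp inferInstance
  have hrange : Submodule.map g ⊤ = N := by
    apply le_antisymm
    · rintro _ ⟨x, -, rfl⟩
      exact (φ.symm (projK x)).2
    · intro z hz
      refine ⟨(φ ⟨z, hz⟩ : Fin n → R), trivial, ?_⟩
      have h1 : projK ((φ ⟨z, hz⟩ : K) : Fin n → R) = φ ⟨z, hz⟩ :=
        Submodule.linearProjOfIsCompl_apply_left hK (φ ⟨z, hz⟩)
      simp only [hg, LinearMap.coe_comp, Function.comp_apply, h1]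
      exact congrArg Subtype.val (φ.symm_apply_apply ⟨z, hz⟩)
  have hNfg : N.FG := hrange ▸ htop.map g
  obtain ⟨q, hq1, hq2⟩ := fgproj_pi reg n N hNfg
  exact fgproj_isCompl q hq1 hq2
end

section
/- Let M be a right R-module and E = End(M). If E is a right C2 ring, then M is a C2 module. -/
section Aux

variable {S : Type*} [Ring S]

/-- Left multiplication by `a` as an `Sᵐᵒᵖ`-linear map (right-module map). -/
def lmulOp (a : S) : S →ₗ[Sᵐᵒᵖ] S where
  toFun t := a * t
  map_add' := mul_add a
  map_smul' u t := by
    simp only [MulOpposite.smul_eq_mul_unop, RingHom.id_apply]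
    exact (mul_assoc a t u.unop).symm

@[simp] lemma lmulOp_apply (a t : S) : lmulOp a t = a * t := rfl

/-- For an idempotent `e`, `eS` and `(1-e)S` are complementary right ideals. -/
lemma isCompl_range_lmulOp {e : S} (he : e * e = e) :
    IsCompl (LinearMap.range (lmulOp e)) (LinearMap.range (lmulOp (1 - e))) := by
  constructor
  · rw [disjoint_iff_inf_le]
    rintro x ⟨⟨s, hs⟩, ⟨t, ht⟩⟩
    simp only [lmulOp_apply] at hs ht
    have h1 : e * x = x := by rw [← hs, ← mul_assoc, he, hs]
    have h2 : e * x = 0 := by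
      rw [← ht, ← mul_assoc, mul_sub, mul_one, he, sub_self, zero_mul]
    simpa [h2] using h1.symm
  · rw [codisjoint_iff_le_sup]
    intro x _
    have : x = e * x + (1 - e) * x := by
      rw [sub_mul, one_mul, add_sub_cancel]
    rw [this]
    exact Submodule.add_mem_sup ⟨x, rfl⟩ ⟨x, rfl⟩

end Aux

/-- If the endomorphism ring `E = End(M)` of a right `R`-module `M` is a right C2 ring,
then `M` is a C2 module. -/
theorem c2Module_of_end_c2Ring (R : Type*) [Ring R] (M : Type*) [AddCommGroup M]
    [Module Rᵐᵒᵖ M] (h : IsC2Module (Module.End Rᵐᵒᵖ M)ᵐᵒᵖ (Module.End Rᵐᵒᵖ M)) :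
    IsC2Module Rᵐᵒᵖ M := by
  set E := Module.End Rᵐᵒᵖ M with hE
  rintro N K ⟨K', hK⟩ ⟨f⟩
  -- the idempotent projecting onto K
  set p : M →ₗ[Rᵐᵒᵖ] K := Submodule.projectionOnto K K' hK with hp
  set e : E := K.subtype ∘ₗ p with he
  have hee : e * e = e :=
    LinearMap.ext fun m => congrArg (fun x : K => (x : M))
      (Submodule.linearProjOfIsCompl_apply_left hK (p m))
  set a : E := N.subtype ∘ₗ (f.symm : K →ₗ[Rᵐᵒᵖ] N) ∘ₗ p with ha
  have hae : a * e = a :=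
    LinearMap.ext fun m => congrArg (fun x : K => ((f.symm x : N) : M))
      (Submodule.linearProjOfIsCompl_apply_left hK (p m))
  have hker : ∀ m : M, a m = 0 ↔ e m = 0 := by
    intro m
    show ((f.symm (p m) : N) : M) = 0 ↔ ((p m : K) : M) = 0
    rw [ZeroMemClass.coe_eq_zero, ZeroMemClass.coe_eq_zero,
      LinearEquiv.map_eq_zero_iff]
  have hrange : LinearMap.range a = N := by
    apply le_antisymm
    · rintro x ⟨m, rfl⟩
      exact Submodule.coe_mem (f.symm (p m))
    · intro n hn
      refine ⟨(f ⟨n, hn⟩ : M), ?_⟩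
      show ((f.symm (p (f ⟨n, hn⟩ : M)) : N) : M) = n
      rw [Submodule.projectionOnto_apply_left hK (f ⟨n, hn⟩)]
      simp
  -- key consequence of ker a = ker e : a * t = 0 → e * t = 0
  have hket : ∀ t : E, a * t = 0 → e * t = 0 := by
    intro t ht
    ext m
    have : a (t m) = 0 := congrArg (fun g : E => g m) ht
    exact (hker (t m)).mp this
  -- the right ideals aE and eE, as `Eᵐᵒᵖ`-submodules of `E`
  have hiso : Nonempty ((LinearMap.range (lmulOp a)) ≃ₗ[Eᵐᵒᵖ]
      (LinearMap.range (lmulOp e))) := by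
    refine ⟨(LinearEquiv.ofBijective ?_ ?_).symm⟩
    · refine LinearMap.codRestrict _ ((lmulOp a).comp (Submodule.subtype _)) ?_
      rintro ⟨x, t, rfl⟩
      refine ⟨t, ?_⟩
      show a * t = a * (e * t)
      rw [← mul_assoc, hae]
    · constructor
      · rintro ⟨x, hx⟩ ⟨y, hy⟩ hxy
        obtain ⟨t, rfl⟩ := hx
        obtain ⟨s, rfl⟩ := hy
        apply Subtype.ext
        show e * t = e * s
        have hxy' : a * (e * t) = a * (e * s) := congrArg Subtype.val hxy
        have hz : a * (e * t - e * s) = 0 := by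
          rw [mul_sub, hxy', sub_self]
        have := hket _ hz
        rw [mul_sub, ← mul_assoc, ← mul_assoc, hee, sub_eq_zero] at this
        exact this
      · rintro ⟨x, t, rfl⟩
        refine ⟨⟨e * t, t, rfl⟩, ?_⟩
        apply Subtype.ext
        show a * (e * t) = a * t
        rw [← mul_assoc, hae]
  obtain ⟨I', hI'⟩ := h _ _ ⟨_, isCompl_range_lmulOp hee⟩ hiso
  -- extract an idempotent generator g of aE
  set Ia := LinearMap.range (lmulOp a) with hIa
  set q : E →ₗ[Eᵐᵒᵖ] Ia := Submodule.linearProjOfIsCompl Ia I' hI' with hq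
  set g : E := ((q 1 : Ia) : E) with hg
  have hgx : ∀ x : E, x ∈ Ia → g * x = x := by
    intro x hx
    have h1 : q x = ⟨x, hx⟩ := Submodule.linearProjOfIsCompl_apply_left hI' ⟨x, hx⟩
    have h2 : q ((MulOpposite.op x) • (1 : E)) = (MulOpposite.op x) • q 1 := map_smul q _ _
    rw [show (MulOpposite.op x) • (1 : E) = x from one_mul x, h1] at h2
    have h3 := congrArg (Subtype.val) h2
    simp only [Submodule.coe_smul] at h3
    rw [show (MulOpposite.op x) • ((q 1 : Ia) : E) = g * x from rfl] at h3
    exact h3.symm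
  have hga : g * a = a := hgx a ⟨1, mul_one a⟩
  have hgIa : g ∈ Ia := (q 1).2
  -- g is an idempotent endomorphism with range N
  have hgg : g * g = g := hgx g hgIa
  have hrg : LinearMap.range (g : M →ₗ[Rᵐᵒᵖ] M) = N := by
    apply le_antisymm
    · obtain ⟨t, ht⟩ := hgIa
      rintro x ⟨m, rfl⟩
      rw [← hrange]
      exact ⟨t m, by rw [← Module.End.mul_apply, show a * t = g from ht]⟩
    · rw [← hrange]
      rintro x ⟨m, rfl⟩
      exact ⟨a m, by rw [← Module.End.mul_apply, hga]⟩
  refine ⟨LinearMap.ker (g : M →ₗ[Rᵐᵒᵖ] M), ?_⟩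
  rw [← hrg]
  constructor
  · rw [disjoint_iff_inf_le]
    rintro x ⟨⟨m, rfl⟩, hk⟩
    have : g (g m) = 0 := hk
    rw [← Module.End.mul_apply, hgg] at this
    simp [this]
  · rw [codisjoint_iff_le_sup]
    intro m _
    have : m = g m + (m - g m) := by abel
    rw [this]
    refine Submodule.add_mem_sup ⟨m, rfl⟩ ?_
    simp only [LinearMap.mem_ker, map_sub]
    rw [← Module.End.mul_apply, hgg, sub_self]
end

section
/- For a ring R and an infinite set Λ, the direct sum R^(Λ) of card(Λ) copies of R as a right R-module is a C2 module if and only if the column-finite Λ×Λ matrix ring CFM_Λ(R) is a right C2 ring. -/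
open MulOpposite

/-- The column-finite `Λ × Λ` matrix ring over `R`: a matrix is given by its family of
columns, each column an element of the direct sum `Λ →₀ R` (so each column has finite
support).  The entry in row `i`, column `j` of `A` is `A j i`. -/
def CFM (Λ : Type*) (R : Type*) [Ring R] : Type _ := Λ → (Λ →₀ R)

namespace CFM

variable {Λ : Type*} {R : Type*} [Ring R]

private lemma op_smul_single (c : R) (k : Λ) :
    op c • Finsupp.single k (1 : R) = Finsupp.single k c := by
  ext j
  simp [Finsupp.single_apply, ite_mul]

/-- Column-finite matrices are in bijection with endomorphisms of the right `R`-module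
`R^(Λ)`, a matrix acting on column vectors in the usual way
`(A · x) i = ∑ k, A i k * x k`. -/
noncomputable def equivEnd (Λ : Type*) (R : Type*) [Ring R] :
    CFM Λ R ≃ Module.End Rᵐᵒᵖ (Λ →₀ R) where
  toFun A :=
    { toFun := fun x => x.sum fun k c => op c • A k
      map_add' := fun x y => Finsupp.sum_add_index' (fun k => by simp)
        (fun k c₁ c₂ => by rw [op_add, add_smul])
      map_smul' := fun s x => by
        rw [Finsupp.sum_smul_index' (fun i => by simp), Finsupp.smul_sum]
        exact Finsupp.sum_congr fun k _ => by
          rw [RingHom.id_apply, MulOpposite.smul_eq_mul_unop, op_mul, op_unop, mul_smul] }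
  invFun φ := fun j => φ (Finsupp.single j 1)
  left_inv A := by
    funext j
    simp only [LinearMap.coe_mk, AddHom.coe_mk]
    rw [Finsupp.sum_single_index (by simp)]
    simp
  right_inv φ := by
    apply LinearMap.ext
    intro x
    simp only [LinearMap.coe_mk, AddHom.coe_mk]
    rw [show (x.sum fun k c => op c • φ (Finsupp.single k 1)) =
        φ (x.sum fun k c => op c • Finsupp.single k 1) by
      rw [map_finsuppSum]
      exact Finsupp.sum_congr fun k _ => (map_smul φ _ _).symm]
    congr 1
    conv_rhs => rw [← Finsupp.sum_single x]
    exact Finsupp.sum_congr fun k _ => op_smul_single _ _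

/-- The ring structure on column-finite matrices; multiplication corresponds to matrix
multiplication `(A * B) i j = ∑ k, A i k * B k j` (composition of the associated
endomorphisms). -/
noncomputable instance : Ring (CFM Λ R) := (equivEnd Λ R).ring

end CFM

section RightC2

variable {S : Type*} [Ring S]

/-- Left multiplication by `a` as an `Sᵐᵒᵖ`-linear endomorphism of `S`. -/
def mulL (a : S) : S →ₗ[Sᵐᵒᵖ] S where
  toFun x := a * x
  map_add' := mul_add a
  map_smul' r x := by
    simp only [MulOpposite.smul_eq_mul_unop, RingHom.id_apply, mul_assoc]

@[simp] lemma mulL_apply (a x : S) : mulL a x = a * x := rfl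

/-- For an idempotent endomorphism, the range and the range of `1 - φ` are complements. -/
lemma isCompl_range_of_idem {A M : Type*} [Ring A] [AddCommGroup M] [Module A M]
    (φ : M →ₗ[A] M) (h : φ ∘ₗ φ = φ) :
    IsCompl (LinearMap.range φ) (LinearMap.range (LinearMap.id - φ)) := by
  constructor
  · rw [disjoint_iff_inf_le]
    rintro x ⟨⟨u, hu⟩, v, hv⟩
    have h1 : φ x = x := by
      rw [← hu, ← LinearMap.comp_apply, h]
    have h2 : φ x = 0 := by
      rw [← hv]
      simp only [LinearMap.sub_apply, LinearMap.id_apply, map_sub]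
      rw [← LinearMap.comp_apply φ φ v, h, sub_self]
    rw [Submodule.mem_bot, ← h1, h2]
  · rw [codisjoint_iff_le_sup]
    intro x _
    exact Submodule.mem_sup.2 ⟨φ x, ⟨x, rfl⟩, x - φ x,
      ⟨x, by simp⟩, by abel⟩

/-- A direct summand of `S` as a right `S`-module is generated by an idempotent. -/
lemma exists_idem_of_isCompl {K K' : Submodule Sᵐᵒᵖ S} (h : IsCompl K K') :
    ∃ e : S, e * e = e ∧ K = LinearMap.range (mulL e) := by
  have h1 : (1 : S) ∈ K ⊔ K' := by rw [h.sup_eq_top]; trivial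
  obtain ⟨f, hf, c, hc, hfc⟩ := Submodule.mem_sup.1 h1
  have key : ∀ x ∈ K, f * x = x := by
    intro x hx
    have hxeq : x = f * x + c * x := by
      calc x = (f + c) * x := by rw [hfc, one_mul]
        _ = f * x + c * x := add_mul f c x
    have hfx : f * x ∈ K := by
      rw [← op_smul_eq_mul]; exact K.smul_mem _ hf
    have hcx : c * x ∈ K' := by
      rw [← op_smul_eq_mul]; exact K'.smul_mem _ hc
    have hsub : c * x ∈ K := by
      have hce : c * x = x - f * x := eq_sub_of_add_eq' hxeq.symm
      rw [hce]; exact K.sub_mem hx hfx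
    have hc0 : c * x = 0 := by
      have := h.disjoint.le_bot (Submodule.mem_inf.2 ⟨hsub, hcx⟩)
      simpa using this
    rw [hc0, add_zero] at hxeq
    exact hxeq.symm
  refine ⟨f, key f hf, le_antisymm ?_ ?_⟩
  · intro x hx
    exact ⟨x, key x hx⟩
  · rintro x ⟨s, rfl⟩
    rw [mulL_apply, ← op_smul_eq_mul]
    exact K.smul_mem _ hf

/-- An elementwise characterization of being a right C2 ring. -/
def RightC2 (S : Type*) [Ring S] : Prop :=
  ∀ a e : S, e * e = e → a * e = a → (∀ s : S, a * (e * s) = 0 → e * s = 0) →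
    ∃ f : S, f * f = f ∧ ∀ x : S, (∃ s, x = a * s) ↔ (∃ s, x = f * s)

lemma mulL_comp_self {e : S} (he : e * e = e) : mulL e ∘ₗ mulL e = mulL e := by
  apply LinearMap.ext
  intro x
  simp only [LinearMap.comp_apply, mulL_apply, ← mul_assoc, he]

/-- From an isomorphism of a right ideal with `eS`, extract the element `a`. -/
lemma extract_a {e : S} (he : e * e = e) {N : Submodule Sᵐᵒᵖ S}
    (ψ : N ≃ₗ[Sᵐᵒᵖ] LinearMap.range (mulL e)) :
    ∃ a : S, a * e = a ∧ N = LinearMap.range (mulL a) ∧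
      (∀ s : S, a * (e * s) = 0 → e * s = 0) := by
  have heK : e ∈ LinearMap.range (mulL e) := ⟨1, mul_one e⟩
  set aN : N := ψ.symm ⟨e, heK⟩ with haN
  set a : S := (aN : S) with ha
  have hsmul : ∀ (w : S) (n : N), ((MulOpposite.op w • n : N) : S) = (n : S) * w :=
    fun w n => rfl
  have key : ∀ w : S, a * w = ((ψ.symm (MulOpposite.op w • ⟨e, heK⟩) : N) : S) := by
    intro w
    rw [map_smul]
    exact (hsmul w aN).symm
  have hfix : ∀ w ∈ LinearMap.range (mulL e), e * w = w := by
    rintro w ⟨s, rfl⟩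
    rw [mulL_apply, ← mul_assoc, he]
  have hae : a * e = a := by
    rw [key e]
    have h0 : (MulOpposite.op e • (⟨e, heK⟩ : LinearMap.range (mulL e))) = ⟨e, heK⟩ :=
      Subtype.ext (by simpa [op_smul_eq_mul] using he)
    rw [h0]
  refine ⟨a, hae, le_antisymm ?_ ?_, ?_⟩
  · intro n hn
    refine ⟨((ψ ⟨n, hn⟩ : _) : S), ?_⟩
    have hwmem := (ψ ⟨n, hn⟩).2
    have h1 : (MulOpposite.op ((ψ ⟨n, hn⟩ : _) : S) •
        (⟨e, heK⟩ : LinearMap.range (mulL e))) = ψ ⟨n, hn⟩ :=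
      Subtype.ext (by simpa [op_smul_eq_mul] using hfix _ hwmem)
    rw [mulL_apply, key, h1, LinearEquiv.symm_apply_apply]
  · rintro x ⟨s, rfl⟩
    rw [mulL_apply, ← op_smul_eq_mul]
    exact N.smul_mem _ aN.2
  · intro s hs
    have h1 : ((MulOpposite.op (e * s) • aN : N) : S) = 0 := by
      rw [hsmul, ← ha]; exact hs
    have h2 : (MulOpposite.op (e * s) • aN : N) = 0 := Subtype.ext h1
    rw [haN, ← map_smul] at h2
    have h3 : (MulOpposite.op (e * s) • (⟨e, heK⟩ : LinearMap.range (mulL e))) = 0 := by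
      have := congrArg ψ h2
      simpa using this
    have h4 := congrArg Subtype.val h3
    simp only [SetLike.val_smul, op_smul_eq_mul, ZeroMemClass.coe_zero] at h4
    rw [← mul_assoc, he] at h4
    exact h4

/-- Converse: from `a` with the conditions, build an isomorphism `eS ≃ aS`. -/
noncomputable def buildIso {e a : S} (he : e * e = e) (hae : a * e = a)
    (hann : ∀ s : S, a * (e * s) = 0 → e * s = 0) :
    LinearMap.range (mulL e) ≃ₗ[Sᵐᵒᵖ] LinearMap.range (mulL a) := by
  refine LinearEquiv.ofBijective
    (LinearMap.codRestrict _ ((mulL a) ∘ₗ (LinearMap.range (mulL e)).subtype)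
      (fun c => LinearMap.mem_range_self (mulL a) (c : S))) ⟨?_, ?_⟩
  · intro x y hxy
    obtain ⟨s, hs⟩ := x.2
    obtain ⟨t, ht⟩ := y.2
    rw [mulL_apply] at hs ht
    have h1 : a * (x : S) = a * (y : S) := congrArg Subtype.val hxy
    have h3 : e * (s - t) = 0 := by
      apply hann
      rw [mul_sub, mul_sub, hs, ht, h1, sub_self]
    rw [mul_sub] at h3
    have h4 := sub_eq_zero.1 h3
    apply Subtype.ext
    rw [← hs, ← ht]
    exact h4
  · rintro ⟨y, s, rfl⟩
    refine ⟨⟨e * s, s, rfl⟩, Subtype.ext ?_⟩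
    simp only [LinearMap.codRestrict_apply, LinearMap.comp_apply, Submodule.subtype_apply,
      mulL_apply]
    show a * (e * s) = a * s
    rw [← mul_assoc, hae]

theorem isC2Module_iff_rightC2 : IsC2Module Sᵐᵒᵖ S ↔ RightC2 S := by
  constructor
  · intro h a e he hae hann
    obtain ⟨N', hN'⟩ := h (LinearMap.range (mulL a)) (LinearMap.range (mulL e))
      ⟨_, isCompl_range_of_idem (mulL e) (mulL_comp_self he)⟩
      ⟨(buildIso he hae hann).symm⟩
    obtain ⟨f, hf, hNf⟩ := exists_idem_of_isCompl hN'
    refine ⟨f, hf, fun x => ?_⟩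
    constructor
    · rintro ⟨s, rfl⟩
      have hm : a * s ∈ LinearMap.range (mulL f) := hNf ▸ ⟨s, rfl⟩
      obtain ⟨t, ht⟩ := hm
      exact ⟨t, ht.symm⟩
    · rintro ⟨s, rfl⟩
      have hm : f * s ∈ LinearMap.range (mulL a) := by
        rw [hNf]; exact ⟨s, rfl⟩
      obtain ⟨t, ht⟩ := hm
      exact ⟨t, ht.symm⟩
  · intro h N K hKc hψ
    obtain ⟨K', hK⟩ := hKc
    obtain ⟨e, he, rfl⟩ := exists_idem_of_isCompl hK
    obtain ⟨ψ⟩ := hψ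
    obtain ⟨a, hae, hNa, hann⟩ := extract_a he ψ
    obtain ⟨f, hf, hiff⟩ := h a e he hae hann
    have hNf : N = LinearMap.range (mulL f) := by
      rw [hNa]
      ext x
      constructor
      · rintro ⟨s, rfl⟩
        obtain ⟨t, ht⟩ := (hiff (a * s)).1 ⟨s, rfl⟩
        exact ⟨t, ht.symm⟩
      · rintro ⟨s, rfl⟩
        obtain ⟨t, ht⟩ := (hiff (f * s)).2 ⟨s, rfl⟩
        exact ⟨t, ht.symm⟩
    refine ⟨LinearMap.range (LinearMap.id - mulL f), ?_⟩
    rw [hNf]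
    exact isCompl_range_of_idem (mulL f) (mulL_comp_self hf)

lemma RightC2.congr {A B : Type*} [Ring A] [Ring B] (φ : A ≃+* B) (h : RightC2 A) :
    RightC2 B := by
  intro a e he hae hann
  obtain ⟨f, hf, hiff⟩ := h (φ.symm a) (φ.symm e)
    (by rw [← map_mul, he]) (by rw [← map_mul, hae])
    (fun s hs => by
      have h0 : a * (e * φ s) = 0 := by
        have := congrArg φ hs
        simpa [map_mul] using this
      have h2 := hann (φ s) h0
      apply φ.injective
      simpa [map_mul] using h2)
  refine ⟨φ f, by rw [← map_mul, hf], fun x => ?_⟩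
  constructor
  · rintro ⟨s, rfl⟩
    obtain ⟨t, ht⟩ := (hiff (φ.symm (a * s))).1 ⟨φ.symm s, by rw [map_mul]⟩
    refine ⟨φ t, ?_⟩
    rw [← φ.apply_symm_apply (a * s), ht, map_mul]
  · rintro ⟨s, rfl⟩
    obtain ⟨t, ht⟩ := (hiff (φ.symm (φ f * s))).2 ⟨φ.symm s, by rw [map_mul, φ.symm_apply_apply]⟩
    refine ⟨φ t, ?_⟩
    rw [← φ.apply_symm_apply (φ f * s), ht, map_mul, φ.apply_symm_apply]

end RightC2

section ModuleSide

variable {R : Type*} [Ring R] {Λ : Type*}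

/-- The "scaling towards `x`" endomorphism: `v ↦ op (v j0) • x`. -/
noncomputable def scaleTo (j0 : Λ) (x : Λ →₀ R) : Module.End Rᵐᵒᵖ (Λ →₀ R) where
  toFun v := op (v j0) • x
  map_add' v w := by
    simp only [Finsupp.add_apply, op_add, add_smul]
  map_smul' r v := by
    simp only [Finsupp.smul_apply, RingHom.id_apply]
    rw [MulOpposite.smul_eq_mul_unop, op_mul, op_unop, mul_smul]

lemma scaleTo_apply (j0 : Λ) (x v : Λ →₀ R) : scaleTo j0 x v = op (v j0) • x := rfl

/-- Injectivity trick: the annihilator condition makes `a` injective on the range of `e`. -/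
lemma inj_on_range [Nonempty Λ] {a e : Module.End Rᵐᵒᵖ (Λ →₀ R)} (he : e * e = e)
    (hann : ∀ s, a * (e * s) = 0 → e * s = 0)
    (x : Λ →₀ R) (hx : x ∈ LinearMap.range e) (hax : a x = 0) : x = 0 := by
  obtain ⟨j0⟩ := ‹Nonempty Λ›
  have hex : e x = x := by
    obtain ⟨m, rfl⟩ := hx
    rw [← Module.End.mul_apply, he]
  have h0 : a * (e * scaleTo j0 x) = 0 := by
    apply LinearMap.ext
    intro v
    rw [Module.End.mul_apply, Module.End.mul_apply, scaleTo_apply, map_smul, hex, map_smul,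
      hax, smul_zero, LinearMap.zero_apply]
  have h1 := hann _ h0
  have h2 := congrArg (fun φ : Module.End Rᵐᵒᵖ (Λ →₀ R) => φ (Finsupp.single j0 1)) h1
  simp only [Module.End.mul_apply, LinearMap.zero_apply, scaleTo_apply,
    Finsupp.single_eq_same, op_one, one_smul, hex] at h2
  exact h2

theorem isC2Module_iff_rightC2_end [Nonempty Λ] :
    IsC2Module Rᵐᵒᵖ (Λ →₀ R) ↔ RightC2 (Module.End Rᵐᵒᵖ (Λ →₀ R)) := by
  constructor
  · intro h a e he hae hann
    have hsub : ∀ c : LinearMap.range e, a (c : Λ →₀ R) ∈ LinearMap.range a :=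
      fun c => LinearMap.mem_range_self a (c : Λ →₀ R)
    set φ : LinearMap.range e →ₗ[Rᵐᵒᵖ] LinearMap.range a :=
      LinearMap.codRestrict _ (a ∘ₗ (LinearMap.range e).subtype) hsub with hφ
    have hbij : Function.Bijective φ := by
      constructor
      · intro x y hxy
        have h1 : a ((x : Λ →₀ R) - (y : Λ →₀ R)) = 0 := by
          rw [map_sub, sub_eq_zero]
          exact congrArg Subtype.val hxy
        have h2 : (x : Λ →₀ R) - (y : Λ →₀ R) ∈ LinearMap.range e :=
          Submodule.sub_mem _ x.2 y.2
        have h3 := inj_on_range he hann _ h2 h1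
        exact Subtype.ext (sub_eq_zero.1 h3)
      · rintro ⟨y, m, rfl⟩
        refine ⟨⟨e m, m, rfl⟩, Subtype.ext ?_⟩
        show a (e m) = a m
        rw [← Module.End.mul_apply, hae]
    set ψ : LinearMap.range e ≃ₗ[Rᵐᵒᵖ] LinearMap.range a := LinearEquiv.ofBijective φ hbij
      with hψ
    obtain ⟨X, hX⟩ := h (LinearMap.range a) (LinearMap.range e)
      ⟨_, isCompl_range_of_idem e (by rw [← Module.End.mul_eq_comp, he])⟩ ⟨ψ.symm⟩
    set p := Submodule.linearProjOfIsCompl _ _ hX with hp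
    set f : Module.End Rᵐᵒᵖ (Λ →₀ R) := (LinearMap.range a).subtype ∘ₗ p with hfdef
    have hfval : ∀ m : Λ →₀ R, f m = (p m : Λ →₀ R) := fun m => rfl
    have hfleft : ∀ y : LinearMap.range a, f (y : Λ →₀ R) = (y : Λ →₀ R) := by
      intro y
      rw [hfval]; exact congrArg Subtype.val (Submodule.linearProjOfIsCompl_apply_left hX y)
    have hff : f * f = f := by
      apply LinearMap.ext
      intro m
      rw [Module.End.mul_apply, hfval m, hfleft (p m)]
    have hfa : f * a = a := by
      apply LinearMap.ext
      intro m
      rw [Module.End.mul_apply]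
      exact hfleft ⟨a m, LinearMap.mem_range_self a m⟩
    set g : Module.End Rᵐᵒᵖ (Λ →₀ R) :=
      (LinearMap.range e).subtype ∘ₗ
        (ψ.symm : LinearMap.range a →ₗ[Rᵐᵒᵖ] LinearMap.range e) ∘ₗ p with hg
    have hag : a * g = f := by
      apply LinearMap.ext
      intro m
      rw [Module.End.mul_apply]
      show a ((ψ.symm (p m) : Λ →₀ R)) = f m
      have h4 : a ((ψ.symm (p m) : Λ →₀ R)) =
          ((ψ (ψ.symm (p m)) : LinearMap.range a) : Λ →₀ R) := by
        rw [hψ, LinearEquiv.ofBijective_apply]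
        rfl
      rw [h4, LinearEquiv.apply_symm_apply, hfval]
    refine ⟨f, hff, fun x => ?_⟩
    constructor
    · rintro ⟨s, rfl⟩
      exact ⟨a * s, by rw [← mul_assoc, hfa]⟩
    · rintro ⟨s, rfl⟩
      exact ⟨g * s, by rw [← mul_assoc, hag]⟩
  · intro h N K hKc hψ
    obtain ⟨K', hK⟩ := hKc
    obtain ⟨ψ⟩ := hψ
    set pK := Submodule.linearProjOfIsCompl _ _ hK with hpK
    set e : Module.End Rᵐᵒᵖ (Λ →₀ R) := K.subtype ∘ₗ pK with he0
    have heval : ∀ m : Λ →₀ R, e m = (pK m : Λ →₀ R) := fun m => rfl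
    have hK0 : ∀ k : K, pK (k : Λ →₀ R) = k :=
      fun k => Submodule.linearProjOfIsCompl_apply_left hK k
    set a : Module.End Rᵐᵒᵖ (Λ →₀ R) :=
      N.subtype ∘ₗ (ψ.symm : K →ₗ[Rᵐᵒᵖ] N) ∘ₗ pK with ha0
    have haval : ∀ m : Λ →₀ R, a m = ((ψ.symm (pK m) : N) : Λ →₀ R) := fun m => rfl
    have he : e * e = e := by
      apply LinearMap.ext
      intro m
      rw [Module.End.mul_apply, heval m, heval, hK0]
    have hae : a * e = a := by
      apply LinearMap.ext
      intro m
      rw [Module.End.mul_apply, heval m, haval, haval, hK0]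
    have hann : ∀ s, a * (e * s) = 0 → e * s = 0 := by
      intro s h0
      apply LinearMap.ext
      intro m
      have h1 : a (e (s m)) = 0 := by
        have := congrArg (fun φ : Module.End Rᵐᵒᵖ (Λ →₀ R) => φ m) h0
        simpa [Module.End.mul_apply] using this
      rw [haval, heval (s m), hK0] at h1
      have h3 : pK (s m) = 0 := by
        have h2 : (ψ.symm (pK (s m)) : N) = 0 := Subtype.ext h1
        exact (map_eq_zero_iff _ ψ.symm.injective).1 h2
      rw [Module.End.mul_apply, LinearMap.zero_apply, heval, h3, ZeroMemClass.coe_zero]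
    obtain ⟨f, hff, hiff⟩ := h a e he hae hann
    have hNa : N = LinearMap.range a := by
      apply le_antisymm
      · intro x hx
        refine ⟨((ψ ⟨x, hx⟩ : K) : Λ →₀ R), ?_⟩
        rw [haval, hK0, LinearEquiv.symm_apply_apply]
      · rintro x ⟨m, rfl⟩
        rw [haval]
        exact (ψ.symm (pK m) : N).2
    obtain ⟨s0, hs0⟩ := (hiff f).2 ⟨1, (mul_one f).symm⟩
    obtain ⟨t0, ht0⟩ := (hiff a).1 ⟨1, (mul_one a).symm⟩
    have hrange : LinearMap.range a = LinearMap.range f := by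
      apply le_antisymm
      · rintro x ⟨m, rfl⟩
        exact ⟨t0 m, by rw [ht0]; rfl⟩
      · rintro x ⟨m, rfl⟩
        exact ⟨s0 m, by rw [hs0]; rfl⟩
    refine ⟨LinearMap.range (LinearMap.id - f), ?_⟩
    rw [hNa, hrange]
    exact isCompl_range_of_idem f (by rw [← Module.End.mul_eq_comp, hff])

end ModuleSide

/-- For an infinite set `Λ`, the right `R`-module `R^(Λ)` is a C2 module iff the
column-finite matrix ring `CFM_Λ(R)` is a right C2 ring. -/
theorem c2_free_iff_cfm_c2 (R : Type*) [Ring R] (Λ : Type*) [Infinite Λ] :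
    IsC2Module Rᵐᵒᵖ (Λ →₀ R) ↔ IsC2Module (CFM Λ R)ᵐᵒᵖ (CFM Λ R) := by
  have hne : Nonempty Λ := inferInstance
  have φ : CFM Λ R ≃+* Module.End Rᵐᵒᵖ (Λ →₀ R) := (CFM.equivEnd Λ R).ringEquiv
  rw [isC2Module_iff_rightC2_end, isC2Module_iff_rightC2]
  exact ⟨RightC2.congr φ.symm, RightC2.congr φ⟩
end

section
/- If R is a right countably Σ-C2 ring, then the n×n matrix ring M_n(R) is a right countably Σ-C2 ring for each n ≥ 1. -/
open MulOpposite Finsupp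

namespace C2Aux

variable {R : Type*} [Ring R] {n : ℕ} [NeZero n]

local notation "S" => Matrix (Fin n) (Fin n) R
noncomputable def σe (n : ℕ) [NeZero n] : ℕ ≃ ℕ × Fin n := Nat.divModEquiv n

lemma finsuppProdEquiv_symm_apply {α β M : Type*} [AddCommMonoid M] (g : α →₀ β →₀ M) (a : α) (b : β) :
    (Finsupp.finsuppProdEquiv.symm g) (a, b) = g a b := by
  have h1 := Finsupp.curry_apply (Finsupp.finsuppProdEquiv.symm g) a b
  have h2 : Finsupp.finsuppProdEquiv (Finsupp.finsuppProdEquiv.symm g) = g :=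
    Equiv.apply_symm_apply _ _
  rw [show (Finsupp.finsuppProdEquiv.symm g).curry = g from h2] at h1
  rw [← h1]

/-- matrix unit -/
def Emat (j l : Fin n) : S := Matrix.of fun a b => if a = j ∧ b = l then (1:R) else 0

lemma mul_Emat (A : S) (j l a b : Fin n) :
    (A * Emat j l : S) a b = if b = l then A a j else 0 := by
  rw [Matrix.mul_apply]
  rw [Finset.sum_eq_single j]
  · by_cases h : b = l <;> simp [Emat, h]
  · intro m _ hm; simp [Emat, hm]
  · simp

/-- embed column vectors as column-0 supported matrices -/
def colIn : (Fin n →₀ R) →+ S where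
  toFun v := Matrix.of fun i j => if j = 0 then v i else 0
  map_zero' := by ext i j; simp
  map_add' a b := by ext i j; by_cases h : j = 0 <;> simp [h, Matrix.add_apply]

lemma colIn_apply (v : Fin n →₀ R) (i j : Fin n) :
    colIn v i j = if j = 0 then v i else 0 := rfl

/-- read off column j -/
noncomputable def colOut (j : Fin n) : S →+ (Fin n →₀ R) where
  toFun A := Finsupp.equivFunOnFinite.symm fun i => A i j
  map_zero' := by ext i; simp
  map_add' a b := by ext i; simp [Matrix.add_apply]

lemma colOut_apply (A : S) (j i : Fin n) : colOut j A i = A i j := rfl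

noncomputable def ι : (ℕ →₀ R) →+ (ℕ →₀ S) :=
  (Finsupp.mapRange.addMonoidHom (colIn)).comp
    (((Finsupp.finsuppProdLEquiv (α := ℕ) (β := Fin n) (M := R) ℕ).toAddEquiv.toAddMonoidHom).comp
      (Finsupp.domCongr (M := R) (σe n)).toAddMonoidHom)

lemma ι_apply (v : ℕ →₀ R) (k : ℕ) (i j : Fin n) :
    (ι v k) i j = if j = 0 then v ((σe n).symm (k, i)) else 0 := by
  simp only [ι, AddMonoidHom.comp_apply, AddEquiv.toAddMonoidHom_eq_coe, AddMonoidHom.coe_coe,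
    Finsupp.mapRange.addMonoidHom_apply, Finsupp.mapRange_apply, colIn_apply,
    Finsupp.domCongr_apply]
  congr 1

noncomputable def ρ (j : Fin n) : (ℕ →₀ S) →+ (ℕ →₀ R) :=
  ((Finsupp.domCongr (M := R) (σe n).symm).toAddMonoidHom).comp
    ((((Finsupp.finsuppProdLEquiv (α := ℕ) (β := Fin n) (M := R) ℕ).symm.toAddEquiv.toAddMonoidHom)).comp
      (Finsupp.mapRange.addMonoidHom (colOut j)))

lemma ρ_apply (x : ℕ →₀ S) (j : Fin n) (p : ℕ) :
    ρ j x p = (x ((σe n) p).1) ((σe n) p).2 j := by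
  simp only [ρ, AddMonoidHom.comp_apply, AddEquiv.toAddMonoidHom_eq_coe, AddMonoidHom.coe_coe,
    Finsupp.mapRange.addMonoidHom_apply, Finsupp.domCongr_apply, Finsupp.equivMapDomain_apply,
    Equiv.symm_symm]
  show Finsupp.finsuppProdEquiv.symm _ ((σe n) p) = _
  rw [show ((σe n) p) = (((σe n) p).1, ((σe n) p).2) from rfl, finsuppProdEquiv_symm_apply]
  simp [Finsupp.mapRange_apply, colOut_apply]

end C2Aux

namespace C2Aux

set_option linter.unusedSectionVars false

variable {R : Type*} [Ring R] {n : ℕ} [NeZero n]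

local notation "S" => Matrix (Fin n) (Fin n) R

lemma smulM_apply (s : S) (x : ℕ →₀ S) (k : ℕ) : ((op s : Sᵐᵒᵖ) • x) k = x k * s := by
  rw [Finsupp.smul_apply, op_smul_eq_mul]

lemma smulV_apply (r : R) (v : ℕ →₀ R) (p : ℕ) : ((op r : Rᵐᵒᵖ) • v) p = v p * r := by
  rw [Finsupp.smul_apply, op_smul_eq_mul]

lemma ι_ρ (x : ℕ →₀ S) (j : Fin n) : ι (ρ j x) = ((op (Emat j 0) : Sᵐᵒᵖ) • x : ℕ →₀ S) := by
  ext k i l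
  rw [ι_apply, smulM_apply, mul_Emat, ρ_apply]
  by_cases h : l = 0 <;> simp [h, Equiv.apply_symm_apply]

lemma ρ_ι (v : ℕ →₀ R) : ρ (n := n) 0 (ι v) = v := by
  ext p
  rw [ρ_apply, ι_apply]
  simp

lemma ι_smul (r : R) (v : ℕ →₀ R) :
    ι ((op r : Rᵐᵒᵖ) • v) = ((op (r • (1:S)) : Sᵐᵒᵖ) • ι v : ℕ →₀ S) := by
  ext k i l
  rw [ι_apply, smulM_apply, Matrix.mul_apply]
  rw [Finset.sum_eq_single l]
  · rw [ι_apply, smulV_apply]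
    by_cases h : l = 0 <;> simp [h, Matrix.one_apply]
  · intro m _ hm; simp [Matrix.one_apply, hm]
  · simp

lemma ρ0_scalar (r : R) (x : ℕ →₀ S) :
    ρ (n := n) 0 ((op (r • (1:S)) : Sᵐᵒᵖ) • x) = (op r : Rᵐᵒᵖ) • ρ 0 x := by
  ext p
  rw [ρ_apply, smulM_apply, smulV_apply, ρ_apply, Matrix.mul_apply]
  rw [Finset.sum_eq_single 0]
  · simp [Matrix.one_apply]
  · intro m _ hm; simp [Matrix.one_apply, hm]
  · simp

lemma ρ_smul (s : S) (j : Fin n) (x : ℕ →₀ S) :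
    ρ j ((op s : Sᵐᵒᵖ) • x) = ∑ m : Fin n, (op (s m j) : Rᵐᵒᵖ) • ρ m x := by
  ext p
  rw [ρ_apply, smulM_apply, Matrix.mul_apply, Finsupp.finset_sum_apply]
  exact Finset.sum_congr rfl fun m _ => by rw [smulV_apply, ρ_apply]

lemma decomp (x : ℕ →₀ S) :
    x = ∑ j : Fin n, (op (Emat 0 j) : Sᵐᵒᵖ) • ι (ρ j x) := by
  ext k i l
  rw [Finsupp.finset_sum_apply, Matrix.sum_apply]
  rw [Finset.sum_eq_single l]
  · rw [smulM_apply, mul_Emat, ι_apply]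
    simp [Equiv.apply_symm_apply, ρ_apply]
  · intro m _ hm; rw [smulM_apply, mul_Emat]; simp [Ne.symm hm]
  · simp

end C2Aux

namespace C2Aux

set_option linter.unusedSectionVars false

variable {R : Type*} [Ring R] {n : ℕ} [NeZero n]

local notation "S" => Matrix (Fin n) (Fin n) R

noncomputable def Fsub (N : Submodule Sᵐᵒᵖ (ℕ →₀ S)) : Submodule Rᵐᵒᵖ (ℕ →₀ R) where
  carrier := {v | ι v ∈ N}
  add_mem' {a b} ha hb := by
    show ι (a + b) ∈ N
    rw [map_add]; exact N.add_mem ha hb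
  zero_mem' := by show ι 0 ∈ N; rw [map_zero]; exact N.zero_mem
  smul_mem' c v hv := by
    show ι (c • v) ∈ N
    rw [show c = op c.unop from rfl, ι_smul]
    exact N.smul_mem _ hv

lemma mem_Fsub {N : Submodule Sᵐᵒᵖ (ℕ →₀ S)} {v : ℕ →₀ R} : v ∈ Fsub N ↔ ι v ∈ N :=
  Iff.rfl

noncomputable def Gsub (P : Submodule Rᵐᵒᵖ (ℕ →₀ R)) : Submodule Sᵐᵒᵖ (ℕ →₀ S) :=
  Submodule.span Sᵐᵒᵖ (ι '' (P : Set (ℕ →₀ R)))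

lemma GF (N : Submodule Sᵐᵒᵖ (ℕ →₀ S)) : Gsub (Fsub N) = N := by
  apply le_antisymm
  · exact Submodule.span_le.mpr (by rintro x ⟨v, hv, rfl⟩; exact hv)
  · intro x hx
    rw [decomp x]
    refine Submodule.sum_mem _ fun j _ => Submodule.smul_mem _ _ ?_
    refine Submodule.subset_span ⟨ρ j x, ?_, rfl⟩
    show ι (ρ j x) ∈ N
    rw [ι_ρ]
    exact N.smul_mem _ hx

lemma FG (P : Submodule Rᵐᵒᵖ (ℕ →₀ R)) : Fsub (Gsub (n := n) P) = P := by
  apply le_antisymm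
  · intro v hv
    rw [mem_Fsub] at hv
    have key : ∀ (x : ℕ →₀ S), x ∈ Gsub P → ∀ j, ρ j x ∈ P := by
      intro x hx
      refine Submodule.span_induction (p := fun x _ => ∀ j, ρ j x ∈ P) ?_ ?_ ?_ ?_ hx
      · rintro y ⟨w, hw, rfl⟩ j
        by_cases hj : j = (0 : Fin n)
        · subst hj; rw [ρ_ι]; exact hw
        · have : ρ j (ι w) = 0 := by
            ext p
            rw [ρ_apply, ι_apply]
            simp [hj]
          rw [this]; exact P.zero_mem
      · intro j; rw [map_zero]; exact P.zero_mem
      · intro y z _ _ hy hz j; rw [map_add]; exact P.add_mem (hy j) (hz j)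
      · intro c y _ hy j
        rw [show c = op c.unop from rfl, ρ_smul]
        exact Submodule.sum_mem _ fun m _ => P.smul_mem _ (hy m)
    have := key (ι v) hv 0
    rwa [ρ_ι] at this
  · intro v hv
    rw [mem_Fsub]
    exact Submodule.subset_span ⟨v, hv, rfl⟩

noncomputable def subIso : Submodule Sᵐᵒᵖ (ℕ →₀ S) ≃o Submodule Rᵐᵒᵖ (ℕ →₀ R) where
  toFun := Fsub
  invFun := Gsub
  left_inv := GF
  right_inv := FG
  map_rel_iff' {a b} := by
    constructor
    · intro h
      have h2 : Gsub (n := n) (Fsub a) ≤ Gsub (n := n) (Fsub b) :=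
        Submodule.span_mono (Set.image_mono h)
      rwa [GF, GF] at h2
    · intro h v hv
      exact h hv

end C2Aux

namespace C2Aux

set_option linter.unusedSectionVars false

variable {R : Type*} [Ring R] {n : ℕ} [NeZero n]

local notation "S" => Matrix (Fin n) (Fin n) R

lemma colfix {N K : Submodule Sᵐᵒᵖ (ℕ →₀ S)} (g : N →ₗ[Sᵐᵒᵖ] K) (v : ℕ →₀ R) (hv : ι v ∈ N) :
    ι (ρ 0 ((g ⟨ι v, hv⟩ : K) : ℕ →₀ S)) = ((g ⟨ι v, hv⟩ : K) : ℕ →₀ S) := by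
  rw [ι_ρ]
  have h1 : (op (Emat (n := n) 0 0) : Sᵐᵒᵖ) • (⟨ι v, hv⟩ : N) = ⟨ι v, hv⟩ := by
    apply Subtype.ext
    show (op (Emat 0 0) : Sᵐᵒᵖ) • ι v = ι v
    rw [← ι_ρ, ρ_ι]
  calc (op (Emat 0 0) : Sᵐᵒᵖ) • ((g ⟨ι v, hv⟩ : K) : ℕ →₀ S)
      = ((op (Emat 0 0) • g ⟨ι v, hv⟩ : K) : ℕ →₀ S) := rfl
    _ = ((g ((op (Emat 0 0) : Sᵐᵒᵖ) • ⟨ι v, hv⟩) : K) : ℕ →₀ S) := by rw [map_smul]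
    _ = _ := by rw [h1]

noncomputable def hmap {N K : Submodule Sᵐᵒᵖ (ℕ →₀ S)} (g : N →ₗ[Sᵐᵒᵖ] K) :
    Fsub N →ₗ[Rᵐᵒᵖ] Fsub K where
  toFun v := ⟨ρ 0 ((g ⟨ι v.1, v.2⟩ : K) : ℕ →₀ S), by
    rw [mem_Fsub, colfix g v.1 v.2]; exact (g ⟨ι v.1, v.2⟩).2⟩
  map_add' a b := by
    apply Subtype.ext
    show ρ 0 ((g ⟨ι (a.1 + b.1), _⟩ : K) : ℕ →₀ S)
        = ρ 0 ((g ⟨ι a.1, a.2⟩ : K) : ℕ →₀ S) + ρ 0 ((g ⟨ι b.1, b.2⟩ : K) : ℕ →₀ S)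
    have h1 : (⟨ι (a.1 + b.1), (a + b).2⟩ : N) = ⟨ι a.1, a.2⟩ + ⟨ι b.1, b.2⟩ :=
      Subtype.ext (map_add ι _ _)
    rw [h1, map_add, Submodule.coe_add, map_add]
  map_smul' c v := by
    apply Subtype.ext
    show ρ 0 ((g ⟨ι (c • v.1), _⟩ : K) : ℕ →₀ S)
        = c • ρ 0 ((g ⟨ι v.1, v.2⟩ : K) : ℕ →₀ S)
    have h1 : (⟨ι (c • v.1), (c • v).2⟩ : N)
        = (op (c.unop • (1:S)) : Sᵐᵒᵖ) • ⟨ι v.1, v.2⟩ := by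
      apply Subtype.ext
      show ι (c • v.1) = (op (c.unop • (1:S)) : Sᵐᵒᵖ) • ι v.1
      conv_lhs => rw [show c = op c.unop from rfl]
      rw [ι_smul]
    rw [h1, map_smul]
    show ρ 0 ((op (c.unop • (1:S)) : Sᵐᵒᵖ) • ((g ⟨ι v.1, v.2⟩ : K) : ℕ →₀ S)) = _
    rw [ρ0_scalar]
    rfl

lemma hmap_apply {N K : Submodule Sᵐᵒᵖ (ℕ →₀ S)} (g : N →ₗ[Sᵐᵒᵖ] K) (v : Fsub N) :
    (hmap g v : ℕ →₀ R) = ρ 0 ((g ⟨ι v.1, v.2⟩ : K) : ℕ →₀ S) := rfl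

lemma hmap_cancel {N K : Submodule Sᵐᵒᵖ (ℕ →₀ S)} (g : N ≃ₗ[Sᵐᵒᵖ] K) (w : Fsub K) :
    hmap g.toLinearMap (hmap g.symm.toLinearMap w) = w := by
  apply Subtype.ext
  rw [hmap_apply]
  have h3 : (⟨ι ((hmap g.symm.toLinearMap w).1), (hmap g.symm.toLinearMap w).2⟩ : N)
      = g.symm ⟨ι w.1, w.2⟩ := by
    apply Subtype.ext
    exact colfix g.symm.toLinearMap w.1 w.2
  rw [h3]
  show ρ 0 (((g (g.symm ⟨ι w.1, w.2⟩) : K)) : ℕ →₀ S) = w.1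
  rw [g.apply_symm_apply]
  exact ρ_ι w.1

noncomputable def isoTransfer {N K : Submodule Sᵐᵒᵖ (ℕ →₀ S)} (g : N ≃ₗ[Sᵐᵒᵖ] K) :
    (Fsub N ≃ₗ[Rᵐᵒᵖ] Fsub K) :=
  LinearEquiv.ofLinear (hmap g.toLinearMap) (hmap g.symm.toLinearMap)
    (LinearMap.ext fun w => hmap_cancel g w)
    (LinearMap.ext fun w => by
      have := hmap_cancel g.symm w
      rwa [LinearEquiv.symm_symm] at this)

theorem transfer (h : IsC2Module Rᵐᵒᵖ (ℕ →₀ R)) : IsC2Module Sᵐᵒᵖ (ℕ →₀ S) := by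
  intro N K hK hNK
  obtain ⟨K', hK'⟩ := hK
  obtain ⟨g⟩ := hNK
  obtain ⟨P, hP⟩ := h (Fsub N) (Fsub K)
    ⟨Fsub K', (subIso (R := R) (n := n)).isCompl hK'⟩ ⟨isoTransfer g⟩
  refine ⟨Gsub P, ?_⟩
  have h2 := (subIso (R := R) (n := n)).symm.isCompl hP
  have e1 : (subIso (R := R) (n := n)).symm (Fsub N) = N := GF N
  have e2 : (subIso (R := R) (n := n)).symm P = Gsub P := rfl
  rwa [e1, e2] at h2

end C2Aux


/-- If `R` is a right countably Σ-C2 ring, then `Mₙ(R)` is a right countably Σ-C2 ring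
for each `n ≥ 1`. -/
theorem matrixRing_countablySigmaC2 (R : Type*) [Ring R]
    (h : IsC2Module Rᵐᵒᵖ (ℕ →₀ R)) (n : ℕ) (hn : 1 ≤ n) :
    IsC2Module (Matrix (Fin n) (Fin n) R)ᵐᵒᵖ (ℕ →₀ Matrix (Fin n) (Fin n) R) := by
  haveI : NeZero n := ⟨by omega⟩
  exact C2Aux.transfer h
end

section
/- If R is a right countably Σ-C2 ring, e² = e ∈ R, and ReR = R, then eRe is a right countably Σ-C2 ring. -/
/-- `eRe` as a non-unital subring of `R`: the elements `x` with `e * x = x = x * e`. -/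
def cornerSubring {R : Type*} [Ring R] (e : R) : NonUnitalSubring R where
  carrier := {x | e * x = x ∧ x * e = x}
  zero_mem' := by simp
  add_mem' := fun {a b} ha hb => by
    constructor
    · rw [mul_add, ha.1, hb.1]
    · rw [add_mul, ha.2, hb.2]
  neg_mem' := fun {a} ha => by
    constructor
    · rw [mul_neg, ha.1]
    · rw [neg_mul, ha.2]
  mul_mem' := fun {a b} ha hb => by
    constructor
    · rw [← mul_assoc, ha.1]
    · rw [mul_assoc, hb.2]

/-- When `e` is idempotent, the corner `eRe` is a ring with identity `e`. -/
@[reducible]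
def cornerRing {R : Type*} [Ring R] {e : R} (he : e * e = e) : Ring (cornerSubring e) :=
  { (inferInstance : NonUnitalRing (cornerSubring e)) with
    one := ⟨e, he, he⟩
    one_mul := fun x => Subtype.ext x.2.1
    mul_one := fun x => Subtype.ext x.2.2 }

open MulOpposite

namespace CornerC2

variable {R : Type*} [Ring R] {e : R} (he : e * e = e)

/-- the compression `r ↦ e*r*e` into the corner -/
def toC (r : R) : cornerSubring e :=
  ⟨e * r * e, by rw [← mul_assoc, ← mul_assoc, he], by rw [mul_assoc, mul_assoc, he, ← mul_assoc]⟩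

@[simp] lemma toC_val (r : R) : (toC he r : R) = e * r * e := rfl

/-- inclusion of the corner into `R` as an additive hom -/
def svalHom (e : R) : cornerSubring e →+ R :=
  { toFun := Subtype.val, map_zero' := rfl, map_add' := fun _ _ => rfl }

/-- the compression as an additive hom -/
def toCHom : R →+ cornerSubring e :=
  { toFun := toC he
    map_zero' := by apply Subtype.ext; simp
    map_add' := fun a b => by apply Subtype.ext; simp [mul_add, add_mul] }

/-- coordinatewise inclusion `(ℕ →₀ eRe) →+ (ℕ →₀ R)` -/
noncomputable def jm (e : R) : (ℕ →₀ cornerSubring e) →+ (ℕ →₀ R) :=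
  Finsupp.mapRange.addMonoidHom (svalHom e)

/-- coordinatewise compression `(ℕ →₀ R) →+ (ℕ →₀ eRe)` -/
noncomputable def dm : (ℕ →₀ R) →+ (ℕ →₀ cornerSubring e) :=
  Finsupp.mapRange.addMonoidHom (toCHom he)

@[simp] lemma jm_apply (u : ℕ →₀ cornerSubring e) (n : ℕ) : jm e u n = (u n).val :=
  Finsupp.mapRange_apply (f := ⇑(svalHom e)) (hf := rfl)

@[simp] lemma dm_apply (x : ℕ →₀ R) (n : ℕ) : dm he x n = toC he (x n) :=
  Finsupp.mapRange_apply (f := ⇑(toCHom he)) (hf := map_zero _)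

lemma jm_inj : Function.Injective (jm e) := by
  intro u v huv
  ext n
  have h2 := congrArg (fun w => w n) huv
  simp only [jm_apply] at h2
  exact congrArg Subtype.val (Subtype.ext h2)

lemma dm_jm (u : ℕ →₀ cornerSubring e) : dm he (jm e u) = u := by
  ext n
  have h1 := (u n).2.1
  have h2 := (u n).2.2
  simp only [dm_apply, jm_apply, toC_val]
  rw [h1, h2]

lemma jm_left (u : ℕ →₀ cornerSubring e) : e • jm e u = jm e u := by
  ext n
  exact (u n).2.1

lemma jm_right (u : ℕ →₀ cornerSubring e) : op e • jm e u = jm e u := by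
  ext n
  exact (u n).2.2

lemma jm_dm (x : ℕ →₀ R) (h1 : e • x = x) (h2 : op e • x = x) : jm e (dm he x) = x := by
  ext n
  have h1' : e * x n = x n := congrArg (fun w => w n) h1
  have h2' : x n * e = x n := congrArg (fun w => w n) h2
  simp only [jm_apply, dm_apply, toC_val]
  rw [h1', h2']

/-- scalar commutation in the opposite action -/
lemma smul_op_smul (a b : R) (x : ℕ →₀ R) : op a • (op b • x) = op (b * a) • x := by
  rw [smul_smul, ← op_mul]

lemma smul_toC (x : ℕ →₀ R) (hx : op e • x = x) (r : R) :
    op (e * r * e) • x = op (r * e) • x := by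
  ext n
  have hv : x n * e = x n := congrArg (fun w => w n) hx
  show x n * (e * r * e) = x n * (r * e)
  rw [← mul_assoc, ← mul_assoc, hv, ← mul_assoc]

/-- the submodule `e·F` of left-`e`-fixed elements -/
def VV (e : R) : Submodule Rᵐᵒᵖ (ℕ →₀ R) where
  carrier := {x | e • x = x}
  zero_mem' := by simp
  add_mem' := fun {a b} ha hb => by simp only [Set.mem_setOf_eq] at *; rw [smul_add, ha, hb]
  smul_mem' := fun c x hx => by
    simp only [Set.mem_setOf_eq] at *
    rw [smul_comm, hx]

/-- the submodule `(1-e)·F` -/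
def WW (e : R) : Submodule Rᵐᵒᵖ (ℕ →₀ R) where
  carrier := {x | e • x = 0}
  zero_mem' := by simp
  add_mem' := fun {a b} ha hb => by
    simp only [Set.mem_setOf_eq] at *; rw [smul_add, ha, hb, add_zero]
  smul_mem' := fun c x hx => by
    simp only [Set.mem_setOf_eq] at *
    rw [smul_comm, hx, smul_zero]

include he in
lemma isCompl_VW : IsCompl (VV e) (WW e) := by
  constructor
  · rw [disjoint_iff, eq_bot_iff]
    rintro x ⟨hx1, hx2⟩
    have hx1' : e • x = x := hx1
    have hx2' : e • x = 0 := hx2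
    simp only [Submodule.mem_bot]
    rw [← hx1', hx2']
  · rw [codisjoint_iff, eq_top_iff]
    intro x _
    have h1 : e • x ∈ VV e := by
      show e • e • x = e • x
      rw [smul_smul, he]
    have h2 : x - e • x ∈ WW e := by
      show e • (x - e • x) = 0
      rw [smul_sub, smul_smul, he, sub_self]
    have : x = e • x + (x - e • x) := by abel
    rw [this]
    exact Submodule.add_mem_sup h1 h2

section Span

lemma oneP (hReR : Submodule.span R {x : R | ∃ r : R, x = e * r} = ⊤) {P : R → Prop} (h0 : P 0) (hadd : ∀ a b, P a → P b → P (a + b))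
    (hsmul : ∀ s r, P r → P (s * r)) (hbase : ∀ t, P (e * t)) : P 1 := by
  let D : Submodule R R :=
    { carrier := setOf P
      zero_mem' := h0
      add_mem' := fun {a b} ha hb => hadd a b ha hb
      smul_mem' := fun s r hr => hsmul s r hr }
  have hle : Submodule.span R {x : R | ∃ r : R, x = e * r} ≤ D :=
    Submodule.span_le.2 (by rintro x ⟨r, rfl⟩; exact hbase r)
  exact hle (hReR ▸ Submodule.mem_top)

lemma kill (hReR : Submodule.span R {x : R | ∃ r : R, x = e * r} = ⊤) (y : ℕ →₀ R) (hy : ∀ d : R, op (d * e) • y = 0) : y = 0 := by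
  have key : ∀ z : ℕ →₀ R, (∀ d : R, op (d * e) • z = 0) → op (1 : R) • z = 0 := by
    refine oneP hReR (P := fun r => ∀ z : ℕ →₀ R, (∀ d : R, op (d * e) • z = 0) → op r • z = 0)
      ?_ ?_ ?_ ?_
    · intro z _
      rw [op_zero, zero_smul]
    · intro a b ha hb z hz
      rw [op_add, add_smul, ha z hz, hb z hz, add_zero]
    · intro s r hr z hz
      have h1 : op (s * r) • z = op r • (op s • z) := (smul_op_smul r s z).symm
      rw [h1]
      refine hr (op s • z) fun d => ?_
      rw [smul_op_smul, show s * (d * e) = (s * d) * e from by rw [mul_assoc], hz (s * d)]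
    · intro t z hz
      have h1 : op (e * t) • z = op t • (op e • z) := by
        rw [smul_op_smul]
      rw [h1, show op e • z = (0 : ℕ →₀ R) from by
        have := hz 1; rwa [one_mul] at this, smul_zero]
  have := key y hy
  rwa [op_one, one_smul] at this

end Span

end CornerC2

lemma CornerC2.jm_smul {R : Type*} [Ring R] {e : R} (he : e * e = e) :
    letI : Ring (cornerSubring e) := cornerRing he
    ∀ (u : ℕ →₀ cornerSubring e) (s : cornerSubring e),
      jm e (op s • u) = op (s : R) • jm e u := by
  letI : Ring (cornerSubring e) := cornerRing he
  intro u s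
  ext n
  simp only [jm_apply, Finsupp.smul_apply]
  rfl

set_option maxHeartbeats 1000000 in
open CornerC2 in
/-- If `R` is a right countably Σ-C2 ring, `e` is an idempotent with `ReR = R`, then
`eRe` is a right countably Σ-C2 ring. -/
theorem corner_countablySigmaC2 (R : Type*) [Ring R]
    (h : IsC2Module Rᵐᵒᵖ (ℕ →₀ R)) (e : R) (he : e * e = e)
    (hReR : Submodule.span R {x : R | ∃ r : R, x = e * r} = ⊤) :
    letI : Ring (cornerSubring e) := cornerRing he
    IsC2Module (cornerSubring e)ᵐᵒᵖ (ℕ →₀ cornerSubring e) := by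
  letI : Ring (cornerSubring e) := cornerRing he
  intro N K hKc hNK
  obtain ⟨K', hK⟩ := hKc
  obtain ⟨φ0⟩ := hNK
  classical
  -- image of a submodule is closed under addition
  have himg_add : ∀ (A : Submodule (cornerSubring e)ᵐᵒᵖ (ℕ →₀ cornerSubring e))
      (x y : ℕ →₀ R), x ∈ jm e '' ↑A → y ∈ jm e '' ↑A → x + y ∈ jm e '' ↑A := by
    rintro A x y ⟨a, ha, rfl⟩ ⟨b, hb, rfl⟩
    exact ⟨a + b, A.add_mem ha hb, map_add _ _ _⟩
  -- compression of the span back into the image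
  have hcompress : ∀ (A : Submodule (cornerSubring e)ᵐᵒᵖ (ℕ →₀ cornerSubring e))
      (x : ℕ →₀ R), x ∈ Submodule.span Rᵐᵒᵖ (jm e '' ↑A) → ∀ d : R,
      op (d * e) • x ∈ jm e '' ↑A := by
    intro A x hx
    refine Submodule.span_induction ?_ ?_ ?_ ?_ hx
    · rintro x' ⟨u, hu, rfl⟩ d
      refine ⟨op (toC he d) • u, A.smul_mem _ hu, ?_⟩
      rw [jm_smul he, toC_val, smul_toC (jm e u) (jm_right u) d]
    · intro d
      rw [smul_zero]
      exact ⟨0, A.zero_mem, map_zero _⟩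
    · intro x' y' hx' hy' ihx ihy d
      rw [smul_add]
      exact himg_add A _ _ (ihx d) (ihy d)
    · intro c x' hx' ih d
      rw [← op_unop c, smul_op_smul, show unop c * (d * e) = (unop c * d) * e from
        (mul_assoc _ _ _).symm]
      exact ih (unop c * d)
  have hspV : ∀ (A : Submodule (cornerSubring e)ᵐᵒᵖ (ℕ →₀ cornerSubring e)),
      Submodule.span Rᵐᵒᵖ (jm e '' ↑A) ≤ VV e := by
    intro A
    rw [Submodule.span_le]
    rintro x ⟨u, hu, rfl⟩
    exact jm_left u
  have hdown_mem : ∀ (A : Submodule (cornerSubring e)ᵐᵒᵖ (ℕ →₀ cornerSubring e))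
      (x : ℕ →₀ R), x ∈ jm e '' ↑A → dm he x ∈ A := by
    rintro A x ⟨u, hu, rfl⟩
    rw [dm_jm]
    exact hu
  have hjdown : ∀ (A : Submodule (cornerSubring e)ᵐᵒᵖ (ℕ →₀ cornerSubring e))
      (x : ℕ →₀ R), x ∈ jm e '' ↑A → jm e (dm he x) = x := by
    rintro A x ⟨u, hu, rfl⟩
    rw [dm_jm]
  -- disjointness transfers
  have hdisjKK : Submodule.span Rᵐᵒᵖ (jm e '' ↑K) ⊓ Submodule.span Rᵐᵒᵖ (jm e '' ↑K') = ⊥ := by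
    rw [eq_bot_iff]
    rintro x ⟨hx1, hx2⟩
    simp only [Submodule.mem_bot]
    refine kill hReR x fun d => ?_
    obtain ⟨a, ha, hae⟩ := hcompress K x hx1 d
    obtain ⟨b, hb, hbe⟩ := hcompress K' x hx2 d
    have hab : a = b := jm_inj (hae.trans hbe.symm)
    have hmem : a ∈ K ⊓ K' := ⟨ha, hab ▸ hb⟩
    rw [disjoint_iff.mp hK.1, Submodule.mem_bot] at hmem
    rw [← hae, hmem, map_zero]
  -- sup covers V
  have hsupKK : VV e ≤ Submodule.span Rᵐᵒᵖ (jm e '' ↑K) ⊔ Submodule.span Rᵐᵒᵖ (jm e '' ↑K') := by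
    intro z hz
    have hz' : e • z = z := hz
    have main : ∀ w : ℕ →₀ R, e • w = w →
        op (1 : R) • w ∈ Submodule.span Rᵐᵒᵖ (jm e '' ↑K) ⊔ Submodule.span Rᵐᵒᵖ (jm e '' ↑K') := by
      refine oneP hReR (P := fun r => ∀ w : ℕ →₀ R, e • w = w →
        op r • w ∈ Submodule.span Rᵐᵒᵖ (jm e '' ↑K) ⊔ Submodule.span Rᵐᵒᵖ (jm e '' ↑K'))
        ?_ ?_ ?_ ?_
      · intro w _
        rw [op_zero, zero_smul]
        exact Submodule.zero_mem _
      · intro a b ha hb w hw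
        rw [op_add, add_smul]
        exact Submodule.add_mem _ (ha w hw) (hb w hw)
      · intro s r hr w hw
        rw [← smul_op_smul r s w]
        refine hr (op s • w) ?_
        rw [smul_comm, hw]
      · intro t w hw
        rw [← smul_op_smul t e w]
        have h1 : e • (op e • w) = op e • w := by rw [smul_comm, hw]
        have h2 : op e • (op e • w) = op e • w := by rw [smul_op_smul, he]
        rw [← jm_dm he (op e • w) h1 h2]
        have hmem : dm he (op e • w) ∈ K ⊔ K' := by
          rw [hK.codisjoint.eq_top]
          trivial
        obtain ⟨a, ha, b, hb, hab⟩ := Submodule.mem_sup.mp hmem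
        rw [← hab, map_add]
        refine Submodule.smul_mem _ _ (Submodule.add_mem _ ?_ ?_)
        · exact Submodule.mem_sup_left (Submodule.subset_span ⟨a, ha, rfl⟩)
        · exact Submodule.mem_sup_right (Submodule.subset_span ⟨b, hb, rfl⟩)
    have hz2 := main z hz'
    rwa [op_one, one_smul] at hz2
  have hVW := isCompl_VW he
  -- the complement of span K in the big module
  have hKRcompl : IsCompl (Submodule.span Rᵐᵒᵖ (jm e '' ↑K))
      (Submodule.span Rᵐᵒᵖ (jm e '' ↑K') ⊔ WW e) := by
    constructor
    · rw [disjoint_iff, eq_bot_iff]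
      rintro x ⟨hx1, hx2⟩
      obtain ⟨y, hy, w, hw, hyw⟩ := Submodule.mem_sup.mp hx2
      have hwv : w ∈ VV e := by
        have hwxy : w = x - y := by rw [← hyw]; abel
        rw [hwxy]
        exact (VV e).sub_mem (hspV K hx1) (hspV K' hy)
      have hw0 : w = 0 := by
        have hmm : w ∈ VV e ⊓ WW e := ⟨hwv, hw⟩
        rw [disjoint_iff.mp hVW.1, Submodule.mem_bot] at hmm
        exact hmm
      have hxy : x = y := by rw [← hyw, hw0, add_zero]
      have hmm2 : x ∈ Submodule.span Rᵐᵒᵖ (jm e '' ↑K) ⊓ Submodule.span Rᵐᵒᵖ (jm e '' ↑K') :=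
        ⟨hx1, hxy ▸ hy⟩
      rw [hdisjKK] at hmm2
      exact hmm2
    · rw [codisjoint_iff, eq_top_iff]
      calc (⊤ : Submodule Rᵐᵒᵖ (ℕ →₀ R)) = VV e ⊔ WW e := hVW.codisjoint.eq_top.symm
      _ ≤ (Submodule.span Rᵐᵒᵖ (jm e '' ↑K) ⊔ Submodule.span Rᵐᵒᵖ (jm e '' ↑K')) ⊔ WW e :=
          sup_le_sup_right hsupKK _
      _ = Submodule.span Rᵐᵒᵖ (jm e '' ↑K) ⊔ (Submodule.span Rᵐᵒᵖ (jm e '' ↑K') ⊔ WW e) :=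
          sup_assoc _ _ _
  -- a finite representation of 1 in ReR
  have h1mem : (1 : R) ∈ Submodule.span R {x : R | ∃ r : R, x = e * r} := by
    rw [hReR]; trivial
  obtain ⟨nn, f, g, hsum⟩ := Submodule.mem_span_set'.mp h1mem
  have hg : ∀ i, e * ((g i : R)) = (g i : R) := by
    intro i
    obtain ⟨r, hr⟩ := (g i).2
    rw [hr, ← mul_assoc, he]
  have hsum' : ∑ i, f i * (g i : R) = 1 := by
    simpa [smul_eq_mul] using hsum
  -- the key transfer construction
  have key : ∀ (A B : Submodule (cornerSubring e)ᵐᵒᵖ (ℕ →₀ cornerSubring e))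
      (ψ : A →ₗ[(cornerSubring e)ᵐᵒᵖ] B),
      ∃ Φ : Submodule.span Rᵐᵒᵖ (jm e '' ↑A) →ₗ[Rᵐᵒᵖ] Submodule.span Rᵐᵒᵖ (jm e '' ↑B),
        ∀ (x : Submodule.span Rᵐᵒᵖ (jm e '' ↑A)) (d : R),
          op (d * e) • (Φ x : ℕ →₀ R) =
            jm e ↑(ψ ⟨dm he (op (d * e) • (x : ℕ →₀ R)),
              hdown_mem A _ (hcompress A _ x.2 d)⟩) := by
    intro A B ψ
    have nfmem : ∀ (x : Submodule.span Rᵐᵒᵖ (jm e '' ↑A)) (d : R),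
        dm he (op (d * e) • (x : ℕ →₀ R)) ∈ A := fun x d => hdown_mem A _ (hcompress A _ x.2 d)
    let nf : Submodule.span Rᵐᵒᵖ (jm e '' ↑A) → R → ↥A := fun x d =>
      ⟨dm he (op (d * e) • (x : ℕ →₀ R)), nfmem x d⟩
    let Φf : Submodule.span Rᵐᵒᵖ (jm e '' ↑A) → (ℕ →₀ R) := fun x =>
      ∑ i, op ((g i : R)) • jm e ↑(ψ (nf x (f i)))
    have hjnf : ∀ x d, jm e ↑(nf x d) = op (d * e) • (x : ℕ →₀ R) := fun x d =>
      hjdown A _ (hcompress A _ x.2 d)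
    have star : ∀ x d, op (d * e) • Φf x = jm e ↑(ψ (nf x d)) := by
      intro x d
      have hterm : ∀ i : Fin nn, op (d * e) • (op ((g i : R)) • jm e ↑(ψ (nf x (f i))))
          = jm e ↑(ψ (op (toC he ((g i : R) * d)) • nf x (f i))) := by
        intro i
        rw [smul_op_smul, ← mul_assoc,
          ← smul_toC (jm e ↑(ψ (nf x (f i)))) (jm_right _) ((g i : R) * d),
          show (e * ((g i : R) * d) * e) = ((toC he ((g i : R) * d) : R)) from rfl,
          ← jm_smul he]
        congr 1
        rw [map_smul, Submodule.coe_smul]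
      have hkey : (∑ i, op (toC he ((g i : R) * d)) • nf x (f i)) = nf x d := by
        have ht2 : ∀ i : Fin nn, jm e ↑(op (toC he ((g i : R) * d)) • nf x (f i))
            = op ((f i * (g i : R)) * (d * e)) • (x : ℕ →₀ R) := by
          intro i
          rw [Submodule.coe_smul, jm_smul he, hjnf, smul_op_smul, toC_val]
          congr 2
          calc (f i * e) * (e * ((g i : R) * d) * e)
              = f i * ((e * e) * (g i : R)) * (d * e) := by noncomm_ring
            _ = (f i * (g i : R)) * (d * e) := by rw [he, hg i]
        have hv : jm e ↑(∑ i, op (toC he ((g i : R) * d)) • nf x (f i)) = jm e ↑(nf x d) := by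
          rw [AddSubmonoidClass.coe_finset_sum, map_sum,
            Finset.sum_congr rfl fun i _ => ht2 i, hjnf x d]
          calc ∑ i, op ((f i * (g i : R)) * (d * e)) • (x : ℕ →₀ R)
              = ∑ i, op (d * e) • (op (f i * (g i : R)) • (x : ℕ →₀ R)) := by
                refine Finset.sum_congr rfl fun i _ => ?_
                rw [smul_op_smul]
            _ = op (d * e) • ((∑ i, op (f i * (g i : R))) • (x : ℕ →₀ R)) := by
                rw [← Finset.smul_sum, Finset.sum_smul]
            _ = op (d * e) • (x : ℕ →₀ R) := by
                rw [← Finset.op_sum, hsum', op_one, one_smul]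
        exact Subtype.ext (jm_inj hv)
      calc op (d * e) • Φf x
          = ∑ i, op (d * e) • (op ((g i : R)) • jm e ↑(ψ (nf x (f i)))) := Finset.smul_sum
        _ = ∑ i, jm e ↑(ψ (op (toC he ((g i : R) * d)) • nf x (f i))) :=
            Finset.sum_congr rfl fun i _ => hterm i
        _ = jm e ↑(ψ (∑ i, op (toC he ((g i : R) * d)) • nf x (f i))) := by
            rw [map_sum, AddSubmonoidClass.coe_finset_sum, map_sum]
        _ = jm e ↑(ψ (nf x d)) := by rw [hkey]
    have hmem : ∀ x, Φf x ∈ Submodule.span Rᵐᵒᵖ (jm e '' ↑B) := fun x =>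
      Submodule.sum_mem _ fun i _ =>
        Submodule.smul_mem _ _ (Submodule.subset_span ⟨_, (ψ (nf x (f i))).2, rfl⟩)
    have haddf : ∀ x y, Φf (x + y) = Φf x + Φf y := by
      intro x y
      have hdiff : ∀ d : R, op (d * e) • (Φf (x + y) - Φf x - Φf y) = 0 := by
        intro d
        rw [smul_sub, smul_sub, star, star, star]
        have h1 : nf (x + y) d = nf x d + nf y d := by
          apply Subtype.ext
          show dm he (op (d * e) • ((x + y : Submodule.span Rᵐᵒᵖ (jm e '' ↑A)) : ℕ →₀ R))
            = dm he (op (d * e) • (x : ℕ →₀ R)) + dm he (op (d * e) • (y : ℕ →₀ R))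
          rw [Submodule.coe_add, smul_add, map_add]
        rw [h1, map_add, Submodule.coe_add, map_add]
        abel
      have h0 := kill hReR _ hdiff
      rw [sub_sub, sub_eq_zero] at h0
      exact h0
    have hsmulf : ∀ (c : Rᵐᵒᵖ) x, Φf (c • x) = c • Φf x := by
      intro c x
      obtain ⟨cu, rfl⟩ : ∃ u, c = op u := ⟨unop c, (op_unop c).symm⟩
      have hdiff : ∀ d : R, op (d * e) • (Φf (op cu • x) - op cu • Φf x) = 0 := by
        intro d
        rw [smul_sub, star (op cu • x) d]
        have h2 : op (d * e) • (op cu • Φf x) = op ((cu * d) * e) • Φf x := by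
          rw [smul_op_smul, ← mul_assoc]
        rw [h2, star x (cu * d)]
        have h3 : nf (op cu • x) d = nf x (cu * d) := by
          apply Subtype.ext
          show dm he (op (d * e) • ((op cu • x : Submodule.span Rᵐᵒᵖ (jm e '' ↑A)) : ℕ →₀ R))
            = dm he (op ((cu * d) * e) • (x : ℕ →₀ R))
          rw [Submodule.coe_smul, smul_op_smul, ← mul_assoc]
        rw [h3, sub_self]
      have h0 := kill hReR _ hdiff
      rwa [sub_eq_zero] at h0
    exact ⟨{ toFun := fun x => ⟨Φf x, hmem x⟩
             map_add' := fun x y => Subtype.ext (haddf x y)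
             map_smul' := fun c x => Subtype.ext (hsmulf c x) }, star⟩
  obtain ⟨Φ, hΦ⟩ := key N K φ0.toLinearMap
  obtain ⟨Ψ, hΨ⟩ := key K N φ0.symm.toLinearMap
  have hΨΦ : ∀ x, Ψ (Φ x) = x := by
    intro x
    apply Subtype.ext
    have hdiff : ∀ d : R, op (d * e) • ((Ψ (Φ x) : ℕ →₀ R) - (x : ℕ →₀ R)) = 0 := by
      intro d
      rw [smul_sub, hΨ (Φ x) d]
      have h1 : (⟨dm he (op (d * e) • (Φ x : ℕ →₀ R)),
          hdown_mem K _ (hcompress K _ (Φ x).2 d)⟩ : ↥K)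
          = φ0 ⟨dm he (op (d * e) • (x : ℕ →₀ R)), hdown_mem N _ (hcompress N _ x.2 d)⟩ := by
        apply Subtype.ext
        show dm he (op (d * e) • (Φ x : ℕ →₀ R)) = _
        rw [hΦ x d, dm_jm]
        rfl
      rw [h1]
      have h2 : (φ0.symm.toLinearMap)
          (φ0 ⟨dm he (op (d * e) • (x : ℕ →₀ R)), hdown_mem N _ (hcompress N _ x.2 d)⟩)
          = ⟨dm he (op (d * e) • (x : ℕ →₀ R)), hdown_mem N _ (hcompress N _ x.2 d)⟩ :=
        φ0.symm_apply_apply _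
      rw [h2, hjdown N _ (hcompress N _ x.2 d), sub_self]
    have h0 := kill hReR _ hdiff
    rwa [sub_eq_zero] at h0
  have hΦΨ : ∀ x, Φ (Ψ x) = x := by
    intro x
    apply Subtype.ext
    have hdiff : ∀ d : R, op (d * e) • ((Φ (Ψ x) : ℕ →₀ R) - (x : ℕ →₀ R)) = 0 := by
      intro d
      rw [smul_sub, hΦ (Ψ x) d]
      have h1 : (⟨dm he (op (d * e) • (Ψ x : ℕ →₀ R)),
          hdown_mem N _ (hcompress N _ (Ψ x).2 d)⟩ : ↥N)
          = φ0.symm ⟨dm he (op (d * e) • (x : ℕ →₀ R)), hdown_mem K _ (hcompress K _ x.2 d)⟩ := by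
        apply Subtype.ext
        show dm he (op (d * e) • (Ψ x : ℕ →₀ R)) = _
        rw [hΨ x d, dm_jm]
        rfl
      rw [h1]
      have h2 : (φ0.toLinearMap)
          (φ0.symm ⟨dm he (op (d * e) • (x : ℕ →₀ R)), hdown_mem K _ (hcompress K _ x.2 d)⟩)
          = ⟨dm he (op (d * e) • (x : ℕ →₀ R)), hdown_mem K _ (hcompress K _ x.2 d)⟩ :=
        φ0.apply_symm_apply _
      rw [h2, hjdown K _ (hcompress K _ x.2 d), sub_self]
    have h0 := kill hReR _ hdiff
    rwa [sub_eq_zero] at h0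
  obtain ⟨L, hL⟩ := h _ _ ⟨_, hKRcompl⟩
    ⟨LinearEquiv.ofLinear Φ Ψ (LinearMap.ext hΦΨ) (LinearMap.ext hΨΦ)⟩
  -- build the complement of N
  let Nc : Submodule (cornerSubring e)ᵐᵒᵖ (ℕ →₀ cornerSubring e) :=
    { carrier := {u | jm e u ∈ L ⊓ VV e}
      zero_mem' := by
        simp only [Set.mem_setOf_eq, map_zero]
        exact Submodule.zero_mem _
      add_mem' := fun {a b} ha hb => by
        simp only [Set.mem_setOf_eq, map_add] at *
        exact Submodule.add_mem _ ha hb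
      smul_mem' := fun c u hu => by
        simp only [Set.mem_setOf_eq] at *
        rw [← op_unop c, jm_smul he]
        exact Submodule.smul_mem _ _ hu }
  refine ⟨Nc, ?_, ?_⟩
  · rw [disjoint_iff, eq_bot_iff]
    rintro u ⟨hu1, hu2⟩
    have h1 : jm e u ∈ Submodule.span Rᵐᵒᵖ (jm e '' ↑N) := Submodule.subset_span ⟨u, hu1, rfl⟩
    have h2 : jm e u ∈ L ⊓ VV e := hu2
    have h3 : jm e u ∈ Submodule.span Rᵐᵒᵖ (jm e '' ↑N) ⊓ L := ⟨h1, h2.1⟩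
    rw [disjoint_iff.mp hL.1, Submodule.mem_bot] at h3
    have h4 : u = 0 := jm_inj (by rw [h3, map_zero])
    simp [h4]
  · rw [codisjoint_iff, eq_top_iff]
    intro u _
    have hVeq : VV e ≤ Submodule.span Rᵐᵒᵖ (jm e '' ↑N) ⊔ (L ⊓ VV e) := by
      have h1 : Submodule.span Rᵐᵒᵖ (jm e '' ↑N) ⊔ (L ⊓ VV e)
          = (Submodule.span Rᵐᵒᵖ (jm e '' ↑N) ⊔ L) ⊓ VV e :=
        (sup_inf_assoc_of_le _ (hspV N)).symm
      rw [h1, hL.codisjoint.eq_top, top_inf_eq]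
    have hm : jm e u ∈ Submodule.span Rᵐᵒᵖ (jm e '' ↑N) ⊔ (L ⊓ VV e) := hVeq (jm_left u)
    obtain ⟨a, ha, b, hb, hab⟩ := Submodule.mem_sup.mp hm
    obtain ⟨n₀, hn₀, hn₀e⟩ : op e • a ∈ jm e '' ↑N := by
      have hc := hcompress N a ha 1
      rwa [one_mul] at hc
    have hbV : e • b = b := hb.2
    have hy1 : e • (op e • b) = op e • b := by rw [smul_comm, hbV]
    have hy2 : op e • (op e • b) = op e • b := by rw [smul_op_smul, he]
    have hyL : op e • b ∈ L ⊓ VV e := Submodule.smul_mem _ _ hb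
    have hu1 : dm he (op e • b) ∈ Nc := by
      show jm e (dm he (op e • b)) ∈ L ⊓ VV e
      rw [jm_dm he _ hy1 hy2]
      exact hyL
    have hdecomp : u = n₀ + dm he (op e • b) := by
      apply jm_inj
      rw [map_add, hn₀e, jm_dm he _ hy1 hy2]
      calc jm e u = op e • jm e u := (jm_right u).symm
      _ = op e • (a + b) := by rw [hab]
      _ = op e • a + op e • b := smul_add _ _ _
    rw [hdecomp]
    exact Submodule.add_mem _ (Submodule.mem_sup_left hn₀) (Submodule.mem_sup_right hu1)
end

section
/- If R is a right countably Σ-C2 ring, then R is a right perfect ring. -/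
section BassAux

open MulOpposite

variable {R : Type*} [Ring R] (c : ℕ → R)

/-- The Bass elements `x n = e n - e (n+1) * c n` in the free right module `ℕ →₀ R`. -/
noncomputable def bassX (n : ℕ) : ℕ →₀ R :=
  Finsupp.single n 1 - Finsupp.single (n + 1) (c n)

/-- For each `n`, the Rᵐᵒᵖ-linear map `R → (ℕ →₀ R)` sending `r` to `op r • bassX c n`. -/
noncomputable def bassMu (n : ℕ) : R →ₗ[Rᵐᵒᵖ] (ℕ →₀ R) where
  toFun r := op r • bassX c n
  map_add' r s := by rw [op_add, add_smul]
  map_smul' s r := by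
    simp only [RingHom.id_apply]
    have : op (s • r) = s * op r := by
      rw [MulOpposite.smul_eq_mul_unop, op_mul, op_unop]
    rw [this, mul_smul]

/-- The Bass map `β : (ℕ →₀ R) → (ℕ →₀ R)`, sending `e n` to `bassX c n`. -/
noncomputable def bassB : (ℕ →₀ R) →ₗ[Rᵐᵒᵖ] (ℕ →₀ R) :=
  Finsupp.lsum ℕ (bassMu c)

lemma bassB_single (n : ℕ) : bassB c (Finsupp.single n 1) = bassX c n := by
  rw [bassB, Finsupp.lsum_single]
  simp [bassMu]

lemma op_smul_finsupp_apply (r : R) (f : ℕ →₀ R) (k : ℕ) :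
    (op r • f) k = f k * r := by
  rw [Finsupp.smul_apply, op_smul_eq_mul]

lemma bassB_apply (f : ℕ →₀ R) (k : ℕ) :
    bassB c f k = f k - (if k = 0 then 0 else c (k - 1) * f (k - 1)) := by
  classical
  have : bassB c f = f.sum fun n r =>
      Finsupp.single n r - Finsupp.single (n + 1) (c n * r) := by
    rw [bassB, Finsupp.lsum_apply]
    refine Finsupp.sum_congr fun n _ => ?_
    show op (f n) • bassX c n = _
    rw [bassX, smul_sub, Finsupp.smul_single, Finsupp.smul_single,
      op_smul_eq_mul, op_smul_eq_mul, one_mul]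
  rw [this, Finsupp.sum_apply]
  have hsplit : (f.sum fun n r =>
      (Finsupp.single n r - Finsupp.single (n + 1) (c n * r)) k)
      = (f.sum fun n r => (Finsupp.single n r) k)
        - (f.sum fun n r => (Finsupp.single (n + 1) (c n * r)) k) := by
    rw [← Finsupp.sum_sub]
    exact Finsupp.sum_congr fun n _ => by rw [Finsupp.sub_apply]
  rw [hsplit]
  congr 1
  · have : (f.sum fun n r => (Finsupp.single n r) k)
        = f.sum fun n r => if n = k then r else 0 := by
      exact Finsupp.sum_congr fun n _ => by rw [Finsupp.single_apply]
    rw [this, Finsupp.sum_ite_self_eq']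
  · rcases Nat.eq_zero_or_eq_succ_pred k with hk | hk
    · subst hk
      rw [if_pos rfl]
      rw [Finsupp.sum, Finset.sum_eq_zero]
      intro n _
      rw [Finsupp.single_apply, if_neg (Nat.succ_ne_zero n)]
    · rw [if_neg (by omega : ¬ k = 0)]
      have : (f.sum fun n r => (Finsupp.single (n + 1) (c n * r)) k)
          = f.sum fun n r => if n = k - 1 then c n * r else 0 := by
        refine Finsupp.sum_congr fun n _ => ?_
        rw [Finsupp.single_apply]
        rw [if_congr (by omega : (n + 1 = k) ↔ (n = k - 1)) rfl rfl]
      rw [this]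
      have := Finsupp.sum_ite_eq' f (k - 1) (fun n r => c n * r)
      rw [this]
      split_ifs with hmem
      · rfl
      · rw [Finsupp.notMem_support_iff.mp hmem, mul_zero]

lemma bassB_injective : Function.Injective (bassB c) := by
  intro f g hfg
  rw [← sub_eq_zero, ← map_sub] at hfg
  suffices h : f - g = 0 by rwa [sub_eq_zero] at h
  set d := f - g with hd
  ext k
  induction k using Nat.strong_induction_on with
  | _ k ih =>
    have hk := congrArg (fun u => u k) hfg
    simp only [Finsupp.coe_zero, Pi.zero_apply] at hk
    rw [bassB_apply] at hk
    rcases Nat.eq_zero_or_pos k with h0 | hpos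
    · subst h0; simpa using hk
    · rw [if_neg (by omega)] at hk
      have : d (k - 1) = 0 := by
        have := ih (k - 1) (by omega)
        simpa using this
      rw [this, mul_zero, sub_zero] at hk
      simpa using hk

end BassAux

/-- If `R` is a right countably Σ-C2 ring, then `R` is right perfect, i.e. `R` satisfies
the descending chain condition on principal left ideals. -/
theorem rightPerfect_of_countablySigmaC2 (R : Type*) [Ring R]
    (h : IsC2Module Rᵐᵒᵖ (ℕ →₀ R)) :
    ∀ a : ℕ → R, (∀ n, Ideal.span {a (n + 1)} ≤ Ideal.span {a n}) →
      ∃ N, ∀ n, N ≤ n → Ideal.span {a n} = Ideal.span {a N} := by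
  classical
  intro a hle
  -- choose the "division" witnesses for the chain
  have hc : ∀ n, ∃ cn : R, cn * a n = a (n + 1) := by
    intro n
    have hmem : a (n + 1) ∈ Ideal.span {a n} :=
      hle n (Ideal.subset_span (Set.mem_singleton _))
    rcases Submodule.mem_span_singleton.mp hmem with ⟨cn, hcn⟩
    exact ⟨cn, hcn⟩
  choose c hcc using hc
  set β := bassB c with hβ
  set G : Submodule Rᵐᵒᵖ (ℕ →₀ R) := LinearMap.range β with hG
  have hinj : Function.Injective β := bassB_injective c
  -- G is isomorphic to the whole module, hence to the summand ⊤
  have hiso : Nonempty (G ≃ₗ[Rᵐᵒᵖ] (⊤ : Submodule Rᵐᵒᵖ (ℕ →₀ R))) :=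
    ⟨(LinearEquiv.ofInjective β hinj).symm.trans (Submodule.topEquiv.symm)⟩
  obtain ⟨G', hGG'⟩ := h G ⊤ ⟨⊥, isCompl_top_bot⟩ hiso
  -- projection onto G
  set π := Submodule.projectionOnto G G' hGG' with hπ
  set p : (ℕ →₀ R) →ₗ[Rᵐᵒᵖ] (ℕ →₀ R) := G.subtype.comp π with hp
  have hpG : ∀ f, p f ∈ G := fun f => (π f).2
  have hpfix : ∀ n, p (bassX c n) = bassX c n := by
    intro n
    have hxG : bassX c n ∈ G := ⟨Finsupp.single n 1, bassB_single c n⟩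
    have : π (bassX c n) = ⟨bassX c n, hxG⟩ := by
      have := Submodule.linearProjOfIsCompl_apply_left hGG' ⟨bassX c n, hxG⟩
      simpa using this
    simp [hp, this]
  -- choose preimages τ n of p (e n) under β
  have hτex : ∀ n, ∃ t, β t = p (Finsupp.single n 1) := fun n => hpG _
  choose τ hτ using hτex
  -- basic relation on the τ's
  have hrel : ∀ n, τ n - MulOpposite.op (c n) • τ (n + 1) = Finsupp.single n 1 := by
    intro n
    apply hinj
    rw [map_sub, map_smul, hτ, hτ, bassB_single]
    have hx : (Finsupp.single n 1 : ℕ →₀ R)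
        - MulOpposite.op (c n) • Finsupp.single (n + 1) (1 : R) = bassX c n := by
      rw [bassX, Finsupp.smul_single, op_smul_eq_mul, one_mul]
    calc (p (Finsupp.single n 1)) - MulOpposite.op (c n) • (p (Finsupp.single (n + 1) 1))
        = p ((Finsupp.single n 1)
            - MulOpposite.op (c n) • (Finsupp.single (n + 1) (1 : R))) := by
          rw [map_sub, map_smul]
      _ = p (bassX c n) := by rw [hx]
      _ = bassX c n := hpfix n
  have hrel' : ∀ n j, τ n j - τ (n + 1) j * c n = if n = j then 1 else 0 := by
    intro n j
    have := congrArg (fun u : ℕ →₀ R => u j) (hrel n)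
    simp only [Finsupp.sub_apply] at this
    rw [op_smul_finsupp_apply] at this
    rw [this, Finsupp.single_apply]
  -- telescoping
  have key : ∀ M j, τ 0 j * a 0 = τ M j * a M + (if j < M then a j else 0) := by
    intro M
    induction M with
    | zero => intro j; simp
    | succ M ih =>
      intro j
      have step : τ M j * a M - τ (M + 1) j * a (M + 1) = if M = j then a M else 0 := by
        have : τ M j * a M - τ (M + 1) j * a (M + 1)
            = (τ M j - τ (M + 1) j * c M) * a M := by
          rw [sub_mul, mul_assoc, hcc]
        rw [this, hrel' M j]
        split_ifs with hMj
        · rw [one_mul]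
        · rw [zero_mul]
      rw [ih j]
      have hM : τ M j * a M = τ (M + 1) j * a (M + 1) + (if M = j then a M else 0) :=
        sub_eq_iff_eq_add'.mp step
      rw [hM, add_assoc]
      congr 1
      rcases lt_trichotomy j M with hlt | heq | hgt
      · rw [if_neg (by omega), if_pos hlt, if_pos (by omega), zero_add]
      · subst heq
        rw [if_pos rfl, if_neg (lt_irrefl _), if_pos (by omega), add_zero]
      · rw [if_neg (by omega), if_neg (by omega), if_neg (by omega), add_zero]
  -- choose N beyond the support of τ 0
  set N := (τ 0).support.sup id + 1 with hN
  have hτ0N : τ 0 N = 0 := by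
    apply Finsupp.notMem_support_iff.mp
    intro hmem
    have := Finset.le_sup (f := id) hmem
    simp only [id] at this
    omega
  refine ⟨N, fun n hn => ?_⟩
  -- descending inclusions
  have mono : ∀ m k : ℕ, Ideal.span {a (m + k)} ≤ Ideal.span {a m} := by
    intro m k
    induction k with
    | zero => exact le_rfl
    | succ k ih => exact le_trans (hle (m + k)) ih
  have hle' : Ideal.span {a n} ≤ Ideal.span {a N} := by
    obtain ⟨k, rfl⟩ := Nat.exists_eq_add_of_le hn
    exact mono N k
  refine le_antisymm hle' ?_
  rcases eq_or_lt_of_le hn with heq | hlt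
  · subst heq; exact le_rfl
  · -- a N ∈ span {a n}
    have hkey := key n N
    rw [hτ0N, zero_mul, if_pos hlt] at hkey
    have haN : a N = (-(τ n N)) * a n := by
      have h0 : τ n N * a n + a N = 0 := hkey.symm
      rw [neg_mul]
      exact eq_neg_of_add_eq_zero_right h0
    rw [Ideal.span_le]
    intro y hy
    rcases hy with rfl
    exact Submodule.mem_span_singleton.mpr ⟨-(τ n N), by rw [smul_eq_mul, ← haN]⟩
end

section
/- A ring R is a right countably Σ-C2 ring if and only if the countable direct sum R^(ℕ) of copies of R as a right R-module is a C3 module. -/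
section AuxC2C3

variable {S : Type*} [Ring S] {M M' : Type*} [AddCommGroup M] [Module S M]
  [AddCommGroup M'] [Module S M']

lemma isC3_congr (e : M ≃ₗ[S] M') (h : IsC3Module S M) : IsC3Module S M' := by
  intro N K hN hK hNK
  set oi := Submodule.orderIsoMapComap e with hoi
  obtain ⟨L, hL⟩ := h (oi.symm N) (oi.symm K)
    (hN.elim fun N' h' => ⟨oi.symm N', oi.symm.isCompl h'⟩)
    (hK.elim fun K' h' => ⟨oi.symm K', oi.symm.isCompl h'⟩)
    (by rw [← oi.symm.map_inf, hNK, oi.symm.map_bot])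
  refine ⟨oi L, ?_⟩
  have := oi.isCompl hL
  rwa [oi.map_sup, oi.apply_symm_apply, oi.apply_symm_apply] at this


lemma c2_to_c3 (h : IsC2Module S M) : IsC3Module S M := by
  intro N K ⟨N', hN⟩ hK hNK
  set π : M →ₗ[S] M := N'.subtype ∘ₗ N'.projectionOnto N hN.symm with hπ
  have hsub : ∀ x : M, x - π x ∈ N := by
    intro x
    have h1 := Submodule.projection_add_projection_eq_self hN x
    have h2 : x - π x = (N.projectionOnto N' hN x : M) := by
      simp only [hπ, LinearMap.comp_apply, Submodule.subtype_apply]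
      rw [sub_eq_iff_eq_add]
      exact h1.symm
    rw [h2]; exact (N.projectionOnto N' hN x).2
  set q : K →ₗ[S] M := π ∘ₗ K.subtype with hq
  have hqinj : Function.Injective q := by
    intro a b hab
    have hab' : N'.projectionOnto N hN.symm (a : M) = N'.projectionOnto N hN.symm (b : M) :=
      Subtype.coe_injective (by simpa [hq, hπ] using hab)
    have hd : ((a : M) - b) ∈ N := by
      rw [← Submodule.projectionOnto_apply_eq_zero_iff (p := N') (q := N) hN.symm]
      rw [map_sub, hab', sub_self]
    have hmem : (a : M) - b ∈ N ⊓ K := ⟨hd, Submodule.sub_mem K a.2 b.2⟩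
    rw [hNK] at hmem
    exact Subtype.coe_injective (sub_eq_zero.mp (by simpa using hmem))
  set K₁ := LinearMap.range q with hK₁
  have hK₁N' : K₁ ≤ N' := by
    rintro x ⟨k, rfl⟩
    exact ((N'.projectionOnto N hN.symm) ((K.subtype) k)).2
  have hiso : Nonempty (K₁ ≃ₗ[S] K) := ⟨(LinearEquiv.ofInjective q hqinj).symm⟩
  obtain ⟨L, hL⟩ := h K₁ K hK hiso
  have hsupeq : N ⊔ K = N ⊔ K₁ := by
    apply le_antisymm
    · refine sup_le le_sup_left ?_
      intro k hk
      have : k = (k - π k) + q ⟨k, hk⟩ := by simp [hq]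
      rw [this]
      exact Submodule.add_mem _ (Submodule.mem_sup_left (hsub k))
        (Submodule.mem_sup_right ⟨⟨k, hk⟩, rfl⟩)
    · refine sup_le le_sup_left ?_
      rintro x ⟨k, rfl⟩
      have : q k = (k : M) - ((k : M) - π k) := by simp [hq]
      rw [this]
      exact Submodule.sub_mem _ (Submodule.mem_sup_right k.2)
        (Submodule.mem_sup_left (hsub k))
  refine ⟨L ⊓ N', ?_⟩
  rw [hsupeq]
  constructor
  · rw [disjoint_iff]
    have h1 : (N ⊔ K₁) ⊓ N' = K₁ := by
      rw [sup_comm, sup_inf_assoc_of_le _ hK₁N', disjoint_iff.mp hN.disjoint, sup_bot_eq]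
    calc (N ⊔ K₁) ⊓ (L ⊓ N') = ((N ⊔ K₁) ⊓ N') ⊓ L := by
            rw [inf_assoc, inf_comm L N']
      _ = K₁ ⊓ L := by rw [h1]
      _ = ⊥ := disjoint_iff.mp hL.disjoint
  · rw [codisjoint_iff]
    have h2 : K₁ ⊔ (L ⊓ N') = N' := by
      rw [← sup_inf_assoc_of_le _ hK₁N', codisjoint_iff.mp hL.codisjoint, top_inf_eq]
    rw [sup_assoc, h2, codisjoint_iff.mp hN.codisjoint]


lemma isCompl_prod_top_bot :
    IsCompl ((⊤ : Submodule S M).prod (⊥ : Submodule S M))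
      ((⊥ : Submodule S M).prod (⊤ : Submodule S M)) := by
  constructor
  · rw [disjoint_iff, Submodule.prod_inf_prod]
    simp [Submodule.prod_bot]
  · rw [codisjoint_iff, Submodule.prod_sup_prod]
    simp [Submodule.prod_top]


lemma c3_prod_to_c2 (h : IsC3Module S (M × M)) : IsC2Module S M := by
  rintro N K ⟨K', hK⟩ ⟨e⟩
  set ψ : K →ₗ[S] M := N.subtype ∘ₗ (e.symm : K →ₗ[S] N) with hψ
  have hψapp : ∀ k : K, ψ k = (e.symm k : M) := fun k => rfl
  have hψinj : Function.Injective ψ := by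
    intro a b hab
    exact e.symm.injective (Subtype.coe_injective hab)
  have hψmem : ∀ k : K, ψ k ∈ N := fun k => (e.symm k).2
  set g : K →ₗ[S] M × M := (K.subtype).prod ψ with hg
  set G := LinearMap.range g with hG
  have hgapp : ∀ k : K, g k = ((k : M), ψ k) := fun k => rfl
  have hGcompl : IsCompl G (K'.prod ⊤) := by
    constructor
    · rw [disjoint_iff, eq_bot_iff]
      rintro x ⟨⟨k, rfl⟩, hx2⟩
      have hk : (k : M) ∈ K ⊓ K' := ⟨k.2, hx2.1⟩
      rw [disjoint_iff.mp hK.disjoint] at hk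
      have hk0 : k = 0 := Subtype.coe_injective (by simpa using hk)
      simp [hk0]
    · rw [codisjoint_iff, eq_top_iff]
      rintro ⟨m1, m2⟩ -
      have hm1 : m1 ∈ K ⊔ K' := by rw [codisjoint_iff.mp hK.codisjoint]; trivial
      obtain ⟨k, hk, k', hk', hsum⟩ := Submodule.mem_sup.mp hm1
      refine Submodule.mem_sup.mpr ⟨g ⟨k, hk⟩, ⟨⟨k, hk⟩, rfl⟩,
        (k', m2 - ψ ⟨k, hk⟩), ⟨hk', trivial⟩, ?_⟩
      rw [hgapp]
      ext <;> simp [hsum] 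
  have hGdisj : G ⊓ (⊤ : Submodule S M).prod ⊥ = ⊥ := by
    rw [eq_bot_iff]
    rintro x ⟨⟨k, rfl⟩, hx2⟩
    have h2 : ψ k = 0 := by simpa [hgapp] using hx2.2
    have hk0 : k = 0 := hψinj (h2.trans (map_zero ψ).symm)
    simp [hk0]
  obtain ⟨W, hW⟩ := h G ((⊤ : Submodule S M).prod ⊥) ⟨_, hGcompl⟩
    ⟨_, isCompl_prod_top_bot⟩ hGdisj
  have hGsup : G ⊔ (⊤ : Submodule S M).prod ⊥ = (⊤ : Submodule S M).prod N := by
    apply le_antisymm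
    · refine sup_le ?_ (Submodule.prod_mono le_rfl bot_le)
      rintro x ⟨k, rfl⟩
      exact ⟨trivial, hψmem k⟩
    · rintro ⟨m, n⟩ ⟨-, hn⟩
      refine Submodule.mem_sup.mpr ⟨g (e ⟨n, hn⟩), ⟨_, rfl⟩,
        (m - (e ⟨n, hn⟩ : M), 0), ⟨trivial, Submodule.zero_mem _⟩, ?_⟩
      rw [hgapp, hψapp]
      ext <;> simp
  rw [hGsup] at hW
  set V := (⊤ : Submodule S M).prod (⊥ : Submodule S M) ⊔ W with hV
  have hVcompl : IsCompl ((⊥ : Submodule S M).prod N) V := by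
    constructor
    · rw [disjoint_iff]
      have hle : ((⊤ : Submodule S M).prod (⊥ : Submodule S M)) ≤
          (⊤ : Submodule S M).prod N := Submodule.prod_mono le_rfl bot_le
      have h1 : ((⊤ : Submodule S M).prod ⊥ ⊔ W) ⊓ (⊤ : Submodule S M).prod N =
          (⊤ : Submodule S M).prod ⊥ := by
        rw [sup_inf_assoc_of_le _ hle, inf_comm, disjoint_iff.mp hW.disjoint, sup_bot_eq]
      have hle2 : ((⊥ : Submodule S M).prod N) ≤ (⊤ : Submodule S M).prod N :=
        Submodule.prod_mono bot_le le_rfl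
      have h2 : (⊥ : Submodule S M).prod N ⊓ V =
          ((⊥ : Submodule S M).prod N) ⊓ ((⊤ : Submodule S M).prod ⊥) := by
        conv_lhs => rw [← inf_eq_left.mpr hle2]
        rw [inf_assoc, inf_comm ((⊤ : Submodule S M).prod N) V, hV, h1]
      rw [h2, Submodule.prod_inf_prod]
      simp [Submodule.prod_bot]
    · rw [codisjoint_iff, hV, ← sup_assoc, Submodule.prod_sup_prod]
      simpa using codisjoint_iff.mp hW.codisjoint
  refine ⟨Submodule.map (LinearMap.snd S M M) (V ⊓ (⊥ : Submodule S M).prod ⊤), ?_⟩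
  constructor
  · rw [disjoint_iff, eq_bot_iff]
    rintro x ⟨hxN, hxN'⟩
    obtain ⟨v, hv, rfl⟩ := Submodule.mem_map.mp hxN'
    have hv1 : v.1 = 0 := by simpa using hv.2.1
    have hvmem : v ∈ (⊥ : Submodule S M).prod N ⊓ V :=
      ⟨⟨by simp [hv1], hxN⟩, hv.1⟩
    rw [disjoint_iff.mp hVcompl.disjoint] at hvmem
    rw [Submodule.mem_bot] at hvmem
    simp [hvmem]
  · rw [codisjoint_iff, eq_top_iff]
    rintro x -
    have hx : ((0 : M), x) ∈ (⊥ : Submodule S M).prod ⊤ := ⟨Submodule.zero_mem _, trivial⟩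
    have hmod : (⊥ : Submodule S M).prod (⊤ : Submodule S M) =
        (⊥ : Submodule S M).prod N ⊔ (V ⊓ (⊥ : Submodule S M).prod ⊤) := by
      have hle : ((⊥ : Submodule S M).prod N) ≤ (⊥ : Submodule S M).prod ⊤ :=
        Submodule.prod_mono le_rfl le_top
      rw [← sup_inf_assoc_of_le _ hle, codisjoint_iff.mp hVcompl.codisjoint, top_inf_eq]
    rw [hmod] at hx
    obtain ⟨a, ha, v, hv, hsum⟩ := Submodule.mem_sup.mp hx
    refine Submodule.mem_sup.mpr ⟨a.2, ha.2, v.2,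
      Submodule.mem_map.mpr ⟨v, hv, rfl⟩, ?_⟩
    have := congrArg Prod.snd hsum
    simpa using this


end AuxC2C3

/-- `R` is a right countably Σ-C2 ring iff `R^(ℕ)` is a C3 module. -/
theorem countablySigmaC2_iff_c3 (R : Type*) [Ring R] :
    IsC2Module Rᵐᵒᵖ (ℕ →₀ R) ↔ IsC3Module Rᵐᵒᵖ (ℕ →₀ R) := by
  constructor
  · exact c2_to_c3
  · intro h
    have e : (ℕ →₀ R) ≃ₗ[Rᵐᵒᵖ] (ℕ →₀ R) × (ℕ →₀ R) :=
      (Finsupp.domLCongr Equiv.natSumNatEquivNat.symm).trans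
        (Finsupp.sumFinsuppLEquivProdFinsupp Rᵐᵒᵖ)
    exact c3_prod_to_c2 (isC3_congr e h)
end

section
/- For a ring R, every free right R-module is a C2 module if and only if every projective right R-module is a C2 module. -/
/-- C2 passes down along a split injection. -/
theorem isC2Module_of_split {R : Type*} [Semiring R] {P F : Type*}
    [AddCommGroup P] [Module R P] [AddCommGroup F] [Module R F]
    (i : P →ₗ[R] F) (π : F →ₗ[R] P) (hπi : ∀ x, π (i x) = x)
    (hF : IsC2Module R F) : IsC2Module R P := by
  have hinj : Function.Injective i := by
    intro a b hab
    have := congrArg π hab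
    simpa [hπi] using this
  intro N K ⟨K', hK⟩ ⟨e⟩
  -- images in F
  set Nf := N.map i with hNf
  set Kf := K.map i with hKf
  -- Kf is a summand of F
  have hKfcompl : IsCompl Kf (K'.map i ⊔ LinearMap.ker π) := by
    constructor
    · rw [disjoint_iff]
      ext x
      simp only [Submodule.mem_inf, Submodule.mem_bot]
      constructor
      · rintro ⟨hx1, hx2⟩
        obtain ⟨k, hk, rfl⟩ := hx1
        rw [Submodule.mem_sup] at hx2
        obtain ⟨y, hy, z, hz, hyz⟩ := hx2
        obtain ⟨k', hk', rfl⟩ := hy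
        have : k = k' := by
          have := congrArg π hyz
          simp only [map_add, hπi] at this
          rw [LinearMap.mem_ker] at hz
          rw [hz, add_zero] at this
          exact this.symm
        subst this
        have : k ∈ K ⊓ K' := ⟨hk, hk'⟩
        rw [hK.inf_eq_bot] at this
        simp only [Submodule.mem_bot] at this
        rw [this, map_zero]
      · rintro rfl
        exact ⟨Submodule.zero_mem _, Submodule.zero_mem _⟩
    · rw [codisjoint_iff, eq_top_iff]
      intro y _
      have hπy : π y ∈ K ⊔ K' := by
        rw [hK.sup_eq_top]; trivial
      rw [Submodule.mem_sup] at hπy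
      obtain ⟨k, hk, k', hk', hkk'⟩ := hπy
      have h1 : i (π y) = i k + i k' := by rw [← hkk', map_add]
      have : y = i k + (i k' + (y - i (π y))) := by rw [h1]; abel
      rw [this]
      refine Submodule.add_mem_sup ⟨k, hk, rfl⟩ (Submodule.add_mem _ ?_ ?_)
      · exact Submodule.mem_sup_left ⟨k', hk', rfl⟩
      · refine Submodule.mem_sup_right ?_
        rw [LinearMap.mem_ker]
        simp [map_sub, hπi]
  -- Nf ≃ Kf
  have hiso : Nonempty (Nf ≃ₗ[R] Kf) :=
    ⟨((Submodule.equivMapOfInjective i hinj N).symm.trans e).trans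
      (Submodule.equivMapOfInjective i hinj K)⟩
  obtain ⟨D, hD⟩ := hF Nf Kf ⟨_, hKfcompl⟩ hiso
  refine ⟨D.comap i, ?_, ?_⟩
  · rw [disjoint_iff]
    ext x
    simp only [Submodule.mem_inf, Submodule.mem_bot, Submodule.mem_comap]
    constructor
    · rintro ⟨hx1, hx2⟩
      have : i x ∈ Nf ⊓ D := ⟨⟨x, hx1, rfl⟩, hx2⟩
      rw [hD.inf_eq_bot] at this
      simp only [Submodule.mem_bot] at this
      exact hinj (by simpa using this)
    · rintro rfl
      exact ⟨Submodule.zero_mem _, by simp⟩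
  · rw [codisjoint_iff, eq_top_iff]
    intro a _
    have : i a ∈ Nf ⊔ D := by rw [hD.sup_eq_top]; trivial
    rw [Submodule.mem_sup] at this
    obtain ⟨y, hy, d, hd, hyd⟩ := this
    obtain ⟨n, hn, rfl⟩ := hy
    have hd' : a - n ∈ D.comap i := by
      rw [Submodule.mem_comap, map_sub]
      have : i a - i n = d := by rw [← hyd]; abel
      rw [this]; exact hd
    have : a = n + (a - n) := by abel
    rw [this]
    exact Submodule.add_mem_sup hn hd'

/-- Every free right `R`-module is a C2 module iff every projective right `R`-module is a
C2 module. -/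
theorem free_c2_iff_projective_c2 (R : Type u) [Ring R] :
    (∀ (M : Type u) [AddCommGroup M] [Module Rᵐᵒᵖ M], Module.Free Rᵐᵒᵖ M →
      IsC2Module Rᵐᵒᵖ M) ↔
    (∀ (M : Type u) [AddCommGroup M] [Module Rᵐᵒᵖ M], Module.Projective Rᵐᵒᵖ M →
      IsC2Module Rᵐᵒᵖ M) := by
  constructor
  · intro hfree M _ _ hproj
    obtain ⟨s, hs⟩ := (Module.projective_def).mp hproj
    exact isC2Module_of_split s (Finsupp.linearCombination Rᵐᵒᵖ id) hs
      (hfree (M →₀ Rᵐᵒᵖ) inferInstance)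
  · intro hproj M _ _ hfree
    exact hproj M (Module.Projective.of_free)
end

section
/- If R is a right perfect and right finitely Σ-C2 ring, then every free right R-module is a C2 module. -/
/-- A right `R`-module `M` is flat: standard equational criterion (equivalent to
tensoring with `M` preserving exactness). -/
def IsFlatModule (R : Type*) [Ring R] (M : Type*) [AddCommGroup M] [Module Rᵐᵒᵖ M] :
    Prop :=
  ∀ (n : ℕ) (x : Fin n → M) (a : Fin n → R), (∑ i, MulOpposite.op (a i) • x i) = 0 →
    ∃ (m : ℕ) (y : Fin m → M) (b : Fin m → Fin n → R),
      (∀ i, x i = ∑ j, MulOpposite.op (b j i) • y j) ∧ ∀ j, (∑ i, b j i * a i) = 0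

section Aux

open MulOpposite Submodule

/-- `unop` as a linear equivalence between `Aᵐᵒᵖ` (as a module over itself) and `A`
(as a right `A`-module, i.e. a module over `Aᵐᵒᵖ`). -/
def unopLEquiv (A : Type*) [Ring A] : Aᵐᵒᵖ ≃ₗ[Aᵐᵒᵖ] A where
  toFun := unop
  invFun := op
  left_inv := fun _ => rfl
  right_inv := fun _ => rfl
  map_add' := fun _ _ => rfl
  map_smul' := fun _ _ => rfl

/-- `IsCompl` of submodules is preserved by linear equivalences. -/
theorem isCompl_map_equiv {R X Y : Type*} [Ring R] [AddCommGroup X] [Module R X]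
    [AddCommGroup Y] [Module R Y] (f : X ≃ₗ[R] Y) {p q : Submodule R X}
    (h : IsCompl p q) : IsCompl (p.map (f : X →ₗ[R] Y)) (q.map (f : X →ₗ[R] Y)) := by
  constructor
  · rw [disjoint_iff, ← Submodule.map_inf _ f.injective, disjoint_iff.mp h.disjoint,
      Submodule.map_bot]
  · rw [codisjoint_iff, ← Submodule.map_sup, codisjoint_iff.mp h.codisjoint]
    simp

theorem map_map_symm_eq {R X Y : Type*} [Ring R] [AddCommGroup X] [Module R X]
    [AddCommGroup Y] [Module R Y] (f : X ≃ₗ[R] Y) (N : Submodule R Y) :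
    (N.map (f.symm : Y →ₗ[R] X)).map (f : X →ₗ[R] Y) = N := by
  ext x
  simp only [Submodule.mem_map]
  constructor
  · rintro ⟨y, ⟨z, hz, rfl⟩, rfl⟩
    simpa using hz
  · intro hx
    exact ⟨f.symm x, ⟨x, hx, rfl⟩, by simp⟩

/-- Being a C2 module transfers along linear equivalences. -/
theorem isC2Module_congr {R X Y : Type*} [Ring R] [AddCommGroup X] [Module R X]
    [AddCommGroup Y] [Module R Y] (f : X ≃ₗ[R] Y) (h : IsC2Module R X) :
    IsC2Module R Y := by
  intro N K hK hNK
  obtain ⟨K', hKK'⟩ := hK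
  obtain ⟨g⟩ := hNK
  obtain ⟨N', hN'⟩ := h (N.map (f.symm : Y →ₗ[R] X)) (K.map (f.symm : Y →ₗ[R] X))
    ⟨K'.map (f.symm : Y →ₗ[R] X), isCompl_map_equiv f.symm hKK'⟩
    ⟨((f.symm.submoduleMap N).symm.trans g).trans (f.symm.submoduleMap K)⟩
  refine ⟨N'.map (f : X →ₗ[R] Y), ?_⟩
  have := isCompl_map_equiv f hN'
  rwa [map_map_symm_eq] at this

/-- Flatness (equational criterion) transfers along linear equivalences. -/
theorem isFlatModule_congr {R : Type*} [Ring R] {X Y : Type*} [AddCommGroup X]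
    [Module Rᵐᵒᵖ X] [AddCommGroup Y] [Module Rᵐᵒᵖ Y] (f : X ≃ₗ[Rᵐᵒᵖ] Y)
    (h : IsFlatModule R X) : IsFlatModule R Y := by
  intro n x a hx
  obtain ⟨m, y, b, h1, h2⟩ := h n (fun i => f.symm (x i)) a (by
    have : f.symm (∑ i, MulOpposite.op (a i) • x i) = f.symm 0 := by rw [hx]
    simpa [map_sum] using this)
  refine ⟨m, fun j => f (y j), b, fun i => ?_, h2⟩
  have : f (f.symm (x i)) = f (∑ j, MulOpposite.op (b j i) • y j) := by rw [← h1 i]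
  simpa [map_sum] using this

/-- If `B, C` are complementary inside `P`, then viewed inside `↥P` they are complementary. -/
theorem isCompl_comap_subtype {R M : Type*} [Ring R] [AddCommGroup M] [Module R M]
    {P B C : Submodule R M} (hB : B ≤ P) (hC : C ≤ P) (hd : B ⊓ C = ⊥) (hs : B ⊔ C = P) :
    IsCompl (B.comap P.subtype) (C.comap P.subtype) := by
  constructor
  · rw [disjoint_iff, eq_bot_iff]
    rintro x ⟨hxB, hxC⟩
    have hx : (x : M) ∈ B ⊓ C := ⟨hxB, hxC⟩
    rw [hd, Submodule.mem_bot] at hx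
    exact (Submodule.mem_bot _).mpr (Subtype.ext hx)
  · rw [codisjoint_iff, eq_top_iff]
    rintro ⟨x, hxP⟩ -
    have hx : x ∈ B ⊔ C := by rw [hs]; exact hxP
    obtain ⟨b, hb, c, hc, rfl⟩ := Submodule.mem_sup.mp hx
    refine Submodule.mem_sup.mpr ⟨⟨b, hB hb⟩, hb, ⟨c, hC hc⟩, hc, rfl⟩

/-- Glue: if `IsCompl P P'` and `B, C` are complementary inside `P`,
then `IsCompl B (C ⊔ P')` in the ambient module. -/
theorem isCompl_glue {R M : Type*} [Ring R] [AddCommGroup M] [Module R M]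
    {P P' B C : Submodule R M} (hPP' : IsCompl P P')
    (hB : B ≤ P) (hC : C ≤ P) (hd : B ⊓ C = ⊥) (hs : B ⊔ C = P) :
    IsCompl B (C ⊔ P') := by
  constructor
  · rw [disjoint_iff, eq_bot_iff]
    rintro x ⟨hxB, hxCP'⟩
    obtain ⟨c, hc, p', hp', hsum⟩ := Submodule.mem_sup.mp hxCP'
    have hp'P : p' ∈ P := by
      have : p' = x - c := by rw [← hsum]; abel
      rw [this]
      exact P.sub_mem (hB hxB) (hC hc)
    have hp0 : p' = 0 := by
      have : p' ∈ P ⊓ P' := ⟨hp'P, hp'⟩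
      rwa [disjoint_iff.mp hPP'.disjoint, Submodule.mem_bot] at this
    have hxc : x = c := by rw [← hsum, hp0, add_zero]
    have : x ∈ B ⊓ C := ⟨hxB, by rwa [hxc]⟩
    rwa [hd] at this
  · rw [codisjoint_iff, ← sup_assoc, hs, codisjoint_iff.mp hPP'.codisjoint]

end Aux

section Key

open MulOpposite Submodule Finsupp

variable {R : Type u} [Ring R]

/-- Key consequence of the finitely-Σ-C2 hypothesis: the image under an injective linear
map `ψ` (between free modules, with an embedding of index types) of the submodule of
finsupps supported on a finite set is a direct summand of the codomain. -/
theorem exists_isCompl_map_supported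
    (hc2 : ∀ n : ℕ, IsC2Module Rᵐᵒᵖ (Fin n → R))
    {κ ι : Type*} (emb : κ ↪ ι)
    (ψ : (κ →₀ Rᵐᵒᵖ) →ₗ[Rᵐᵒᵖ] (ι →₀ Rᵐᵒᵖ)) (hinj : Function.Injective ψ) (S : Finset κ) :
    ∃ C, IsCompl (Submodule.map ψ (Finsupp.supported Rᵐᵒᵖ Rᵐᵒᵖ (S : Set κ))) C := by
  classical
  set V : Submodule Rᵐᵒᵖ (ι →₀ Rᵐᵒᵖ) :=
    Submodule.map ψ (Finsupp.supported Rᵐᵒᵖ Rᵐᵒᵖ (S : Set κ)) with hVdef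
  set A : Finset ι := S.map emb with hAdef
  set T : Finset ι := (S.biUnion fun k => (ψ (Finsupp.single k 1)).support) ∪ A with hTdef
  have hAT : (A : Set ι) ⊆ (T : Set ι) := by
    intro x hx
    simp only [hTdef, Finset.coe_union, Set.mem_union]
    exact Or.inr hx
  -- V is supported on T
  have hVT : V ≤ Finsupp.supported Rᵐᵒᵖ Rᵐᵒᵖ (T : Set ι) := by
    rintro v hv
    obtain ⟨u, hu, rfl⟩ := Submodule.mem_map.mp hv
    rw [Finsupp.mem_supported] at hu ⊢
    have hu' : ψ u = ∑ k ∈ u.support, (u k) • ψ (Finsupp.single k 1) := by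
      conv_lhs => rw [← Finsupp.sum_single u]
      rw [Finsupp.sum, map_sum]
      refine Finset.sum_congr rfl fun k _ => ?_
      rw [← map_smul, Finsupp.smul_single, smul_eq_mul, mul_one]
    intro x hx
    rw [Finset.mem_coe, hu'] at hx
    have h2 := Finsupp.support_finset_sum hx
    rw [Finset.mem_biUnion] at h2
    obtain ⟨k, hk, hxk⟩ := h2
    have hxk' : x ∈ (ψ (Finsupp.single k 1)).support :=
      Finsupp.support_smul hxk
    have hkS : k ∈ S := Finset.mem_coe.mp (hu (Finset.mem_coe.mpr hk))
    rw [Finset.mem_coe, hTdef, Finset.mem_union]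
    exact Or.inl (Finset.mem_biUnion.mpr ⟨k, hkS, hxk'⟩)
  set MT : Submodule Rᵐᵒᵖ (ι →₀ Rᵐᵒᵖ) := Finsupp.supported Rᵐᵒᵖ Rᵐᵒᵖ (T : Set ι) with hMT
  set MTc : Submodule Rᵐᵒᵖ (ι →₀ Rᵐᵒᵖ) :=
    Finsupp.supported Rᵐᵒᵖ Rᵐᵒᵖ ((T : Set ι)ᶜ) with hMTc
  have hMTcompl : IsCompl MT MTc := by
    constructor
    · exact Finsupp.disjoint_supported_supported (disjoint_compl_right)
    · rw [codisjoint_iff, hMT, hMTc, ← Finsupp.supported_union,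
        Set.union_compl_self, Finsupp.supported_univ]
  -- the C2 property of ↥MT
  have hMTc2 : IsC2Module Rᵐᵒᵖ ↥MT := by
    have e1 : ↥MT ≃ₗ[Rᵐᵒᵖ] ((T : Set ι) →₀ Rᵐᵒᵖ) := Finsupp.supportedEquivFinsupp _
    have e2 : ((T : Set ι) →₀ Rᵐᵒᵖ) ≃ₗ[Rᵐᵒᵖ] (Fin T.card →₀ Rᵐᵒᵖ) :=
      Finsupp.domLCongr ((Equiv.subtypeEquivRight (fun x => Finset.mem_coe)).trans T.equivFin)
    have e3 : (Fin T.card →₀ Rᵐᵒᵖ) ≃ₗ[Rᵐᵒᵖ] (Fin T.card → Rᵐᵒᵖ) :=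
      Finsupp.linearEquivFunOnFinite Rᵐᵒᵖ Rᵐᵒᵖ (Fin T.card)
    have e4 : (Fin T.card → Rᵐᵒᵖ) ≃ₗ[Rᵐᵒᵖ] (Fin T.card → R) :=
      LinearEquiv.piCongrRight (fun _ => unopLEquiv R)
    exact isC2Module_congr (((e1.trans e2).trans e3).trans e4).symm (hc2 T.card)
  -- the reference summand W inside MT
  set W : Submodule Rᵐᵒᵖ (ι →₀ Rᵐᵒᵖ) := Finsupp.supported Rᵐᵒᵖ Rᵐᵒᵖ (A : Set ι) with hW
  set W2 : Submodule Rᵐᵒᵖ (ι →₀ Rᵐᵒᵖ) :=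
    Finsupp.supported Rᵐᵒᵖ Rᵐᵒᵖ ((T : Set ι) \ (A : Set ι)) with hW2
  have hWMT : W ≤ MT := Finsupp.supported_mono hAT
  have hW2MT : W2 ≤ MT := Finsupp.supported_mono Set.diff_subset
  have hWd : W ⊓ W2 = ⊥ :=
    _root_.disjoint_iff.mp (Finsupp.disjoint_supported_supported
      (Set.disjoint_sdiff_right (s := (A : Set ι))))
  have hWs : W ⊔ W2 = MT := by
    rw [hW, hW2, hMT, ← Finsupp.supported_union, Set.union_diff_cancel hAT]
  -- V ≃ W
  have hVW : Nonempty ((V.comap MT.subtype) ≃ₗ[Rᵐᵒᵖ] (W.comap MT.subtype)) := by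
    have eV : (V.comap MT.subtype) ≃ₗ[Rᵐᵒᵖ] V := Submodule.comapSubtypeEquivOfLe hVT
    have eW : (W.comap MT.subtype) ≃ₗ[Rᵐᵒᵖ] W := Submodule.comapSubtypeEquivOfLe hWMT
    have eV2 : ↥(Finsupp.supported Rᵐᵒᵖ Rᵐᵒᵖ (S : Set κ)) ≃ₗ[Rᵐᵒᵖ] V :=
      Submodule.equivMapOfInjective ψ hinj _
    have eS : ↥(Finsupp.supported Rᵐᵒᵖ Rᵐᵒᵖ (S : Set κ)) ≃ₗ[Rᵐᵒᵖ] ((S : Set κ) →₀ Rᵐᵒᵖ) :=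
      Finsupp.supportedEquivFinsupp _
    have eA : ↥W ≃ₗ[Rᵐᵒᵖ] ((A : Set ι) →₀ Rᵐᵒᵖ) := Finsupp.supportedEquivFinsupp _
    have hcard : S.card = A.card := by
      rw [hAdef, Finset.card_map]
    have eqv : ((S : Set κ)) ≃ ((A : Set ι)) :=
      ((Equiv.subtypeEquivRight (fun x => Finset.mem_coe)).trans S.equivFin).trans
        ((finCongr hcard).trans
          (A.equivFin.symm.trans (Equiv.subtypeEquivRight (fun x => Finset.mem_coe.symm))))
    have eSA : ((S : Set κ) →₀ Rᵐᵒᵖ) ≃ₗ[Rᵐᵒᵖ] ((A : Set ι) →₀ Rᵐᵒᵖ) :=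
      Finsupp.domLCongr eqv
    exact ⟨((eV.trans eV2.symm).trans eS).trans (eSA.trans (eA.symm.trans eW.symm))⟩
  -- apply C2 inside MT
  obtain ⟨C', hC'⟩ := hMTc2 (V.comap MT.subtype) (W.comap MT.subtype)
    ⟨W2.comap MT.subtype, isCompl_comap_subtype hWMT hW2MT hWd hWs⟩ hVW
  -- back to the ambient module
  have hVMT' : (V.comap MT.subtype).map MT.subtype = V := by
    rw [Submodule.map_comap_subtype, inf_eq_right.mpr hVT]
  have hCle : (C'.map MT.subtype) ≤ MT := by
    rintro _ ⟨c, _, rfl⟩; exact c.2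
  have hd : V ⊓ (C'.map MT.subtype) = ⊥ := by
    rw [← hVMT', ← Submodule.map_inf _ (Submodule.injective_subtype MT),
      disjoint_iff.mp hC'.disjoint, Submodule.map_bot]
  have hs : V ⊔ (C'.map MT.subtype) = MT := by
    rw [← hVMT', ← Submodule.map_sup, codisjoint_iff.mp hC'.codisjoint]
    ext x
    constructor
    · intro hmem
      obtain ⟨c, -, rfl⟩ := Submodule.mem_map.mp hmem
      exact c.2
    · intro hx
      exact Submodule.mem_map.mpr ⟨⟨x, hx⟩, Submodule.mem_top, rfl⟩
  exact ⟨(C'.map MT.subtype) ⊔ MTc,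
    isCompl_glue hMTcompl hVT hCle hd hs⟩

end Key

section Flat

open MulOpposite Submodule Finsupp

variable {R : Type u} [Ring R]

/-- The quotient of a free module by the image of an injective map from another free module
is flat, provided every finitely generated free submodule is a direct summand (which follows
from the finitely-Σ-C2 hypothesis). -/
theorem flat_quotient_range (hc2 : ∀ n : ℕ, IsC2Module Rᵐᵒᵖ (Fin n → R))
    {κ ι : Type*} (emb : κ ↪ ι)
    (ψ : (κ →₀ Rᵐᵒᵖ) →ₗ[Rᵐᵒᵖ] (ι →₀ Rᵐᵒᵖ)) (hinj : Function.Injective ψ) :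
    IsFlatModule R ((ι →₀ Rᵐᵒᵖ) ⧸ LinearMap.range ψ) := by
  classical
  intro n x a hrel
  have hsurj := (LinearMap.range ψ).mkQ_surjective
  choose m hm using fun i => hsurj (x i)
  set w : ι →₀ Rᵐᵒᵖ := ∑ i, MulOpposite.op (a i) • m i with hw
  have hwmem : w ∈ LinearMap.range ψ := by
    have h0 : (LinearMap.range ψ).mkQ w = 0 := by
      rw [hw, map_sum]
      simp only [map_smul, hm]
      exact hrel
    rw [← Submodule.ker_mkQ (LinearMap.range ψ)]
    exact LinearMap.mem_ker.mpr h0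
  obtain ⟨z, hz⟩ := LinearMap.mem_range.mp hwmem
  obtain ⟨C, hVC⟩ := exists_isCompl_map_supported hc2 emb ψ hinj z.support
  set V := Submodule.map ψ (Finsupp.supported Rᵐᵒᵖ Rᵐᵒᵖ (z.support : Set κ)) with hV
  have hwV : w ∈ V :=
    Submodule.mem_map.mpr ⟨z, Finsupp.mem_supported _ z |>.mpr subset_rfl, hz⟩
  have hVNp : V ≤ LinearMap.range ψ := by
    rintro v hv
    obtain ⟨u, -, rfl⟩ := Submodule.mem_map.mp hv
    exact LinearMap.mem_range.mpr ⟨u, rfl⟩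
  set π : (ι →₀ Rᵐᵒᵖ) →ₗ[Rᵐᵒᵖ] (ι →₀ Rᵐᵒᵖ) :=
    C.subtype ∘ₗ (Submodule.projectionOnto C V hVC.symm) with hπ
  have hπ0 : ∀ v ∈ V, π v = 0 := fun v hv => by
    rw [hπ]
    simp only [LinearMap.comp_apply]
    rw [Submodule.projectionOnto_apply_of_mem_right hVC.symm hv]
    simp
  have hπsub : ∀ u : ι →₀ Rᵐᵒᵖ, u - π u ∈ V := fun u => by
    have h := Submodule.projection_add_projection_eq_self hVC u
    have h2 : (Submodule.projectionOnto V C hVC u : ι →₀ Rᵐᵒᵖ) = u - π u := by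
      rw [hπ]
      simp only [LinearMap.comp_apply, Submodule.coe_subtype]
      rw [eq_sub_iff_add_eq]
      exact h
    rw [← h2]
    exact Submodule.coe_mem _
  set y : Fin n → (ι →₀ Rᵐᵒᵖ) := fun i => π (m i) with hy
  have hrel0 : (∑ i, MulOpposite.op (a i) • y i) = 0 := by
    have h1 : (∑ i, MulOpposite.op (a i) • y i) = π w := by
      rw [hw, map_sum]
      simp only [map_smul, hy]
    rw [h1]
    exact hπ0 w hwV
  have hmkQ : ∀ i, (LinearMap.range ψ).mkQ (y i) = x i := fun i => by
    have h1 : (LinearMap.range ψ).mkQ (m i) = (LinearMap.range ψ).mkQ (y i) := by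
      rw [Submodule.mkQ_apply, Submodule.mkQ_apply, Submodule.Quotient.eq]
      exact hVNp (hπsub (m i))
    rw [← h1, hm i]
  set T : Finset ι := Finset.univ.biUnion (fun i => (y i).support) with hT
  set en : Fin T.card ≃ ↥T := T.equivFin.symm with hen
  refine ⟨T.card, fun j => (LinearMap.range ψ).mkQ (Finsupp.single ((en j : ι)) 1),
    fun j i => unop (y i (en j)), fun i => ?_, fun j => ?_⟩
  · have hterm : ∀ j : Fin T.card,
        MulOpposite.op (unop (y i (en j))) •
            (LinearMap.range ψ).mkQ (Finsupp.single ((en j : ι)) (1 : Rᵐᵒᵖ))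
          = (LinearMap.range ψ).mkQ (Finsupp.single ((en j : ι)) (y i (en j))) := fun j => by
      rw [MulOpposite.op_unop, ← map_smul, Finsupp.smul_single, smul_eq_mul, mul_one]
    rw [Finset.sum_congr rfl (fun j _ => hterm j), ← map_sum]
    have hsum : (∑ j : Fin T.card, Finsupp.single ((en j : ι)) (y i (en j))) = y i := by
      rw [Fintype.sum_equiv en (fun j => Finsupp.single ((en j : ι)) (y i (en j)))
        (fun k => Finsupp.single (k : ι) (y i (k : ι))) (fun j => rfl)]
      rw [Finset.sum_coe_sort T (fun k => Finsupp.single k (y i k))]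
      have hsupp : (y i).support ⊆ T :=
        Finset.subset_biUnion_of_mem (fun i => (y i).support) (Finset.mem_univ i)
      rw [← Finsupp.sum_of_support_subset (y i) hsupp
        (fun k c => Finsupp.single k c) (fun k _ => Finsupp.single_zero k)]
      exact Finsupp.sum_single (y i)
    rw [hsum, hmkQ i]
  · have h0 : (∑ i, MulOpposite.op (a i) * (y i (en j))) = 0 := by
      have hc := congrArg (fun f : ι →₀ Rᵐᵒᵖ => f (en j)) hrel0
      simpa [Finsupp.finset_sum_apply, Finsupp.smul_apply, smul_eq_mul] using hc
    calc (∑ i, unop (y i (en j)) * a i)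
        = unop (∑ i, MulOpposite.op (a i) * y i (en j)) := by
          rw [Finset.unop_sum]
          exact Finset.sum_congr rfl fun i _ => by rw [MulOpposite.unop_mul, MulOpposite.unop_op]
      _ = 0 := by rw [h0, MulOpposite.unop_zero]

end Flat

open MulOpposite Submodule in
/-- If `R` is right perfect (every flat right `R`-module is projective and `R` has the
DCC on principal left ideals) and right finitely Σ-C2, then every free right `R`-module
is a C2 module. -/
theorem free_c2_of_perfect_finitelySigmaC2 (R : Type u) [Ring R]
    (hflat : ∀ (M : Type u) [AddCommGroup M] [Module Rᵐᵒᵖ M], IsFlatModule R M →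
      Module.Projective Rᵐᵒᵖ M)
    (hdcc : ∀ a : ℕ → R, (∀ n, Ideal.span {a (n + 1)} ≤ Ideal.span {a n}) →
      ∃ N, ∀ n, N ≤ n → Ideal.span {a n} = Ideal.span {a N})
    (hc2 : ∀ n : ℕ, IsC2Module Rᵐᵒᵖ (Fin n → R)) :
    ∀ (M : Type u) [AddCommGroup M] [Module Rᵐᵒᵖ M], Module.Free Rᵐᵒᵖ M →
      IsC2Module Rᵐᵒᵖ M := by
  intro M _ _ hfree
  intro N K hK hNK
  obtain ⟨K', hKK'⟩ := hK
  obtain ⟨e⟩ := hNK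
  classical
  -- Step 1: an injective linear map `ψ₀` from the free module `M` onto `N.prod K' ≤ M × M`.
  set pK := Submodule.projectionOnto K K' hKK' with hpK
  set pK' := Submodule.projectionOnto K' K hKK'.symm with hpK'
  set ψ₀ : M →ₗ[Rᵐᵒᵖ] M × M :=
    LinearMap.prod (N.subtype ∘ₗ (e.symm.toLinearMap ∘ₗ pK)) (K'.subtype ∘ₗ pK') with hψ₀
  have hψ₀apply : ∀ u : M, ψ₀ u = (↑(e.symm (pK u)), ↑(pK' u)) := fun u => rfl
  have hψ₀inj : Function.Injective ψ₀ := by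
    intro u v huv
    rw [hψ₀apply, hψ₀apply] at huv
    have h1 : pK u = pK v := by
      have h := congrArg Prod.fst huv
      exact e.symm.injective (Subtype.coe_injective h)
    have h2 : pK' u = pK' v := by
      have h := congrArg Prod.snd huv
      exact Subtype.coe_injective h
    have hu := Submodule.projection_add_projection_eq_self hKK' u
    have hv := Submodule.projection_add_projection_eq_self hKK' v
    calc u = ↑(pK u) + ↑(pK' u) := hu.symm
      _ = ↑(pK v) + ↑(pK' v) := by rw [h1, h2]
      _ = v := hv
  have hψ₀range : LinearMap.range ψ₀ = N.prod K' := by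
    apply le_antisymm
    · rintro v ⟨u, rfl⟩
      rw [hψ₀apply]
      exact Submodule.mem_prod.mpr ⟨(e.symm (pK u)).2, (pK' u).2⟩
    · rintro ⟨n₁, k₁⟩ hmem
      obtain ⟨hn, hk⟩ := Submodule.mem_prod.mp hmem
      refine ⟨(↑(e ⟨n₁, hn⟩) : M) + k₁, ?_⟩
      have hprojK : pK ((↑(e ⟨n₁, hn⟩) : M) + k₁) = e ⟨n₁, hn⟩ := by
        rw [hpK, map_add, Submodule.projectionOnto_apply_left hKK' (e ⟨n₁, hn⟩),
          Submodule.projectionOnto_apply_of_mem_right hKK' hk, add_zero]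
      have hprojK' : pK' ((↑(e ⟨n₁, hn⟩) : M) + k₁) = ⟨k₁, hk⟩ := by
        rw [hpK', map_add,
          Submodule.projectionOnto_apply_of_mem_right hKK'.symm (e ⟨n₁, hn⟩).2, zero_add]
        exact Submodule.projectionOnto_apply_left hKK'.symm ⟨k₁, hk⟩
      rw [hψ₀apply, hprojK, hprojK', LinearEquiv.symm_apply_apply]
  -- Step 2: coordinates.
  set b : Module.Basis (Module.Free.ChooseBasisIndex Rᵐᵒᵖ M) Rᵐᵒᵖ M :=
    Module.Free.chooseBasis Rᵐᵒᵖ M with hb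
  set ι := Module.Free.ChooseBasisIndex Rᵐᵒᵖ M
  set bP : Module.Basis (ι ⊕ ι) Rᵐᵒᵖ (M × M) := b.prod b with hbP
  set ψ : (ι →₀ Rᵐᵒᵖ) →ₗ[Rᵐᵒᵖ] ((ι ⊕ ι) →₀ Rᵐᵒᵖ) :=
    (bP.repr.toLinearMap ∘ₗ ψ₀) ∘ₗ (b.repr.symm.toLinearMap) with hψdef
  have hψapply : ∀ u, ψ u = bP.repr (ψ₀ (b.repr.symm u)) := fun u => rfl
  have hψinj : Function.Injective ψ := by
    intro u v huv
    rw [hψapply, hψapply] at huv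
    exact b.repr.symm.injective (hψ₀inj (bP.repr.injective huv))
  have hflatQ := flat_quotient_range hc2 ⟨Sum.inl, Sum.inl_injective⟩ ψ hψinj
  have hmap : (LinearMap.range ψ).map ((bP.repr.symm :
      ((ι ⊕ ι) →₀ Rᵐᵒᵖ) ≃ₗ[Rᵐᵒᵖ] (M × M)) : ((ι ⊕ ι) →₀ Rᵐᵒᵖ) →ₗ[Rᵐᵒᵖ] (M × M)) = N.prod K' := by
    rw [← hψ₀range]
    ext v
    constructor
    · intro hv
      obtain ⟨u₂, ⟨u, rfl⟩, rfl⟩ := Submodule.mem_map.mp hv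
      rw [hψapply]
      exact ⟨b.repr.symm u, by simp⟩
    · rintro ⟨u, rfl⟩
      refine Submodule.mem_map.mpr ⟨ψ (b.repr u), ⟨b.repr u, rfl⟩, ?_⟩
      rw [hψapply]
      simp
  have hflatQ' := isFlatModule_congr
    (Submodule.Quotient.equiv (LinearMap.range ψ) (N.prod K') bP.repr.symm hmap) hflatQ
  have hproj : Module.Projective Rᵐᵒᵖ ((M × M) ⧸ (N.prod K')) := hflat _ hflatQ'
  -- Step 3: split off `M ⧸ N`.
  set q : (M × M) →ₗ[Rᵐᵒᵖ] (M ⧸ N) × (M ⧸ K') := (N.mkQ).prodMap (K'.mkQ) with hqdef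
  have hqsurj : Function.Surjective q :=
    Function.Surjective.prodMap N.mkQ_surjective K'.mkQ_surjective
  have hkerq : LinearMap.ker q = N.prod K' := by
    rw [hqdef, LinearMap.ker_prodMap, Submodule.ker_mkQ, Submodule.ker_mkQ]
  haveI hproj2 : Module.Projective Rᵐᵒᵖ ((M ⧸ N) × (M ⧸ K')) := by
    refine Module.Projective.of_equiv (R := Rᵐᵒᵖ)
      (M := (M × M) ⧸ (N.prod K')) (((Submodule.quotEquivOfEq _ _ hkerq.symm).trans
      (LinearMap.quotKerEquivOfSurjective q hqsurj) :
        ((M × M) ⧸ (N.prod K')) ≃ₗ[Rᵐᵒᵖ] ((M ⧸ N) × (M ⧸ K'))))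
  haveI hprojN : Module.Projective Rᵐᵒᵖ (M ⧸ N) :=
    Module.Projective.of_split (LinearMap.inl Rᵐᵒᵖ (M ⧸ N) (M ⧸ K'))
      (LinearMap.fst Rᵐᵒᵖ (M ⧸ N) (M ⧸ K')) (by ext x; simp)
  obtain ⟨s, hs⟩ := Module.projective_lifting_property N.mkQ LinearMap.id N.mkQ_surjective
  have hsid : ∀ v, N.mkQ (s v) = v := fun v => by
    have := LinearMap.ext_iff.mp hs v
    simpa using this
  refine ⟨LinearMap.range s, ?_⟩
  constructor
  · rw [disjoint_iff, eq_bot_iff]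
    rintro v hv
    obtain ⟨hvN, hvr⟩ := Submodule.mem_inf.mp hv
    obtain ⟨u, rfl⟩ := LinearMap.mem_range.mp hvr
    have hu : u = 0 := by
      rw [← hsid u, Submodule.mkQ_apply, Submodule.Quotient.mk_eq_zero]
      exact hvN
    rw [hu, map_zero]
    exact Submodule.zero_mem ⊥
  · rw [codisjoint_iff, eq_top_iff]
    rintro v -
    have hvmem : v - s (N.mkQ v) ∈ N := by
      have h0 : N.mkQ (v - s (N.mkQ v)) = 0 := by
        rw [map_sub, hsid (N.mkQ v), sub_self]
      rw [Submodule.mkQ_apply] at h0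
      exact (Submodule.Quotient.mk_eq_zero N).mp h0
    refine Submodule.mem_sup.mpr ⟨v - s (N.mkQ v), hvmem, s (N.mkQ v),
      LinearMap.mem_range.mpr ⟨N.mkQ v, rfl⟩, ?_⟩
    abel
end

section
/- If R is a ring with right finitistic projective dimension rFPD(R) = 0, then every free right R-module is a C2 module. -/
/-- `ProjDimLE R n M` means the right `R`-module `M` has projective dimension at most
`n`: `M` is projective for `n = 0`, and otherwise `M` is a quotient of a projective
module by a kernel of projective dimension at most `n - 1`. -/
def ProjDimLE (R : Type u) [Ring R] :
    ℕ → ∀ (M : Type u) [AddCommGroup M] [Module Rᵐᵒᵖ M], Prop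
  | 0, M, _, _ => Module.Projective Rᵐᵒᵖ M
  | n + 1, M, _, _ => ∃ (P : Type u) (_ : AddCommGroup P) (_ : Module Rᵐᵒᵖ P)
      (f : P →ₗ[Rᵐᵒᵖ] M), Module.Projective Rᵐᵒᵖ P ∧ Function.Surjective f ∧
        ProjDimLE R n (LinearMap.ker f)

/-- If `rFPD(R) = 0`, i.e. every right `R`-module of finite projective dimension is
projective (has projective dimension `0`), then every free right `R`-module is a C2
module. -/
theorem free_c2_of_rFPD_zero (R : Type u) [Ring R]
    (hFPD : ∀ (M : Type u) [AddCommGroup M] [Module Rᵐᵒᵖ M],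
      (∃ n : ℕ, ProjDimLE R n M) → Module.Projective Rᵐᵒᵖ M) :
    ∀ (M : Type u) [AddCommGroup M] [Module Rᵐᵒᵖ M], Module.Free Rᵐᵒᵖ M →
      IsC2Module Rᵐᵒᵖ M := by
  intro M _ _ hfree N K ⟨K', hKK'⟩ ⟨e⟩
  haveI : Module.Projective Rᵐᵒᵖ M := Module.Projective.of_free
  -- K is projective as a direct summand of M
  haveI hKproj : Module.Projective Rᵐᵒᵖ K :=
    Module.Projective.of_split K.subtype (K.projectionOnto K' hKK')
      (by ext x; simp [Submodule.projectionOnto_apply_left])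
  -- N is projective via the isomorphism e
  haveI hNproj : Module.Projective Rᵐᵒᵖ N := Module.Projective.of_equiv e.symm
  -- M ⧸ N has projective dimension ≤ 1, hence projective by hFPD
  have hquot : Module.Projective Rᵐᵒᵖ (M ⧸ N) := by
    apply hFPD
    refine ⟨1, M, inferInstance, inferInstance, N.mkQ, inferInstance,
      N.mkQ_surjective, ?_⟩
    show Module.Projective Rᵐᵒᵖ (LinearMap.ker N.mkQ)
    rw [Submodule.ker_mkQ]
    exact hNproj
  -- split the quotient map
  obtain ⟨s, hs⟩ := Module.projective_lifting_property N.mkQ LinearMap.id N.mkQ_surjective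
  refine ⟨LinearMap.range s, ?_, ?_⟩
  · rw [disjoint_iff]
    ext x
    simp only [Submodule.mem_inf, Submodule.mem_bot, LinearMap.mem_range]
    constructor
    · rintro ⟨hxN, y, rfl⟩
      have h1 : N.mkQ (s y) = y := congrArg (· y) hs
      have h2 : N.mkQ (s y) = 0 := (Submodule.Quotient.mk_eq_zero N).2 hxN
      rw [h1.symm.trans h2, map_zero]
    · rintro rfl
      exact ⟨N.zero_mem, 0, map_zero s⟩
  · rw [codisjoint_iff, eq_top_iff]
    intro x _
    have h1 : x - s (N.mkQ x) ∈ N := by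
      have h2 : N.mkQ (s (N.mkQ x)) = N.mkQ x := congrArg (· (N.mkQ x)) hs
      have h3 : N.mkQ (x - s (N.mkQ x)) = 0 := by rw [map_sub, h2, sub_self]
      exact (Submodule.Quotient.mk_eq_zero N).1 h3
    have h4 : x = (x - s (N.mkQ x)) + s (N.mkQ x) := by abel
    rw [h4]
    exact Submodule.add_mem_sup h1 ⟨N.mkQ x, rfl⟩
end
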